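/- arXiv:1912.10147 — 13 statements merged into one kernel-verified Lean document; each statement's English description precedes it below -/
import Mathlib

section
/- Let F be a finite field with q elements, let r ≥ 1 and v ≥ r + 1, and let C be a finite set of points of PG(v−1, q). Suppose there exists an integer u such that |C ∩ H| ≡ u (mod q^r) for every hyperplane H of F^v. Then |C ∩ H| ≡ |C| (mod q^r) for every hyperplane H of F^v. -/
open scoped Classical

section PGDefs

variable {F : Type} [Field F] {M : Type} [AddCommGroup M] [Module F M]

/-- The number of points of `C` contained in the subspace `S`, i.e. `|C ∩ S|`. -/
noncomputable def interCard (C : Finset (Submodule F M)) (S : Submodule F M) : ℕ :=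
  (C.filter (fun P => P ≤ S)).card

/-- `H` is a hyperplane, i.e. a subspace of codimension 1. -/
def IsHyperplane (H : Submodule F M) : Prop :=
  Module.finrank F ↥H = Module.finrank F M - 1

/-- Every element of `C` is a point, i.e. a 1-dimensional subspace. -/
def IsPointSet (C : Finset (Submodule F M)) : Prop :=
  ∀ P ∈ C, Module.finrank F ↥P = 1

/-- `C` is `Δ`-divisible: `|C ∩ H| ≡ |C| (mod Δ)` for every hyperplane `H`. -/
def DivisibleSet (Δ : ℕ) (C : Finset (Submodule F M)) : Prop :=
  ∀ H : Submodule F M, IsHyperplane H → interCard C H ≡ C.card [MOD Δ]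

noncomputable instance fintypeSubmodule [Finite M] : Fintype (Submodule F M) :=
  have : Finite (Submodule F M) :=
    Finite.of_injective (fun S => (S : Set M)) SetLike.coe_injective
  Fintype.ofFinite _

end PGDefs

section Aux

open Module Submodule LinearMap Finset

variable {F : Type} [Field F] {V : Type} [AddCommGroup V] [Module F V]
  [FiniteDimensional F V]

noncomputable instance fintypeLinearMapAux [Finite V] [Finite F] : Fintype (V →ₗ[F] F) :=
  have : Finite (V →ₗ[F] F) :=
    Finite.of_injective (fun f : V →ₗ[F] F => (f : V → F)) DFunLike.coe_injective
  Fintype.ofFinite _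

lemma aux_range_eq_top {f : V →ₗ[F] F} (hf : f ≠ 0) : LinearMap.range f = ⊤ := by
  obtain ⟨x, hx⟩ : ∃ x, f x ≠ 0 := by
    by_contra h
    push_neg at h
    exact hf (LinearMap.ext fun y => by simp [h y])
  rw [eq_top_iff]
  intro c _
  exact ⟨(c / f x) • x, by simp [div_mul_cancel₀, hx]⟩

lemma aux_finrank_ker {f : V →ₗ[F] F} (hf : f ≠ 0) :
    finrank F ↥(LinearMap.ker f) = finrank F V - 1 := by
  have h := LinearMap.finrank_range_add_finrank_ker f
  rw [aux_range_eq_top hf] at h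
  rw [finrank_top, finrank_self] at h
  omega

lemma aux_exists_ker (H : Submodule F V) (hH : finrank F ↥H = finrank F V - 1)
    (hv : 1 ≤ finrank F V) :
    ∃ f : V →ₗ[F] F, f ≠ 0 ∧ LinearMap.ker f = H := by
  have hq : finrank F (V ⧸ H) = 1 := by
    have := Submodule.finrank_quotient_add_finrank H
    omega
  obtain ⟨e⟩ : Nonempty ((V ⧸ H) ≃ₗ[F] F) :=
    FiniteDimensional.nonempty_linearEquiv_of_finrank_eq (by rw [hq, finrank_self])
  refine ⟨e.toLinearMap ∘ₗ H.mkQ, ?_, ?_⟩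
  · intro h0
    have : LinearMap.ker (e.toLinearMap ∘ₗ H.mkQ) = ⊤ := by rw [h0]; exact ker_zero
    rw [LinearMap.ker_comp, LinearEquiv.ker, Submodule.comap_bot, Submodule.ker_mkQ] at this
    have : finrank F ↥H = finrank F V := by rw [this, finrank_top]
    omega
  · rw [LinearMap.ker_comp, LinearEquiv.ker, Submodule.comap_bot, Submodule.ker_mkQ]

/-- Two nonzero functionals with the same kernel are proportional. -/
lemma aux_proportional {f₀ g : V →ₗ[F] F} (hf₀ : f₀ ≠ 0)
    (hker : LinearMap.ker g = LinearMap.ker f₀) {x : V} (hx : f₀ x ≠ 0) :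
    g = (g x / f₀ x) • f₀ := by
  set d := g - (g x / f₀ x) • f₀ with hd
  have hdtop : LinearMap.ker d = ⊤ := by
    by_contra hne
    have hd0 : d ≠ 0 := fun h' => hne (by rw [h']; exact ker_zero)
    have hHle : LinearMap.ker f₀ ≤ LinearMap.ker d := by
      intro y hy
      have h2 : f₀ y = 0 := by simpa using hy
      have h1 : g y = 0 := by rw [← hker] at hy; simpa using hy
      simp [hd, h1, h2]
    have hxd : x ∈ LinearMap.ker d := by
      simp [hd, div_mul_cancel₀, hx]
    have hxf : x ∉ LinearMap.ker f₀ := by simpa [LinearMap.mem_ker] using hx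
    have hlt : LinearMap.ker f₀ < LinearMap.ker d :=
      lt_of_le_of_ne hHle (fun h' => hxf (h' ▸ hxd))
    have h3 := Submodule.finrank_lt_finrank_of_lt hlt
    have h4 := aux_finrank_ker hd0
    have h5 := aux_finrank_ker hf₀
    omega
  have hd0 : d = 0 := LinearMap.ker_eq_top.mp hdtop
  exact sub_eq_zero.mp (hd ▸ hd0)

variable [Fintype F] [Fintype V]

/-- The fiber of the kernel map over a hyperplane has `q - 1` elements. -/
lemma aux_fiber_card (H : Submodule F V) (hH : finrank F ↥H = finrank F V - 1)
    (hv : 1 ≤ finrank F V) :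
    (univ.filter fun f : V →ₗ[F] F => f ≠ 0 ∧ LinearMap.ker f = H).card
      = Fintype.card F - 1 := by
  obtain ⟨f₀, hf₀, hker₀⟩ := aux_exists_ker H hH hv
  obtain ⟨x, hx⟩ : ∃ x, f₀ x ≠ 0 := by
    by_contra h
    push_neg at h
    exact hf₀ (LinearMap.ext fun y => by simp [h y])
  have hcard : (univ.filter fun c : F => c ≠ 0).card = Fintype.card F - 1 := by
    rw [Finset.filter_ne']
    simp [Finset.card_erase_of_mem]
  rw [← hcard]
  symm
  apply Finset.card_bij' (fun c _ => c • f₀) (fun g _ => g x / f₀ x)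
  · intro c hc
    simp only [Finset.mem_filter, Finset.mem_univ, true_and] at hc ⊢
    refine ⟨?_, ?_⟩
    · intro h0
      have : (c • f₀) x = 0 := by rw [h0]; simp
      simp only [LinearMap.smul_apply, smul_eq_mul] at this
      rcases mul_eq_zero.mp this with h | h
      · exact hc h
      · exact hx h
    · rw [LinearMap.ker_smul _ _ hc, hker₀]
  · intro g hg
    simp only [Finset.mem_filter, Finset.mem_univ, true_and] at hg ⊢
    obtain ⟨hg0, hgker⟩ := hg
    have hgx : g x ≠ 0 := by
      intro h
      have hxk : x ∈ LinearMap.ker g := by simpa [LinearMap.mem_ker] using h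
      rw [hgker, ← hker₀] at hxk
      exact hx (by simpa using hxk)
    exact div_ne_zero hgx hx
  · intro c hc
    simp only [LinearMap.smul_apply, smul_eq_mul]
    field_simp
  · intro g hg
    simp only [Finset.mem_filter, Finset.mem_univ, true_and] at hg
    exact (aux_proportional hf₀ (hg.2.trans hker₀.symm) hx).symm

/-- The number of nonzero functionals is `q ^ dim - 1`. -/
lemma aux_card_nonzero :
    (univ.filter fun f : V →ₗ[F] F => f ≠ 0).card
      = Fintype.card F ^ finrank F V - 1 := by
  have h1 : Fintype.card (V →ₗ[F] F) = Fintype.card F ^ finrank F V := by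
    have h2 : Fintype.card (V →ₗ[F] F) = Fintype.card F ^ finrank F (Module.Dual F V) :=
      card_eq_pow_finrank (K := F) (V := Module.Dual F V)
    rw [h2, Subspace.dual_finrank_eq]
  rw [Finset.filter_ne', Finset.card_erase_of_mem (Finset.mem_univ _),
    Finset.card_univ, h1]

/-- The number of nonzero functionals vanishing on a fixed 1-dimensional subspace. -/
lemma aux_card_point (P : Submodule F V) (hP : finrank F ↥P = 1) :
    (univ.filter fun f : V →ₗ[F] F => f ≠ 0 ∧ P ≤ LinearMap.ker f).card
      = Fintype.card F ^ (finrank F V - 1) - 1 := by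
  have hmem : ∀ f : V →ₗ[F] F, (P ≤ LinearMap.ker f ↔ f ∈ P.dualAnnihilator) := by
    intro f
    rw [Submodule.mem_dualAnnihilator]
    constructor
    · intro h w hw
      exact (LinearMap.mem_ker).mp (h hw)
    · intro h w hw
      exact (LinearMap.mem_ker).mpr (h w hw)
  have hA : finrank F ↥P.dualAnnihilator = finrank F V - 1 := by
    have e : finrank F (V ⧸ P) = finrank F ↥P.dualAnnihilator :=
      LinearEquiv.finrank_eq (Subspace.quotEquivAnnihilator P)
    have hq : finrank F (V ⧸ P) = finrank F V - 1 := by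
      have := Submodule.finrank_quotient_add_finrank P
      omega
    rw [← e, hq]
  have hcardA : Fintype.card ↥P.dualAnnihilator
      = Fintype.card F ^ (finrank F V - 1) := by
    rw [card_eq_pow_finrank (K := F) (V := ↥P.dualAnnihilator), hA]
  have hfilter : (univ.filter fun f : V →ₗ[F] F => f ≠ 0 ∧ P ≤ LinearMap.ker f)
      = (univ.filter fun f : V →ₗ[F] F => f ∈ P.dualAnnihilator).erase 0 := by
    ext f
    simp only [Finset.mem_filter, Finset.mem_univ, true_and, Finset.mem_erase, hmem f]
    try tauto
  rw [hfilter, Finset.card_erase_of_mem (by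
    simp only [Finset.mem_filter, Finset.mem_univ, true_and]
    exact P.dualAnnihilator.zero_mem)]
  rw [← hcardA, Fintype.card_subtype]


/-- Fiberwise counting: summing `g ∘ ker` over nonzero functionals equals `(q-1)` times
the sum of `g` over hyperplanes. -/
lemma aux_sum_fiberwise (hv : 1 ≤ finrank F V) (g : Submodule F V → ℕ) :
    ∑ f ∈ univ.filter (fun f : V →ₗ[F] F => f ≠ 0), g (LinearMap.ker f)
      = (Fintype.card F - 1) *
        ∑ H ∈ univ.filter (fun H : Submodule F V => finrank F ↥H = finrank F V - 1), g H := by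
  have maps : ∀ f ∈ univ.filter (fun f : V →ₗ[F] F => f ≠ 0),
      LinearMap.ker f ∈ univ.filter (fun H : Submodule F V => finrank F ↥H = finrank F V - 1) := by
    intro f hf
    simp only [Finset.mem_filter, Finset.mem_univ, true_and] at hf ⊢
    exact aux_finrank_ker hf
  rw [← Finset.sum_fiberwise_of_maps_to' maps g, Finset.mul_sum]
  apply Finset.sum_congr rfl
  intro H hH
  simp only [Finset.mem_filter, Finset.mem_univ, true_and] at hH
  rw [Finset.sum_const, Finset.filter_filter, aux_fiber_card H hH hv, smul_eq_mul]

lemma aux_modeq_sum {ι : Type*} (s : Finset ι) (f : ι → ℤ) (u n : ℤ)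
    (h : ∀ i ∈ s, f i ≡ u [ZMOD n]) :
    (∑ i ∈ s, f i) ≡ (s.card : ℤ) * u [ZMOD n] := by
  classical
  induction s using Finset.induction_on with
  | empty => simp
  | @insert a s ha ih =>
    rw [Finset.sum_insert ha, Finset.card_insert_of_notMem ha]
    have h1 := h a (Finset.mem_insert_self a s)
    have h2 := ih (fun i hi => h i (Finset.mem_insert_of_mem hi))
    have : (((s.card + 1 : ℕ)) : ℤ) * u = u + (s.card : ℤ) * u := by push_cast; ring
    rw [this]
    exact Int.ModEq.add h1 h2

end Aux


/-- Lemma 2.3: if all hyperplane intersection numbers of `C` are congruent to a common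
integer `u` modulo `q^r`, then they are all congruent to `|C|` modulo `q^r`. -/
theorem modulo_constraint_all_points (F : Type) [Field F] [Fintype F] (q r v : ℕ)
    (hq : Fintype.card F = q) (hr : 1 ≤ r) (hv : r + 1 ≤ v)
    (C : Finset (Submodule F (Fin v → F))) (hpts : IsPointSet C)
    (u : ℤ)
    (hu : ∀ H : Submodule F (Fin v → F), IsHyperplane H →
      (interCard C H : ℤ) ≡ u [ZMOD (q : ℤ) ^ r]) :
    ∀ H : Submodule F (Fin v → F), IsHyperplane H →
      (interCard C H : ℤ) ≡ (C.card : ℤ) [ZMOD (q : ℤ) ^ r] := by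
  have hqpos : 1 ≤ q := hq ▸ Fintype.card_pos
  have hfr : Module.finrank F (Fin v → F) = v := by
    rw [Module.finrank_pi, Fintype.card_fin]
  have hv1 : 1 ≤ Module.finrank F (Fin v → F) := by omega
  have key : u ≡ (C.card : ℤ) [ZMOD (q : ℤ) ^ r] := by
    set D := Finset.univ.filter (fun f : (Fin v → F) →ₗ[F] F => f ≠ 0) with hD
    set Hyp := Finset.univ.filter
      (fun W : Submodule F (Fin v → F) =>
        Module.finrank F ↥W = Module.finrank F (Fin v → F) - 1) with hHyp
    have stepA : ∑ f ∈ D, interCard C (LinearMap.ker f)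
        = (q - 1) * ∑ W ∈ Hyp, interCard C W := by
      rw [hD, hHyp, ← hq]
      exact aux_sum_fiberwise hv1 (interCard C)
    have stepB : D.card = (q - 1) * Hyp.card := by
      have h := aux_sum_fiberwise (F := F) (V := Fin v → F) hv1 (fun _ => 1)
      rw [hD, hHyp, ← hq]
      simpa using h
    have hDcard : D.card = q ^ v - 1 := by
      rw [hD]
      rw [aux_card_nonzero, hq, hfr]
    have stepC : ∑ f ∈ D, interCard C (LinearMap.ker f)
        = C.card * (q ^ (v - 1) - 1) := by
      calc ∑ f ∈ D, interCard C (LinearMap.ker f)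
          = ∑ f ∈ D, ∑ P ∈ C, if P ≤ LinearMap.ker f then 1 else 0 := by
            refine Finset.sum_congr rfl fun f _ => ?_
            simp only [interCard]
            rw [Finset.card_filter]
        _ = ∑ P ∈ C, ∑ f ∈ D, if P ≤ LinearMap.ker f then 1 else 0 := Finset.sum_comm
        _ = ∑ P ∈ C, (D.filter fun f => P ≤ LinearMap.ker f).card := by
            refine Finset.sum_congr rfl fun P _ => ?_
            rw [Finset.card_filter]
        _ = ∑ P ∈ C, (q ^ (v - 1) - 1) := by
            refine Finset.sum_congr rfl fun P hP => ?_
            rw [hD, Finset.filter_filter]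
            have h := aux_card_point P (hpts P hP)
            rw [h, hq, hfr]
        _ = C.card * (q ^ (v - 1) - 1) := by
            rw [Finset.sum_const, smul_eq_mul]
    have hmod : (∑ W ∈ Hyp, (interCard C W : ℤ))
        ≡ (Hyp.card : ℤ) * u [ZMOD (q : ℤ) ^ r] := by
      apply aux_modeq_sum
      intro W hW
      rw [hHyp] at hW
      simp only [Finset.mem_filter, Finset.mem_univ, true_and] at hW
      exact hu W hW
    -- cast the natural number identities to ℤ
    have h1q : 1 ≤ q ^ (v - 1) := Nat.one_le_pow _ _ (by omega)
    have h1q' : 1 ≤ q ^ v := Nat.one_le_pow _ _ (by omega)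
    have eqA : ((q : ℤ) - 1) * ∑ W ∈ Hyp, (interCard C W : ℤ)
        = (C.card : ℤ) * ((q : ℤ) ^ (v - 1) - 1) := by
      have h := stepC.symm.trans stepA
      zify [hqpos, h1q] at h
      push_cast at h ⊢
      linarith [h]
    have eqB : ((q : ℤ) - 1) * (Hyp.card : ℤ) = (q : ℤ) ^ v - 1 := by
      have h := hDcard.symm.trans stepB
      zify [hqpos, h1q'] at h
      push_cast at h ⊢
      linarith [h]
    have h1 : ((q : ℤ) ^ r) ∣ ((q : ℤ) - 1) * ((Hyp.card : ℤ) * u)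
        - ((q : ℤ) - 1) * ∑ W ∈ Hyp, (interCard C W : ℤ) :=
      (hmod.mul_left ((q : ℤ) - 1)).dvd
    have d1 : ((q : ℤ) ^ r) ∣ ((q : ℤ) ^ v - 1) * u
        - (C.card : ℤ) * ((q : ℤ) ^ (v - 1) - 1) := by
      have heq : ((q : ℤ) ^ v - 1) * u - (C.card : ℤ) * ((q : ℤ) ^ (v - 1) - 1)
          = ((q : ℤ) - 1) * ((Hyp.card : ℤ) * u)
            - ((q : ℤ) - 1) * ∑ W ∈ Hyp, (interCard C W : ℤ) := by
        linear_combination eqA - u * eqB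
      rw [heq]
      exact h1
    have h2 : ((q : ℤ) ^ r) ∣ (q : ℤ) ^ (v - 1) := pow_dvd_pow _ (by omega)
    have d2 : ((q : ℤ) ^ r) ∣ (q : ℤ) ^ (v - 1) * ((q : ℤ) * u - (C.card : ℤ)) :=
      h2.mul_right _
    have hpow : (q : ℤ) ^ v = (q : ℤ) * (q : ℤ) ^ (v - 1) := by
      rw [← pow_succ']
      congr 1
      omega
    have hfinal : (C.card : ℤ) - u
        = (((q : ℤ) ^ v - 1) * u - (C.card : ℤ) * ((q : ℤ) ^ (v - 1) - 1))
          - (q : ℤ) ^ (v - 1) * ((q : ℤ) * u - (C.card : ℤ)) := by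
      rw [hpow]
      ring
    rw [Int.ModEq]
    exact (Int.modEq_iff_dvd.mpr (hfinal ▸ dvd_sub d1 d2))
  intro H hH
  exact (hu H hH).trans key
end

section
/- Let F be a finite field with q elements, let v ≥ 2, let r ≥ 1, and let C be a q^r-divisible set of points of PG(v−1, q). Then for every integer j with 0 ≤ j ≤ r and every F-subspace S of F^v of dimension v − j, one has |C ∩ S| ≡ |C| (mod q^{r−j}). -/
open scoped Classical

/-!
Double count the incidences between the points of `C` and the hyperplanes `H ⊇ S`, where `S` has
codimension `d ≥ 1`. There are `θ_d = (q^d - 1)/(q - 1)` such hyperplanes (they are dual to the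
points of the annihilator of `S`); a point of `S` lies on all of them, a point outside `S` on
`θ_(d-1) = θ_d - q^(d-1)` of them. Hence `∑_H |C ∩ H| + (|C| - |C ∩ S|) q^(d-1) = |C| θ_d`,
while `|C ∩ H| ≡ |C| (mod q^r)` for each `H`. So `q^r ∣ (|C| - |C ∩ S|) q^(d-1)`, that is,
`|C ∩ S| ≡ |C| (mod q^(r+1-d))`.
-/

open Module Finset

lemma pow_sub_dvd_of_pow_dvd_mul_pow {q a b x : ℕ} (hq : 0 < q) (h : q ^ a ∣ x * q ^ b) :
    q ^ (a - b) ∣ x := by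
  rcases le_total b a with hba | hab
  · rw [← Nat.sub_add_cancel hba, pow_add] at h
    exact Nat.dvd_of_mul_dvd_mul_right (pow_pos hq b) h
  · rw [Nat.sub_eq_zero_of_le hab, pow_zero]
    exact one_dvd x

section Lines

variable {F : Type} [Field F] [Fintype F] {V : Type} [AddCommGroup V] [Module F V] [Fintype V]

lemma card_nonzero_mem (W : Submodule F V) :
    #{x : V | x ∈ W ∧ x ≠ 0} = Fintype.card F ^ finrank F W - 1 := by
  have hW : #{x : V | x ∈ W} = Fintype.card F ^ finrank F W := by
    rw [← card_eq_pow_finrank, Fintype.card_subtype]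
  have herase :
      ({x : V | x ∈ W ∧ x ≠ 0} : Finset V) = ({x | x ∈ W} : Finset V).erase 0 := by
    ext x
    simp [and_comm]
  rw [herase, card_erase_of_mem (by simp), hW]

lemma card_lines_le_mul (W : Submodule F V) :
    #{P : Submodule F V | finrank F P = 1 ∧ P ≤ W} * (Fintype.card F - 1) =
      Fintype.card F ^ finrank F W - 1 := by
  set lines : Finset (Submodule F V) := {P | finrank F P = 1 ∧ P ≤ W}
  set vectors : Finset V := {x | x ∈ W ∧ x ≠ 0}
  have hmaps : Set.MapsTo (fun x : V => F ∙ x) (vectors : Set V) (lines : Set _) := by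
    intro x hx
    simp only [lines, vectors, mem_coe, mem_filter_univ] at hx ⊢
    exact ⟨finrank_span_singleton hx.2, (Submodule.span_singleton_le_iff_mem x W).mpr hx.1⟩
  have hfiber : ∀ P ∈ lines, #{x ∈ vectors | F ∙ x = P} = Fintype.card F - 1 := by
    intro P hP
    rw [mem_filter_univ] at hP
    have hP' := card_nonzero_mem P
    rw [hP.1, pow_one] at hP'
    rw [← hP', filter_filter]
    congr 1
    ext x
    simp only [mem_filter_univ]
    constructor
    · rintro ⟨⟨-, hx⟩, rfl⟩
      exact ⟨Submodule.mem_span_singleton_self x, hx⟩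
    · rintro ⟨hxP, hx⟩
      refine ⟨⟨hP.2 hxP, hx⟩, Submodule.eq_of_le_of_finrank_eq ?_ ?_⟩
      · exact (Submodule.span_singleton_le_iff_mem x P).mpr hxP
      · rw [finrank_span_singleton hx, hP.1]
  rw [← card_nonzero_mem W, card_eq_sum_card_fiberwise hmaps, sum_congr rfl hfiber, sum_const,
    smul_eq_mul]

end Lines

section Hyperplanes

variable {F : Type} [Field F] {V : Type} [AddCommGroup V] [Module F V]

lemma finrank_sup_eq_add_one_of_not_le [FiniteDimensional F V] {S P : Submodule F V}
    (hP : finrank F P = 1) (hPS : ¬P ≤ S) : finrank F ↥(S ⊔ P) = finrank F S + 1 := by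
  have hinf : finrank F ↥(S ⊓ P) = 0 := by
    have := Submodule.finrank_lt_finrank_of_lt (inf_lt_right.mpr hPS)
    omega
  have := Submodule.finrank_sup_add_finrank_inf_eq S P
  omega

variable [Finite V]

noncomputable def hyperplanesThrough (S : Submodule F V) : Finset (Submodule F V) :=
  {H | IsHyperplane H ∧ S ≤ H}

lemma mem_hyperplanesThrough {S H : Submodule F V} :
    H ∈ hyperplanesThrough S ↔ IsHyperplane H ∧ S ≤ H :=
  mem_filter_univ H

lemma filter_hyperplanesThrough_le (S T : Submodule F V) :
    {H ∈ hyperplanesThrough S | T ≤ H} = hyperplanesThrough (S ⊔ T) := by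
  ext H
  simp only [mem_filter, mem_hyperplanesThrough, sup_le_iff, and_assoc]

variable [Fintype F]

lemma card_hyperplanesThrough_mul (hV : 0 < finrank F V) (S : Submodule F V) :
    #(hyperplanesThrough S) * (Fintype.card F - 1) =
      Fintype.card F ^ (finrank F V - finrank F S) - 1 := by
  have : Finite (Dual F V) := Module.finite_of_finite F
  have : Fintype (Dual F V) := Fintype.ofFinite _
  have hdual : #(hyperplanesThrough S) =
      #{Φ : Submodule F (Dual F V) | finrank F Φ = 1 ∧ Φ ≤ S.dualAnnihilator} := by
    refine card_nbij' Submodule.dualAnnihilator Submodule.dualCoannihilator ?_ ?_ ?_ ?_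
    · intro H hH
      rw [mem_coe, mem_hyperplanesThrough, IsHyperplane] at hH
      rw [mem_coe, mem_filter_univ]
      have := Subspace.finrank_add_finrank_dualAnnihilator_eq H
      exact ⟨by omega, Subspace.dualAnnihilator_le_dualAnnihilator_iff.mpr hH.2⟩
    · intro Φ hΦ
      rw [mem_coe, mem_filter_univ] at hΦ
      rw [mem_coe, mem_hyperplanesThrough, IsHyperplane]
      have := Subspace.finrank_add_finrank_dualCoannihilator_eq Φ
      exact ⟨by omega, Submodule.le_dualAnnihilator_iff_le_dualCoannihilator.mp hΦ.2⟩
    · intro H _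
      exact Subspace.dualAnnihilator_dualCoannihilator_eq
    · intro Φ _
      exact Subspace.dualCoannihilator_dualAnnihilator_eq
  have hcodim := Subspace.finrank_add_finrank_dualAnnihilator_eq S
  rw [hdual, card_lines_le_mul, show finrank F S.dualAnnihilator = finrank F V - finrank F S by
    omega]

lemma card_hyperplanesThrough_sup_add {S P : Submodule F V} (hP : finrank F P = 1)
    (hPS : ¬P ≤ S) :
    #(hyperplanesThrough (S ⊔ P)) + Fintype.card F ^ (finrank F V - finrank F S - 1) =
      #(hyperplanesThrough S) := by
  set q := Fintype.card F
  have hsup := finrank_sup_eq_add_one_of_not_le hP hPS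
  have hle := (S ⊔ P).finrank_le
  have hV : 0 < finrank F V := by omega
  have hq : 1 < q := Fintype.one_lt_card
  have hSP := card_hyperplanesThrough_mul hV (S ⊔ P)
  have hS := card_hyperplanesThrough_mul hV S
  rw [hsup, Nat.sub_add_eq] at hSP
  set x := q ^ (finrank F V - finrank F S - 1)
  have hpow : q ^ (finrank F V - finrank F S) = x * q := by
    rw [← pow_succ]
    congr 1
    omega
  have hx : x ≤ x * q := Nat.le_mul_of_pos_right x (by omega)
  have hx1 : 1 ≤ x := Nat.one_le_pow _ _ (by omega)
  refine Nat.eq_of_mul_eq_mul_right (show 0 < q - 1 by omega) ?_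
  rw [add_mul, hSP, hS, hpow, Nat.mul_sub_one]
  omega

lemma sum_interCard_hyperplanesThrough_add {C : Finset (Submodule F V)} (hC : IsPointSet C)
    (S : Submodule F V) :
    ∑ H ∈ hyperplanesThrough S, interCard C H +
        #{P ∈ C | ¬P ≤ S} * Fintype.card F ^ (finrank F V - finrank F S - 1) =
      #C * #(hyperplanesThrough S) := by
  set x := Fintype.card F ^ (finrank F V - finrank F S - 1)
  have hdouble : ∑ H ∈ hyperplanesThrough S, interCard C H =
      ∑ P ∈ C, #(hyperplanesThrough (S ⊔ P)) := by
    simp_rw [← filter_hyperplanesThrough_le]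
    exact (sum_card_bipartiteAbove_eq_sum_card_bipartiteBelow (r := (· ≤ ·))).symm
  have hoff : #{P ∈ C | ¬P ≤ S} * x = ∑ P ∈ C, if ¬P ≤ S then x else 0 := by
    rw [← sum_filter, sum_const, smul_eq_mul]
  rw [hdouble, hoff, ← sum_add_distrib, ← smul_eq_mul, ← sum_const]
  refine sum_congr rfl fun P hP => ?_
  by_cases hPS : P ≤ S
  · rw [if_neg (not_not.mpr hPS), sup_eq_left.mpr hPS, add_zero]
  · rw [if_pos hPS, card_hyperplanesThrough_sup_add (hC P hP) hPS]

theorem DivisibleSet.interCard_modEq {C : Finset (Submodule F V)} {r : ℕ} (hC : IsPointSet C)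
    (hdiv : DivisibleSet (Fintype.card F ^ r) C) (S : Submodule F V) :
    interCard C S ≡ #C [MOD Fintype.card F ^ (r + 1 - (finrank F V - finrank F S))] := by
  by_cases hStop : S = ⊤
  · subst hStop
    rw [interCard, filter_true_of_mem fun P _ => le_top]
  have hcodim : finrank F S < finrank F V := Submodule.finrank_lt hStop
  set q := Fintype.card F
  have hsum : ∑ H ∈ hyperplanesThrough S, interCard C H ≡
      #C * #(hyperplanesThrough S) [MOD q ^ r] := by
    rw [mul_comm, ← smul_eq_mul, ← sum_const]
    exact Nat.ModEq.sum fun H hH => hdiv H (mem_hyperplanesThrough.mp hH).1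
  have hoff : #{P ∈ C | ¬P ≤ S} * q ^ (finrank F V - finrank F S - 1) ≡ 0 [MOD q ^ r] := by
    refine Nat.ModEq.add_left_cancel' (∑ H ∈ hyperplanesThrough S, interCard C H) ?_
    rw [sum_interCard_hyperplanesThrough_add hC S, add_zero]
    exact hsum.symm
  have hdvd := pow_sub_dvd_of_pow_dvd_mul_pow Fintype.card_pos (Nat.modEq_zero_iff_dvd.mp hoff)
  rw [Nat.sub_sub_right _ (by omega)] at hdvd
  refine (Nat.modEq_iff_dvd' (card_filter_le _ _)).mpr ?_
  rwa [← card_filter_add_card_filter_not (s := C) (fun P => P ≤ S), Nat.add_sub_cancel_left]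

end Hyperplanes

theorem heritable_general (F : Type) [Field F] [Fintype F] (q v r : ℕ)
    (hq : Fintype.card F = q)
    (C : Finset (Submodule F (Fin v → F))) (hpts : IsPointSet C)
    (hdiv : DivisibleSet (q ^ r) C) :
    ∀ j : ℕ, j ≤ r → ∀ S : Submodule F (Fin v → F), Module.finrank F ↥S = v - j →
      interCard C S ≡ C.card [MOD q ^ (r - j)] := by
  subst hq
  intro j hj S hS
  have hcodim : finrank F (Fin v → F) - finrank F S ≤ j := by
    rw [finrank_fin_fun, hS]
    omega
  exact (hdiv.interCard_modEq hpts S).of_dvd (pow_dvd_pow _ (by omega))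

/-- Lemma 2.4: a `q^r`-divisible set of points is `q^(r-j)`-divisible on every subspace
of codimension `j`, for `0 ≤ j ≤ r`. -/
theorem heritable (F : Type) [Field F] [Fintype F] (q v r : ℕ)
    (hq : Fintype.card F = q) (hv : 2 ≤ v) (hr : 1 ≤ r)
    (C : Finset (Submodule F (Fin v → F))) (hpts : IsPointSet C)
    (hdiv : DivisibleSet (q ^ r) C) :
    ∀ j : ℕ, j ≤ r → ∀ S : Submodule F (Fin v → F), Module.finrank F ↥S = v - j →
      interCard C S ≡ C.card [MOD q ^ (r - j)] :=
  heritable_general F q v r hq C hpts hdiv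
end

section
/- Let F be a finite field with q elements and let r ≥ 1. For every integer n with n > ((q^{r+1} − 1)/(q − 1))·q^{r+1} − (q^{r+1} − 1)/(q − 1) − q^{r+1}, there exist an integer v ≥ 2 and a q^r-divisible set C of points of PG(v−1, q) with |C| = n. (In other words, the largest integer that is not the cardinality of a q^r-divisible set of points over F is at most q^{2r+1} + q^{2r} + ⋯ + q^{r+2} − q^r − q^{r−1} − ⋯ − 1.) -/
open scoped Classical

open Finset Module


open Finset Module

lemma geom_mul (q : ℕ) (hq : 1 ≤ q) : ∀ n : ℕ, (∑ i ∈ Finset.range n, q ^ i) * (q - 1) = q ^ n - 1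
  | 0 => by simp
  | (n+1) => by
    have ih := geom_mul q hq n
    have h1 : 1 ≤ q ^ n := Nat.one_le_pow _ _ hq
    rw [Finset.sum_range_succ, add_mul, ih, pow_succ]
    have h2 : q ^ n * (q - 1) = q ^ n * q - q ^ n := by rw [Nat.mul_sub, Nat.mul_one]
    have h3 : q ^ n ≤ q ^ n * q := Nat.le_mul_of_pos_right _ hq
    omega

lemma geom_div (q n : ℕ) (hq : 2 ≤ q) :
    (q ^ n - 1) / (q - 1) = ∑ i ∈ Finset.range n, q ^ i :=
  Nat.div_eq_of_eq_mul_left (by omega) (geom_mul q (by omega) n).symm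

lemma geom_modeq (q r d d' : ℕ) (h1 : r ≤ d') (h2 : d' ≤ d) :
    (∑ i ∈ Finset.range d', q ^ i) ≡ (∑ i ∈ Finset.range d, q ^ i) [MOD q ^ r] := by
  have hle : (∑ i ∈ Finset.range d', q ^ i) ≤ ∑ i ∈ Finset.range d, q ^ i :=
    Finset.sum_le_sum_of_subset (Finset.range_subset_range.mpr h2)
  rw [Nat.modEq_iff_dvd' hle]
  have hsplit : (∑ i ∈ Finset.range d', q ^ i) + (∑ i ∈ Finset.Ico d' d, q ^ i)
      = ∑ i ∈ Finset.range d, q ^ i := by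
    simp only [Finset.range_eq_Ico]
    exact Finset.sum_Ico_consecutive _ (Nat.zero_le _) h2
  have : (∑ i ∈ Finset.range d, q ^ i) - (∑ i ∈ Finset.range d', q ^ i)
      = ∑ i ∈ Finset.Ico d' d, q ^ i := by omega
  rw [this]
  exact Finset.dvd_sum fun i hi => pow_dvd_pow q (le_trans h1 (Finset.mem_Ico.mp hi).1)


section Pts

variable {F : Type} [Field F] [Fintype F] {v : ℕ}

noncomputable def pts (S : Submodule F (Fin v → F)) : Finset (Submodule F (Fin v → F)) :=
  Finset.univ.filter (fun P => Module.finrank F ↥P = 1 ∧ P ≤ S)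

lemma mem_pts {S P : Submodule F (Fin v → F)} :
    P ∈ pts S ↔ Module.finrank F ↥P = 1 ∧ P ≤ S := by simp [pts]

lemma pts_mono {S T : Submodule F (Fin v → F)} (h : S ≤ T) : pts S ⊆ pts T := fun P hP => by
  rw [mem_pts] at *; exact ⟨hP.1, hP.2.trans h⟩

lemma pts_filter (S H : Submodule F (Fin v → F)) :
    (pts S).filter (fun P => P ≤ H) = pts (S ⊓ H) := by
  ext P
  simp only [Finset.mem_filter, mem_pts, le_inf_iff]
  tauto

lemma card_pts_mul (q : ℕ) (hq : Fintype.card F = q) (S : Submodule F (Fin v → F)) :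
    (pts S).card * (q - 1) = q ^ (Module.finrank F ↥S) - 1 := by
  set N : Finset (Fin v → F) := Finset.univ.filter (fun x => x ∈ S ∧ x ≠ 0) with hN
  have hfib : ∀ x ∈ N, Submodule.span F {x} ∈ pts S := by
    intro x hx
    rw [hN, Finset.mem_filter] at hx
    exact mem_pts.mpr ⟨finrank_span_singleton hx.2.2,
      (Submodule.span_singleton_le_iff_mem _ _).mpr hx.2.1⟩
  have key := Finset.card_eq_sum_card_fiberwise hfib
  have hNcard : N.card = q ^ (Module.finrank F ↥S) - 1 := by
    have h0 : N = Finset.univ.filter (fun x => x ∈ S) \ {0} := by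
      ext x
      simp [hN, and_comm]
    have h1 : (Finset.univ.filter (fun x : Fin v → F => x ∈ S)).card = q ^ Module.finrank F ↥S := by
      rw [← hq, ← card_eq_pow_finrank (K := F) (V := ↥S), ← Fintype.card_subtype]
    rw [h0, Finset.card_sdiff_of_subset (by simp [S.zero_mem]), h1, Finset.card_singleton]
  have hfiber : ∀ P ∈ pts S, (N.filter (fun x => Submodule.span F {x} = P)).card = q - 1 := by
    intro P hP
    rw [mem_pts] at hP
    have heq : N.filter (fun x => Submodule.span F {x} = P)
        = Finset.univ.filter (fun x => x ∈ P) \ {0} := by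
      ext x
      simp only [hN, Finset.mem_filter, Finset.mem_univ, true_and, Finset.mem_sdiff,
        Finset.mem_singleton, and_assoc]
      constructor
      · rintro ⟨hxS, hx0, hsp⟩
        exact ⟨hsp ▸ Submodule.mem_span_singleton_self x, hx0⟩
      · rintro ⟨hxP, hx0⟩
        refine ⟨hP.2 hxP, hx0, ?_⟩
        exact Submodule.eq_of_le_of_finrank_eq
          ((Submodule.span_singleton_le_iff_mem _ _).mpr hxP)
          (by rw [finrank_span_singleton hx0, hP.1])
    have h1 : (Finset.univ.filter (fun x : Fin v → F => x ∈ P)).card = q := by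
      rw [← Fintype.card_subtype]
      have := card_eq_pow_finrank (K := F) (V := ↥P)
      rw [hP.1, pow_one, hq] at this
      exact this
    rw [heq, Finset.card_sdiff_of_subset (by simp [P.zero_mem]), h1, Finset.card_singleton]
  rw [key, Finset.sum_congr rfl hfiber, Finset.sum_const, smul_eq_mul] at hNcard
  exact hNcard

lemma card_pts (q : ℕ) (hq : Fintype.card F = q) (hq2 : 2 ≤ q) (S : Submodule F (Fin v → F)) :
    (pts S).card = ∑ i ∈ Finset.range (Module.finrank F ↥S), q ^ i := by
  apply Nat.eq_of_mul_eq_mul_right (show 0 < q - 1 by omega)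
  rw [card_pts_mul q hq S, geom_mul q (by omega)]

end Pts

set_option linter.unusedSectionVars false
set_option linter.unusedVariables false
section Coord

variable (F : Type) [Field F] [Fintype F] {v : ℕ}

def coordSub (s : Finset (Fin v)) : Submodule F (Fin v → F) where
  carrier := {x | ∀ i, i ∉ s → x i = 0}
  add_mem' := fun ha hb i hi => by simp [ha i hi, hb i hi]
  zero_mem' := fun i _ => rfl
  smul_mem' := fun c x hx i hi => by simp [hx i hi]

variable {F}

lemma mem_coordSub {s : Finset (Fin v)} {x : Fin v → F} :
    x ∈ coordSub F s ↔ ∀ i, i ∉ s → x i = 0 := Iff.rfl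

lemma coordSub_mono {s t : Finset (Fin v)} (h : s ⊆ t) : coordSub F s ≤ coordSub F t :=
  fun x hx i hi => hx i (fun hm => hi (h hm))

lemma coordSub_disjoint {s t : Finset (Fin v)} (h : Disjoint s t) :
    coordSub F s ⊓ coordSub F t = ⊥ := by
  rw [eq_bot_iff]
  rintro x ⟨hx1, hx2⟩
  have : x = 0 := by
    funext i
    by_cases hi : i ∈ s
    · exact hx2 i (Finset.disjoint_left.mp h hi)
    · exact hx1 i hi
  simp [this]

lemma card_coordSub (s : Finset (Fin v)) :
    Fintype.card ↥(coordSub F s) = Fintype.card F ^ s.card := by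
  have e : ↥(coordSub F s) ≃ (↥s → F) :=
    { toFun := fun x i => x.1 i.1
      invFun := fun y => ⟨fun i => if h : i ∈ s then y ⟨i, h⟩ else 0, fun i hi => dif_neg hi⟩
      left_inv := fun x => Subtype.ext (funext fun i => by
        by_cases h : i ∈ s
        · simp [h]
        · simp [h, x.2 i h])
      right_inv := fun y => funext fun i => by simp }
  rw [Fintype.card_congr e, Fintype.card_fun, Fintype.card_coe]

lemma finrank_coordSub (s : Finset (Fin v)) :
    Module.finrank F ↥(coordSub F s) = s.card := by
  have h2 : 2 ≤ Fintype.card F := Fintype.one_lt_card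
  apply Nat.pow_right_injective h2
  show Fintype.card F ^ _ = Fintype.card F ^ _
  rw [← card_coordSub s, card_eq_pow_finrank (K := F) (V := ↥(coordSub F s))]

def finIco (v lo hi : ℕ) (h : hi ≤ v) : Finset (Fin v) :=
  (Finset.Ico lo hi).attachFin (fun m hm => lt_of_lt_of_le (Finset.mem_Ico.mp hm).2 h)

lemma mem_finIco {v lo hi : ℕ} (h : hi ≤ v) {i : Fin v} :
    i ∈ finIco v lo hi h ↔ lo ≤ i.val ∧ i.val < hi := by
  rw [finIco, Finset.mem_attachFin, Finset.mem_Ico]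

lemma card_finIco {v lo hi : ℕ} (h : hi ≤ v) : (finIco v lo hi h).card = hi - lo := by
  rw [finIco, Finset.card_attachFin, Nat.card_Ico]

lemma inf_hyperplane_finrank {F : Type} [Field F] [Fintype F] {v : ℕ} (hv : 1 ≤ v)
    {H : Submodule F (Fin v → F)} (hH : IsHyperplane H) (S : Submodule F (Fin v → F)) :
    Module.finrank F ↥S ≤ Module.finrank F ↥(S ⊓ H) + 1 ∧
      Module.finrank F ↥(S ⊓ H) ≤ Module.finrank F ↥S := by
  have hfr : Module.finrank F (Fin v → F) = v := by
    rw [Module.finrank_pi, Fintype.card_fin]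
  have hH' : Module.finrank F ↥H = v - 1 := by
    rw [IsHyperplane] at hH; rw [hH, hfr]
  have key := Submodule.finrank_sup_add_finrank_inf_eq S H
  have h1 : Module.finrank F ↥(S ⊔ H) ≤ v :=
    le_trans (Submodule.finrank_le _) (le_of_eq hfr)
  have h2 : Module.finrank F ↥(S ⊓ H) ≤ Module.finrank F ↥S :=
    Submodule.finrank_mono inf_le_left
  omega

end Coord

lemma modeq_sum {α : Type} {s : Finset α} {f g : α → ℕ} {n : ℕ}
    (h : ∀ i ∈ s, f i ≡ g i [MOD n]) : ∑ i ∈ s, f i ≡ ∑ i ∈ s, g i [MOD n] := by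
  classical
  induction s using Finset.induction_on with
  | empty => rfl
  | @insert x s' hx ih =>
    rw [Finset.sum_insert hx, Finset.sum_insert hx]
    exact Nat.ModEq.add (h x (Finset.mem_insert_self x s'))
      (ih fun i hi => h i (Finset.mem_insert_of_mem hi))

lemma construct (F : Type) [Field F] [Fintype F] (q r a b : ℕ)
    (hq : Fintype.card F = q) (hr : 1 ≤ r) (hab : 1 ≤ a + b) :
    ∃ v : ℕ, 2 ≤ v ∧ ∃ C : Finset (Submodule F (Fin v → F)),
      IsPointSet C ∧ DivisibleSet (q ^ r) C ∧
      C.card = a * (∑ i ∈ Finset.range (r + 1), q ^ i) + b * q ^ (r + 1) := by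
  have hq2 : 2 ≤ q := by rw [← hq]; exact Fintype.one_lt_card
  set v := (a + b) * (r + 2) with hv
  have hv2 : 2 ≤ v := by
    calc 2 ≤ 1 * (r + 2) := by omega
    _ ≤ (a + b) * (r + 2) := Nat.mul_le_mul_right _ hab
  refine ⟨v, hv2, ?_⟩
  -- blocks
  set bigs : ℕ → Finset (Fin v) :=
    fun j => finIco v (j * (r + 2)) (min (j * (r + 2) + (r + 2)) v) (min_le_right _ _) with hbigs
  set subs : ℕ → Finset (Fin v) :=
    fun j => finIco v (j * (r + 2)) (min (j * (r + 2) + (r + 1)) v) (min_le_right _ _) with hsubs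
  have hbound : ∀ j, j < a + b → j * (r + 2) + (r + 2) ≤ v := by
    intro j hj
    calc j * (r + 2) + (r + 2) = (j + 1) * (r + 2) := by ring
    _ ≤ (a + b) * (r + 2) := Nat.mul_le_mul_right _ hj
  have hsubsbigs : ∀ j, subs j ⊆ bigs j := by
    intro j i hi
    rw [hsubs, mem_finIco] at hi
    rw [hbigs, mem_finIco]
    omega
  have hbigsdisj : ∀ j j', j < j' → Disjoint (bigs j) (bigs j') := by
    intro j j' hjj'
    rw [Finset.disjoint_left]
    intro i hi hi'
    rw [hbigs, mem_finIco] at hi hi'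
    have : j * (r + 2) + (r + 2) ≤ j' * (r + 2) := by
      calc j * (r + 2) + (r + 2) = (j + 1) * (r + 2) := by ring
      _ ≤ j' * (r + 2) := Nat.mul_le_mul_right _ hjj'
    omega
  set Big : ℕ → Submodule F (Fin v → F) := fun j => coordSub F (bigs j) with hBig
  set Sub : ℕ → Submodule F (Fin v → F) := fun j => coordSub F (subs j) with hSub
  have hSB : ∀ j, Sub j ≤ Big j := fun j => coordSub_mono (hsubsbigs j)
  have frBig : ∀ j, j < a + b → Module.finrank F ↥(Big j) = r + 2 := by
    intro j hj
    rw [hBig, finrank_coordSub, hbigs, card_finIco]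
    have := hbound j hj
    omega
  have frSub : ∀ j, j < a + b → Module.finrank F ↥(Sub j) = r + 1 := by
    intro j hj
    rw [hSub, finrank_coordSub, hsubs, card_finIco]
    have := hbound j hj
    omega
  classical
  set Cb : ℕ → Finset (Submodule F (Fin v → F)) :=
    fun j => if j < a then pts (Sub j) else pts (Big j) \ pts (Sub j) with hCb
  have hCbBig : ∀ j, Cb j ⊆ pts (Big j) := by
    intro j
    simp only [hCb]
    by_cases h : j < a
    · rw [if_pos h]; exact pts_mono (hSB j)
    · rw [if_neg h]; exact Finset.sdiff_subset
  set C : Finset (Submodule F (Fin v → F)) := (Finset.range (a + b)).biUnion Cb with hC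
  have hCbdisj : ∀ j ∈ Finset.range (a + b), ∀ j' ∈ Finset.range (a + b), j ≠ j' →
      Disjoint (Cb j) (Cb j') := by
    intro j _ j' _ hne
    have key : ∀ k k', k < k' → Disjoint (pts (Big k)) (pts (Big k')) := by
      intro k k' hkk'
      rw [Finset.disjoint_left]
      intro P hP hP'
      rw [mem_pts] at hP hP'
      have hPbot : P ≤ Big k ⊓ Big k' := le_inf hP.2 hP'.2
      rw [hBig, coordSub_disjoint (hbigsdisj k k' hkk'), le_bot_iff] at hPbot
      have := hP.1
      rw [hPbot, finrank_bot] at this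
      exact absurd this (by omega)
    rcases lt_or_gt_of_ne hne with h | h
    · exact Finset.disjoint_of_subset_left (hCbBig j)
        (Finset.disjoint_of_subset_right (hCbBig j') (key j j' h))
    · exact Finset.disjoint_of_subset_left (hCbBig j)
        (Finset.disjoint_of_subset_right (hCbBig j') ((key j' j h).symm))
  have hCbcard : ∀ j ∈ Finset.range (a + b),
      (Cb j).card = if j < a then (∑ i ∈ Finset.range (r + 1), q ^ i) else q ^ (r + 1) := by
    intro j hj
    rw [Finset.mem_range] at hj
    simp only [hCb]
    by_cases h : j < a
    · rw [if_pos h, if_pos h, card_pts q hq hq2, frSub j hj]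
    · rw [if_neg h, if_neg h, Finset.card_sdiff_of_subset (pts_mono (hSB j)),
        card_pts q hq hq2, card_pts q hq hq2, frSub j hj, frBig j hj,
        Finset.sum_range_succ _ (r + 1)]
      omega
  have hsum : ∀ (A' B' : ℕ),
      (∑ j ∈ Finset.range (a + b), if j < a then A' else B') = a * A' + b * B' := by
    intro A' B'
    rw [Finset.range_eq_Ico, ← Finset.sum_Ico_consecutive _ (Nat.zero_le a) (Nat.le_add_right a b)]
    have h1 : (∑ j ∈ Finset.Ico 0 a, if j < a then A' else B') = a * A' := by
      rw [Finset.sum_congr rfl (fun j hj => if_pos (Finset.mem_Ico.mp hj).2),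
        Finset.sum_const, Nat.card_Ico, smul_eq_mul]
      congr 1
    have h2 : (∑ j ∈ Finset.Ico a (a + b), if j < a then A' else B') = b * B' := by
      rw [Finset.sum_congr rfl (fun j hj => if_neg (by
        have := (Finset.mem_Ico.mp hj).1; omega)),
        Finset.sum_const, Nat.card_Ico, smul_eq_mul]
      congr 1
      omega
    rw [h1, h2]
  refine ⟨C, ?_, ?_, ?_⟩
  · -- IsPointSet
    intro P hP
    rw [hC, Finset.mem_biUnion] at hP
    obtain ⟨j, _, hPj⟩ := hP
    exact (mem_pts.mp (hCbBig j hPj)).1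
  · -- DivisibleSet
    intro H hH
    have hv1 : 1 ≤ v := by omega
    rw [interCard, hC, Finset.filter_biUnion, Finset.card_biUnion
      (fun j hj j' hj' hne => Finset.disjoint_filter_filter (hCbdisj j hj j' hj' hne)),
      Finset.card_biUnion hCbdisj]
    apply modeq_sum
    intro j hj
    rw [Finset.mem_range] at hj
    have hdims := inf_hyperplane_finrank hv1 hH (Sub j)
    have hdimb := inf_hyperplane_finrank hv1 hH (Big j)
    rw [frSub j hj] at hdims
    rw [frBig j hj] at hdimb
    simp only [hCb]
    by_cases h : j < a
    · rw [if_pos h, pts_filter, card_pts q hq hq2, card_pts q hq hq2, frSub j hj]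
      exact geom_modeq q r _ _ (by omega) (by omega)
    · rw [if_neg h]
      have hfs : (pts (Big j) \ pts (Sub j)).filter (fun P => P ≤ H)
          = pts (Big j ⊓ H) \ pts (Sub j ⊓ H) := by
        rw [← pts_filter, ← pts_filter]
        ext P
        simp only [Finset.mem_filter, Finset.mem_sdiff]
        tauto
      rw [hfs]
      have hmono : pts (Sub j ⊓ H) ⊆ pts (Big j ⊓ H) :=
        pts_mono (inf_le_inf_right H (hSB j))
      rw [Finset.card_sdiff_of_subset hmono, card_pts q hq hq2, card_pts q hq hq2]
      have hd12 : Module.finrank F ↥(Sub j ⊓ H) ≤ Module.finrank F ↥(Big j ⊓ H) :=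
        Submodule.finrank_mono (inf_le_inf_right H (hSB j))
      have hdvd1 : q ^ r ∣ (∑ i ∈ Finset.range (Module.finrank F ↥(Big j ⊓ H)), q ^ i)
          - (∑ i ∈ Finset.range (Module.finrank F ↥(Sub j ⊓ H)), q ^ i) := by
        rw [← Nat.modEq_iff_dvd'
          (Finset.sum_le_sum_of_subset (Finset.range_subset_range.mpr hd12))]
        exact geom_modeq q r _ _ (by omega) hd12
      have hdvd2 : q ^ r ∣ q ^ (r + 1) := pow_dvd_pow q (by omega)
      have hc2 : (pts (Big j) \ pts (Sub j)).card = q ^ (r + 1) := by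
        rw [Finset.card_sdiff_of_subset (pts_mono (hSB j)), card_pts q hq hq2, card_pts q hq hq2,
          frSub j hj, frBig j hj, Finset.sum_range_succ _ (r + 1)]
        omega
      rw [hc2]
      calc (∑ i ∈ Finset.range (Module.finrank F ↥(Big j ⊓ H)), q ^ i)
            - (∑ i ∈ Finset.range (Module.finrank F ↥(Sub j ⊓ H)), q ^ i)
          ≡ 0 [MOD q ^ r] := Nat.modEq_zero_iff_dvd.mpr hdvd1
        _ ≡ q ^ (r + 1) [MOD q ^ r] := (Nat.modEq_zero_iff_dvd.mpr hdvd2).symm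
  · -- cardinality
    rw [hC, Finset.card_biUnion hCbdisj, Finset.sum_congr rfl hCbcard, hsum]


/-- Lemma 2.6 (Frobenius-type bound): every integer exceeding
`((q^(r+1)-1)/(q-1))·q^(r+1) - (q^(r+1)-1)/(q-1) - q^(r+1)` is the cardinality of some
`q^r`-divisible set of points. -/
theorem frobenius_bound (F : Type) [Field F] [Fintype F] (q r : ℕ)
    (hq : Fintype.card F = q) (hr : 1 ≤ r) :
    ∀ n : ℕ,
      ((q ^ (r + 1) - 1) / (q - 1)) * q ^ (r + 1)
        - (q ^ (r + 1) - 1) / (q - 1) - q ^ (r + 1) < n →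
      ∃ v : ℕ, 2 ≤ v ∧ ∃ C : Finset (Submodule F (Fin v → F)),
        IsPointSet C ∧ DivisibleSet (q ^ r) C ∧ C.card = n := by
  intro n hn
  have hq2 : 2 ≤ q := by rw [← hq]; exact Fintype.one_lt_card
  set A : ℕ := ∑ i ∈ Finset.range (r + 1), q ^ i with hA
  set B : ℕ := q ^ (r + 1) with hB
  rw [geom_div q (r + 1) hq2, ← hA] at hn
  -- A in the form 1 + m * q
  have hAform : A = 1 + (∑ i ∈ Finset.range r, q ^ i) * q := by
    rw [hA, Finset.sum_range_succ' (fun i => q ^ i)]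
    simp only [pow_zero, pow_succ]
    rw [← Finset.sum_mul]
    omega
  have hm1 : 1 ≤ ∑ i ∈ Finset.range r, q ^ i := by
    calc 1 = q ^ 0 := (pow_zero q).symm
    _ ≤ ∑ i ∈ Finset.range r, q ^ i :=
      Finset.single_le_sum (fun i _ => Nat.zero_le _) (Finset.mem_range.mpr hr)
  have hA1 : 1 < A := by
    rw [hAform]
    have : 2 ≤ (∑ i ∈ Finset.range r, q ^ i) * q :=
      le_trans (by omega) (Nat.mul_le_mul hm1 hq2)
    omega
  have hB1 : 1 < B := Nat.one_lt_pow (by omega) hq2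
  have hcop : Nat.Coprime A B := by
    have h1 : Nat.Coprime A q := by
      rw [hAform]
      exact (Nat.coprime_add_mul_right_left 1 q _).mpr (Nat.coprime_one_left q)
    exact h1.pow_right (r + 1)
  have hfrob := frobeniusNumber_pair hcop hA1 hB1
  have hmem : n ∈ AddSubmonoid.closure ({A, B} : Set ℕ) := by
    by_contra hc
    exact absurd (hfrob.2 hc) (by omega)
  rw [AddSubmonoid.mem_closure_pair] at hmem
  obtain ⟨a, b, hab⟩ := hmem
  simp only [smul_eq_mul] at hab
  have hab1 : 1 ≤ a + b := by
    rcases Nat.eq_zero_or_pos (a + b) with h0 | h1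
    · exfalso
      have ha : a = 0 := by omega
      have hb : b = 0 := by omega
      rw [ha, hb] at hab
      omega
    · exact h1
  obtain ⟨v, hv, C, h1, h2, h3⟩ := construct F q r a b hq hr hab1
  exact ⟨v, hv, C, h1, h2, by rw [h3, ← hA, ← hB, hab]⟩
end

section
/- Let F be a finite field with q elements, let 3 ≤ s ≤ t < v be integers, and let 𝒫 be a vector space partition of F^v such that every member of 𝒫 has dimension 1 or dimension between s and t. Then the set of 1-dimensional members of 𝒫 is a q^{s−1}-divisible set of points of PG(v−1, q); that is, for every hyperplane H of F^v, the number of 1-dimensional members of 𝒫 contained in H is congruent modulo q^{s−1} to the total number of 1-dimensional members of 𝒫. -/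
open scoped Classical

/-!
Count the vectors outside a hyperplane `H`. Each of them lies in exactly one member `W` of the
partition, and `W \ H` has `(q - 1) q ^ (dim W - 1)` elements when `W ⊄ H`, while the complement
of `H` has `(q - 1) q ^ (v - 1)`. Hence `q ^ (v - 1) = ∑_{W ⊄ H} q ^ (dim W - 1)`. The points
outside `H` contribute `1` each and every other term, like the left-hand side, is divisible by
`q ^ (s - 1)`; so is the number of points outside `H`, which is `|C| - |C ∩ H|` for the set `C`
of 1-dimensional members.
-/

open Finset Module

theorem card_notMem_eq_sum_of_partition {R V : Type*} [Semiring R] [AddCommMonoid V]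
    [Module R V] [Fintype V] {P : Finset (Submodule R V)}
    (hP : ∀ x : V, x ≠ 0 → ∃! W, W ∈ P ∧ x ∈ W) (S : Submodule R V) :
    #{x | x ∉ S} = ∑ W ∈ P, #{x | x ∈ W ∧ x ∉ S} := by
  have hone : ∀ x : V, x ∉ S → #{W ∈ P | x ∈ W} = 1 := fun x hx => by
    obtain ⟨W, hW, huniq⟩ := hP x (fun h => hx (h ▸ S.zero_mem))
    exact card_eq_one.2 ⟨W, eq_singleton_iff_unique_mem.2
      ⟨mem_filter.2 hW, fun W' hW' => huniq W' (mem_filter.1 hW')⟩⟩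
  simp only [card_eq_sum_ones, sum_filter]
  rw [sum_comm]
  refine sum_congr rfl fun x _ => ?_
  by_cases hx : x ∈ S
  · simp [hx]
  · simpa [hx] using (hone x hx).symm

theorem finrank_inf_add_one_of_not_le {F V : Type} [Field F] [AddCommGroup V] [Module F V]
    [FiniteDimensional F V] {W H : Submodule F V} (hH : IsHyperplane H) (hW : ¬ W ≤ H) :
    finrank F ↥(W ⊓ H) + 1 = finrank F W := by
  have hlt : finrank F H < finrank F ↥(W ⊔ H) :=
    Submodule.finrank_lt_finrank_of_lt (right_lt_sup.2 hW)
  have hle : finrank F ↥(W ⊔ H) ≤ finrank F V := Submodule.finrank_le _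
  have := Submodule.finrank_sup_add_finrank_inf_eq W H
  unfold IsHyperplane at hH
  omega

theorem divisibleSet_iff_dvd_card_not_le {F V : Type} [Field F] [AddCommGroup V] [Module F V]
    (Δ : ℕ) (C : Finset (Submodule F V)) :
    DivisibleSet Δ C ↔ ∀ H : Submodule F V, IsHyperplane H → Δ ∣ #{W ∈ C | ¬ W ≤ H} := by
  refine forall₂_congr fun H _ => ?_
  rw [interCard, ← card_filter_add_card_filter_not (s := C) (· ≤ H), ← Nat.modEq_zero_iff_dvd]
  constructor
  · exact fun h => (Nat.ModEq.add_left_cancel' #{W ∈ C | W ≤ H} (by simpa using h)).symm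
  · exact fun h => by simpa using (h.add_left #{W ∈ C | W ≤ H}).symm

section FiniteField

variable {F V : Type} [Field F] [Fintype F] [AddCommGroup V] [Module F V] [Fintype V]

local notation "q" => Fintype.card F

theorem card_mem_notMem_eq (W S : Submodule F V) :
    #{x | x ∈ W ∧ x ∉ S} = q ^ finrank F W - q ^ finrank F ↥(W ⊓ S) := by
  have hsplit := card_filter_add_card_filter_not (s := {x | x ∈ W}) (· ∈ S)
  simp only [filter_filter] at hsplit
  have hcard : ∀ U : Submodule F V, #{x | x ∈ U} = q ^ finrank F U := fun U => by
    rw [← Fintype.card_subtype, card_eq_pow_finrank (K := F)]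
  rw [← hcard, ← hcard, ← hsplit]
  simp [Submodule.mem_inf]

theorem card_mem_notMem_of_isHyperplane {W H : Submodule F V} (hH : IsHyperplane H)
    (hW : ¬ W ≤ H) :
    #{x | x ∈ W ∧ x ∉ H} = (q - 1) * q ^ (finrank F W - 1) := by
  rw [card_mem_notMem_eq, ← finrank_inf_add_one_of_not_le hH hW, pow_succ, Nat.add_sub_cancel,
    Nat.sub_mul, one_mul, mul_comm]

theorem pow_finrank_sub_one_eq_sum_of_isHyperplane {P : Finset (Submodule F V)}
    (hP : ∀ x : V, x ≠ 0 → ∃! W, W ∈ P ∧ x ∈ W) {H : Submodule F V} (hH : IsHyperplane H)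
    (hHtop : H ≠ ⊤) :
    q ^ (finrank F V - 1) = ∑ W ∈ P with ¬ W ≤ H, q ^ (finrank F W - 1) := by
  have hcount := card_notMem_eq_sum_of_partition hP H
  have hout : #{x | x ∉ H} = #{x | x ∈ (⊤ : Submodule F V) ∧ x ∉ H} := by simp
  rw [hout, card_mem_notMem_of_isHyperplane hH (by simpa [top_le_iff] using hHtop), finrank_top,
    ← sum_filter_add_sum_filter_not P (· ≤ H),
    sum_eq_zero fun W hW => by simpa using fun x hx => (mem_filter.1 hW).2 hx, zero_add,
    sum_congr rfl fun W hW => card_mem_notMem_of_isHyperplane hH (mem_filter.1 hW).2,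
    ← mul_sum] at hcount
  exact Nat.eq_of_mul_eq_mul_left (Nat.sub_pos_of_lt Fintype.one_lt_card) hcount

theorem divisibleSet_points_of_partition {P : Finset (Submodule F V)}
    (hP : ∀ x : V, x ≠ 0 → ∃! W, W ∈ P ∧ x ∈ W) {s : ℕ} (hsV : s ≤ finrank F V)
    (hdim : ∀ W ∈ P, finrank F W = 1 ∨ s ≤ finrank F W) :
    DivisibleSet (q ^ (s - 1)) {W ∈ P | finrank F W = 1} := by
  rw [divisibleSet_iff_dvd_card_not_le]
  intro H hH
  -- `IsHyperplane ⊤` holds in the zero space, by truncated subtraction.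
  by_cases hHtop : H = ⊤
  · simp [hHtop]
  have hcount := pow_finrank_sub_one_eq_sum_of_isHyperplane hP hH hHtop
  rw [← sum_filter_add_sum_filter_not _ fun W : Submodule F V => finrank F W = 1] at hcount
  have hpoints :
      ∑ W ∈ {W ∈ P | ¬ W ≤ H}.filter (fun W : Submodule F V => finrank F W = 1),
        q ^ (finrank F W - 1) = #{W ∈ {W ∈ P | finrank F W = 1} | ¬ W ≤ H} := by
    rw [card_eq_sum_ones, filter_comm]
    refine sum_congr rfl fun W hW => ?_
    simp only [mem_filter] at hW
    rw [hW.1.2, Nat.sub_self, pow_zero]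
  have hbig : q ^ (s - 1) ∣
      ∑ W ∈ {W ∈ P | ¬ W ≤ H}.filter (fun W : Submodule F V => ¬ finrank F W = 1),
        q ^ (finrank F W - 1) :=
    dvd_sum fun W hW => by
      obtain ⟨hWP, hW1⟩ := mem_filter.1 hW
      have hsW := (hdim W (mem_filter.1 hWP).1).resolve_left hW1
      exact pow_dvd_pow _ (by omega)
  rw [hpoints] at hcount
  exact (Nat.dvd_add_left hbig).1 (hcount ▸ pow_dvd_pow _ (by omega))

end FiniteField

theorem vsp_tail_divisible_general (F : Type) [Field F] [Fintype F] (q v s t : ℕ)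
    (hq : Fintype.card F = q) (hst : s ≤ t) (htv : t < v)
    (P : Finset (Submodule F (Fin v → F)))
    (hpart : ∀ x : Fin v → F, x ≠ 0 → ∃! W, W ∈ P ∧ x ∈ W)
    (hdim : ∀ W ∈ P, Module.finrank F ↥W = 1 ∨
      (s ≤ Module.finrank F ↥W ∧ Module.finrank F ↥W ≤ t)) :
    DivisibleSet (q ^ (s - 1)) (P.filter (fun W => Module.finrank F ↥W = 1)) := by
  subst hq
  exact divisibleSet_points_of_partition hpart (by rw [finrank_fin_fun]; omega)
    fun W hW => (hdim W hW).imp_right And.left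

/-- Lemma 3.1: in a vector space partition all of whose members have dimension 1 or
dimension between `s` and `t` (with `3 ≤ s ≤ t < v`), the 1-dimensional members form a
`q^(s-1)`-divisible set of points. -/
theorem vsp_tail_divisible (F : Type) [Field F] [Fintype F] (q v s t : ℕ)
    (hq : Fintype.card F = q) (hs : 3 ≤ s) (hst : s ≤ t) (htv : t < v)
    (P : Finset (Submodule F (Fin v → F)))
    (hnz : ∀ W ∈ P, W ≠ ⊥)
    (hpart : ∀ x : Fin v → F, x ≠ 0 → ∃! W, W ∈ P ∧ x ∈ W)
    (hdim : ∀ W ∈ P, Module.finrank F ↥W = 1 ∨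
      (s ≤ Module.finrank F ↥W ∧ Module.finrank F ↥W ≤ t)) :
    DivisibleSet (q ^ (s - 1)) (P.filter (fun W => Module.finrank F ↥W = 1)) :=
  vsp_tail_divisible_general F q v s t hq hst htv P hpart hdim
end

section
/- Let F be a finite field with q elements, let 2 ≤ t < v be integers, and let 𝒫 be a vector space partition of F^v such that every member of 𝒫 has dimension between 1 and t. Then the set of 1-dimensional members of 𝒫 is a q-divisible set of points of PG(v−1, q); that is, for every hyperplane H of F^v, the number of 1-dimensional members of 𝒫 contained in H is congruent modulo q to the total number of 1-dimensional members of 𝒫. -/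
open scoped Classical

/-
Counting the nonzero vectors of a subspace `S` through the partition gives
`q ^ dim S - 1 = ∑_{W ∈ 𝒫} (q ^ dim (S ⊓ W) - 1)`. Modulo `q` every term is `-1` or `0`
according as `S ⊓ W` is nonzero or not, so for `S ≠ 0` the number of members meeting `S`
nontrivially is `≡ 1 (mod q)`. Taking `S` to be the whole space and a hyperplane `H`, and noting
that a member of dimension at least two always meets `H` while a point meets `H` iff it lies
in `H`, the two congruences differ exactly by `|C| - |C ∩ H|`, where `C` is the set of points
of `𝒫`.
-/

open Finset Module

section VectorSpacePartition

variable {F V : Type} [Field F] [AddCommGroup V] [Module F V]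

def IsVectorSpacePartition (P : Finset (Submodule F V)) : Prop :=
  ∀ x : V, x ≠ 0 → ∃! W, W ∈ P ∧ x ∈ W

noncomputable def holes (P : Finset (Submodule F V)) : Finset (Submodule F V) :=
  P.filter fun W => finrank F W = 1

lemma Submodule.inf_eq_bot_iff_not_le_of_finrank_eq_one {H W : Submodule F V}
    (hW : finrank F W = 1) : H ⊓ W = ⊥ ↔ ¬ W ≤ H := by
  have : FiniteDimensional F W := Module.finite_of_finrank_eq_succ hW
  constructor
  · intro h hWH
    rw [inf_eq_right.mpr hWH] at h
    subst h
    simp at hW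
  · intro hWH
    have hlt : H ⊓ W < W := lt_of_le_of_ne inf_le_right fun h => hWH (h ▸ inf_le_left)
    have := Submodule.finrank_lt_finrank_of_lt hlt
    exact Submodule.finrank_eq_zero.mp (by omega)

lemma IsHyperplane.inf_eq_bot_iff_of_finrank_ne_one [FiniteDimensional F V]
    {H W : Submodule F V} (hH : IsHyperplane H) (hW : finrank F W ≠ 1) :
    H ⊓ W = ⊥ ↔ W = ⊥ := by
  refine ⟨fun h => ?_, fun h => h ▸ inf_bot_eq H⟩
  have hdim := Submodule.finrank_sup_add_finrank_inf_eq H W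
  have hsup := Submodule.finrank_le (H ⊔ W)
  have hW0 : finrank F W = 0 := by
    rw [h, finrank_bot] at hdim
    unfold IsHyperplane at hH
    omega
  exact Submodule.finrank_eq_zero.mp hW0

variable [Fintype V]

lemma Submodule.card_filter_mem_ne_zero [Fintype F] (S : Submodule F V) :
    #{x : V | x ∈ S ∧ x ≠ 0} = Fintype.card F ^ finrank F S - 1 := by
  have : #{x : V | x ∈ S ∧ x ≠ 0} = #(({x | x ∈ S} : Finset V).erase 0) := by
    congr 1
    ext x
    simp [and_comm]
  rw [this, Finset.card_erase_of_mem (by simp), ← Fintype.card_subtype, ← Module.card_eq_pow_finrank]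

lemma Submodule.natCast_card_filter_mem_ne_zero [Fintype F] (S : Submodule F V) :
    (#{x : V | x ∈ S ∧ x ≠ 0} : ZMod (Fintype.card F)) = if S = ⊥ then 0 else -1 := by
  rw [S.card_filter_mem_ne_zero, Nat.cast_sub (Nat.one_le_pow _ _ Fintype.card_pos),
    Nat.cast_pow, ZMod.natCast_self]
  split_ifs with hS
  · subst hS
    simp
  · rw [zero_pow (Submodule.finrank_eq_zero.not.mpr hS)]
    simp

namespace IsVectorSpacePartition

variable {P : Finset (Submodule F V)}

lemma card_filter_mem_ne_zero_eq_sum (hP : IsVectorSpacePartition P) (S : Submodule F V) :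
    #{x : V | x ∈ S ∧ x ≠ 0} = ∑ W ∈ P, #{x : V | x ∈ S ⊓ W ∧ x ≠ 0} := by
  rw [← Finset.card_biUnion]
  · congr 1
    ext x
    simp only [Finset.mem_biUnion, Finset.mem_filter, Finset.mem_univ, true_and,
      Submodule.mem_inf]
    constructor
    · rintro ⟨hxS, hx0⟩
      obtain ⟨W, ⟨hW, hxW⟩, -⟩ := hP x hx0
      exact ⟨W, hW, ⟨hxS, hxW⟩, hx0⟩
    · rintro ⟨W, -, ⟨hxS, -⟩, hx0⟩
      exact ⟨hxS, hx0⟩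
  · intro W₁ hW₁ W₂ hW₂ hne
    refine Finset.disjoint_left.mpr fun x hx₁ hx₂ => hne ?_
    simp only [Finset.mem_filter, Finset.mem_univ, true_and, Submodule.mem_inf] at hx₁ hx₂
    exact (hP x hx₁.2).unique ⟨hW₁, hx₁.1.2⟩ ⟨hW₂, hx₂.1.2⟩

lemma natCast_card_filter_inf_ne_bot [Fintype F] (hP : IsVectorSpacePartition P)
    {S : Submodule F V} (hS : S ≠ ⊥) :
    (#{W ∈ P | S ⊓ W ≠ ⊥} : ZMod (Fintype.card F)) = 1 := by
  have h := congrArg (Nat.cast : ℕ → ZMod (Fintype.card F)) (hP.card_filter_mem_ne_zero_eq_sum S)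
  simp only [Nat.cast_sum, Submodule.natCast_card_filter_mem_ne_zero, if_neg hS,
    Finset.sum_ite, Finset.sum_const_zero, Finset.sum_const, nsmul_eq_mul, mul_neg_one,
    zero_add] at h
  exact neg_inj.mp h.symm

lemma interCard_holes_modEq_card [Fintype F] (hP : IsVectorSpacePartition P)
    {H : Submodule F V} (hH : IsHyperplane H) (hH0 : H ≠ ⊥) :
    interCard (holes P) H ≡ #(holes P) [MOD Fintype.card F] := by
  have hmeet_holes : #{W ∈ P | H ⊓ W ≠ ⊥ ∧ finrank F W = 1} = interCard (holes P) H := by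
    rw [interCard, holes, Finset.filter_filter]
    refine congrArg _ (Finset.filter_congr fun W _ => ?_)
    by_cases hW : finrank F W = 1 <;>
      simp [hW, Submodule.inf_eq_bot_iff_not_le_of_finrank_eq_one]
  have hmeet_large : #{W ∈ P | H ⊓ W ≠ ⊥ ∧ finrank F W ≠ 1}
      = #{W ∈ P | W ≠ (⊥ : Submodule F V) ∧ finrank F W ≠ 1} :=
    congrArg _ (Finset.filter_congr fun W _ => by
      by_cases hW : finrank F W = 1 <;> simp [hW, hH.inf_eq_bot_iff_of_finrank_ne_one])
  have hholes_ne_bot : #{W ∈ P | W ≠ (⊥ : Submodule F V) ∧ finrank F W = 1} = #(holes P) := by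
    refine congrArg _ (Finset.filter_congr fun W _ => and_iff_right_of_imp fun hW hW0 => ?_)
    subst hW0
    simp at hW
  have hmod_H := hP.natCast_card_filter_inf_ne_bot hH0
  have hmod_top := hP.natCast_card_filter_inf_ne_bot (ne_bot_of_le_ne_bot hH0 le_top)
  simp only [top_inf_eq] at hmod_top
  rw [← Finset.card_filter_add_card_filter_not (fun W : Submodule F V => finrank F W = 1),
    Finset.filter_filter, Finset.filter_filter] at hmod_H hmod_top
  rw [hmeet_holes, hmeet_large] at hmod_H
  rw [hholes_ne_bot] at hmod_top
  rw [← ZMod.natCast_eq_natCast_iff]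
  push_cast at hmod_H hmod_top
  linear_combination hmod_H - hmod_top

theorem divisibleSet_holes [Fintype F] (hP : IsVectorSpacePartition P)
    (hV : 2 ≤ finrank F V) : DivisibleSet (Fintype.card F) (holes P) := by
  intro H hH
  refine hP.interCard_holes_modEq_card hH fun hH0 => ?_
  rw [IsHyperplane, hH0, finrank_bot] at hH
  omega

end IsVectorSpacePartition

end VectorSpacePartition

theorem vsp_holes_q_divisible_general (F : Type) [Field F] [Fintype F] (q v t : ℕ)
    (hq : Fintype.card F = q) (ht : 2 ≤ t) (htv : t < v)
    (P : Finset (Submodule F (Fin v → F)))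
    (hpart : ∀ x : Fin v → F, x ≠ 0 → ∃! W, W ∈ P ∧ x ∈ W) :
    DivisibleSet q (P.filter (fun W => Module.finrank F ↥W = 1)) := by
  subst hq
  exact IsVectorSpacePartition.divisibleSet_holes hpart (by rw [finrank_fin_fun]; omega)

/-- Lemma 3.2: in a vector space partition all of whose members have dimension between
1 and `t` (with `2 ≤ t < v`), the 1-dimensional members form a `q`-divisible set of
points. -/
theorem vsp_holes_q_divisible (F : Type) [Field F] [Fintype F] (q v t : ℕ)
    (hq : Fintype.card F = q) (ht : 2 ≤ t) (htv : t < v)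
    (P : Finset (Submodule F (Fin v → F)))
    (hnz : ∀ W ∈ P, W ≠ ⊥)
    (hpart : ∀ x : Fin v → F, x ≠ 0 → ∃! W, W ∈ P ∧ x ∈ W)
    (hdim : ∀ W ∈ P, 1 ≤ Module.finrank F ↥W ∧ Module.finrank F ↥W ≤ t) :
    DivisibleSet q (P.filter (fun W => Module.finrank F ↥W = 1)) :=
  vsp_holes_q_divisible_general F q v t hq ht htv P hpart
end

section
/- Let F be a finite field with q elements, let r ≥ 1, let v̄ ≥ 2, and let C̄ be a nonempty q^r-divisible set of points of PG(v̄−1, q) with |C̄| = n̄. Identify F^{v̄+1} with F^{v̄} × F, let P be the point of F^{v̄+1} spanned by (0, 1), and let C be the set of all points of F^{v̄+1} that are contained in span(Q̄ × {0} ∪ P) for some Q̄ ∈ C̄ (i.e., the union of the point sets of the lines joining P to the embedded points of C̄, including P itself). Then |C| = 1 + q·n̄, and C is a q^{r+1}-divisible set of points of F^{v̄+1} if and only if (q − 1)·n̄ ≡ −1 (mod q^{r+1}). -/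
open scoped Classical

/-!
Projection from the apex `P` maps the points of the cone other than `P` onto `C̄`, and the
fibre over a point of `C̄` is the line joining it to `P` minus `P`: `q` points. A hyperplane `H`
through `P` is the preimage of a hyperplane `H̄` of the base, so it meets the cone in
`1 + q·|C̄ ∩ H̄| ≡ 1 + q·n̄ (mod q^(r+1))` points by `q^r`-divisibility of `C̄`. A hyperplane
avoiding `P` meets each line through `P` in exactly one point, hence the cone in `n̄` points.
So the cone is `q^(r+1)`-divisible iff `n̄ ≡ 1 + q·n̄ (mod q^(r+1))`.
-/

open Module Finset

section LinearAlgebra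

variable {F : Type} [Field F] {W V : Type} [AddCommGroup W] [Module F W] [AddCommGroup V]
  [Module F V]

theorem Submodule.finrank_map_add_finrank_inf_ker (π : W →ₗ[F] V) (X : Submodule F W)
    [FiniteDimensional F X] :
    finrank F (X.map π) + finrank F ↥(X ⊓ LinearMap.ker π) = finrank F X := by
  have h := LinearMap.finrank_range_add_finrank_ker (π.domRestrict X)
  rwa [LinearMap.range_domRestrict, LinearMap.ker_domRestrict,
    ← Submodule.finrank_map_subtype_eq, Submodule.map_comap_subtype] at h

theorem Submodule.inf_eq_bot_of_finrank_eq_one_of_not_le {P X : Submodule F W}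
    (hP : finrank F P = 1) (hPX : ¬ P ≤ X) : P ⊓ X = ⊥ :=
  disjoint_iff.mp ((Submodule.isAtom_iff_finrank_eq_one.mpr hP).not_le_iff_disjoint.mp hPX)

theorem Submodule.finrank_map_eq_one {π : W →ₗ[F] V} {Q : Submodule F W}
    (hQ : finrank F Q = 1) (hP : finrank F (LinearMap.ker π) = 1) (hQP : Q ≠ LinearMap.ker π) :
    finrank F (Q.map π) = 1 := by
  have : FiniteDimensional F Q := Module.finite_of_finrank_eq_succ hQ
  have hdisj : Q ⊓ LinearMap.ker π = ⊥ :=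
    disjoint_iff.mp ((Submodule.isAtom_iff_finrank_eq_one.mpr hQ).disjoint_of_ne
      (Submodule.isAtom_iff_finrank_eq_one.mpr hP) hQP)
  have h := Submodule.finrank_map_add_finrank_inf_ker π Q
  rwa [hdisj, finrank_bot, add_zero, hQ] at h

theorem finrank_eq_add_one_of_surjective [FiniteDimensional F W] {π : W →ₗ[F] V}
    (hπ : Function.Surjective π) (hP : finrank F (LinearMap.ker π) = 1) :
    finrank F W = finrank F V + 1 := by
  have h := Submodule.finrank_map_add_finrank_inf_ker π ⊤
  rw [Submodule.map_top, LinearMap.range_eq_top.mpr hπ, top_inf_eq, hP, finrank_top,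
    finrank_top] at h
  exact h.symm

theorem exists_isHyperplane_not_le [FiniteDimensional F W] {P : Submodule F W}
    (hP : finrank F P = 1) : ∃ H : Submodule F W, IsHyperplane H ∧ ¬ P ≤ H := by
  obtain ⟨H, hPH⟩ := exists_isCompl P
  refine ⟨H, ?_, fun hle => ?_⟩
  · have h := Submodule.finrank_add_eq_of_isCompl hPH
    unfold IsHyperplane
    omega
  · rw [hPH.disjoint.eq_bot_of_le hle, finrank_bot] at hP
    exact zero_ne_one hP

end LinearAlgebra

section Cone

variable {F : Type} [Field F] {W V : Type} [AddCommGroup W] [Module F W] [Finite W]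
  [AddCommGroup V] [Module F V] {π : W →ₗ[F] V}

theorem card_points_le_eq_card_projectivization (L : Submodule F W) :
    #{Q : Submodule F W | finrank F Q = 1 ∧ Q ≤ L} = Nat.card (Projectivization F L) := by
  rw [Nat.card_congr (Projectivization.equivSubmodule F L), Nat.card_eq_fintype_card,
    Fintype.card_subtype]
  symm
  apply Finset.card_nbij' (Submodule.map L.subtype) (Submodule.comap L.subtype)
  · intro Q hQ
    simp only [mem_coe, mem_filter, mem_univ, true_and] at hQ ⊢
    exact ⟨by rw [Submodule.finrank_map_subtype_eq, hQ], Submodule.map_subtype_le L Q⟩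
  · intro Q hQ
    simp only [mem_coe, mem_filter, mem_univ, true_and] at hQ ⊢
    rw [← Submodule.finrank_map_subtype_eq, Submodule.map_comap_subtype, inf_eq_right.mpr hQ.2,
      hQ.1]
  · intro Q _
    exact Submodule.comap_map_eq_of_injective L.injective_subtype Q
  · intro Q hQ
    simp only [mem_coe, mem_filter, mem_univ, true_and] at hQ
    rw [Submodule.map_comap_subtype, inf_eq_right.mpr hQ.2]

theorem card_points_map_eq [Fintype F] (hπ : Function.Surjective π)
    (hP : finrank F (LinearMap.ker π) = 1) {Qb : Submodule F V} (hQb : finrank F Qb = 1) :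
    #{Q : Submodule F W | finrank F Q = 1 ∧ Q.map π = Qb} = Fintype.card F := by
  have : FiniteDimensional F Qb := Module.finite_of_finrank_eq_succ hQb
  have hplane : finrank F (Qb.comap π) = 2 := by
    have h := Submodule.finrank_map_add_finrank_inf_ker π (Qb.comap π)
    rw [Submodule.map_comap_eq_of_surjective hπ, inf_eq_right.mpr (LinearMap.ker_le_comap π),
      hQb, hP] at h
    exact h.symm
  have hfiber : ({Q : Submodule F W | finrank F Q = 1 ∧ Q.map π = Qb} : Finset _) =
      ({Q : Submodule F W | finrank F Q = 1 ∧ Q ≤ Qb.comap π} : Finset _).erase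
        (LinearMap.ker π) := by
    ext Q
    simp only [mem_erase, mem_filter, mem_univ, true_and, ← Submodule.map_le_iff_le_comap]
    constructor
    · rintro ⟨hQ, rfl⟩
      refine ⟨fun hQP => ?_, hQ, le_rfl⟩
      rw [hQP, LinearMap.le_ker_iff_map.mp le_rfl, finrank_bot] at hQb
      exact zero_ne_one hQb
    · rintro ⟨hQP, hQ, hle⟩
      exact ⟨hQ, Submodule.eq_of_le_of_finrank_eq hle
        ((Submodule.finrank_map_eq_one hQ hP hQP).trans hQb.symm)⟩
  rw [hfiber, card_erase_of_mem, card_points_le_eq_card_projectivization,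
    Projectivization.card_of_finrank_two F _ hplane, Nat.card_eq_fintype_card, Nat.add_sub_cancel]
  exact mem_filter.mpr ⟨mem_univ _, hP, LinearMap.ker_le_comap π⟩

variable (π) in
/-- For `π = fst : V × F → V` the apex `ker π` is `⟨(0, 1)⟩` and this is the cone of the
statement (`cone_eq_filter`, `map_inl_sup_span_zero_one`). -/
noncomputable def cone (S : Finset (Submodule F V)) : Finset (Submodule F W) :=
  insert (LinearMap.ker π) ({Q : Submodule F W | finrank F Q = 1 ∧ Q.map π ∈ S} : Finset _)

theorem card_cone [Fintype F] (hπ : Function.Surjective π) (hP : finrank F (LinearMap.ker π) = 1)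
    {S : Finset (Submodule F V)} (hS : IsPointSet S) :
    #(cone π S) = 1 + Fintype.card F * #S := by
  rw [cone, card_insert_of_notMem, add_comm, card_eq_sum_card_fiberwise (f := Submodule.map π)
    (t := S) (fun Q hQ => (mem_filter.mp hQ).2.2)]
  · have hfiber : ∀ Qb ∈ S, #{Q ∈ {Q : Submodule F W | finrank F Q = 1 ∧ Q.map π ∈ S} |
        Q.map π = Qb} = Fintype.card F := fun Qb hQb => by
      rw [filter_filter, ← card_points_map_eq hπ hP (hS Qb hQb)]
      exact congrArg card (filter_congr fun Q _ =>
        ⟨fun h => ⟨h.1.1, h.2⟩, fun h => ⟨⟨h.1, h.2 ▸ hQb⟩, h.2⟩⟩)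
    rw [sum_congr rfl hfiber, sum_const, smul_eq_mul, mul_comm]
  · intro hmem
    have h := hS _ (mem_filter.mp hmem).2.2
    rw [LinearMap.le_ker_iff_map.mp le_rfl, finrank_bot] at h
    exact zero_ne_one h

theorem filter_cone_le_of_ker_le {S : Finset (Submodule F V)} {H : Submodule F W}
    (hPH : LinearMap.ker π ≤ H) :
    {Q ∈ cone π S | Q ≤ H} = cone π {Qb ∈ S | Qb ≤ H.map π} := by
  ext Q
  simp only [cone, mem_filter, mem_insert, mem_univ, true_and]
  constructor
  · rintro ⟨rfl | ⟨hQ, hQS⟩, hQH⟩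
    · exact Or.inl rfl
    · exact Or.inr ⟨hQ, hQS, Submodule.map_mono hQH⟩
  · rintro (rfl | ⟨hQ, hQS, hQH⟩)
    · exact ⟨Or.inl rfl, hPH⟩
    · refine ⟨Or.inr ⟨hQ, hQS⟩, ?_⟩
      rw [← Submodule.comap_map_eq_self hPH]
      exact Submodule.map_le_iff_le_comap.mp hQH

theorem isHyperplane_map_of_ker_le (hπ : Function.Surjective π)
    (hP : finrank F (LinearMap.ker π) = 1) {H : Submodule F W} (hH : IsHyperplane H)
    (hPH : LinearMap.ker π ≤ H) : IsHyperplane (H.map π) := by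
  have h := Submodule.finrank_map_add_finrank_inf_ker π H
  rw [inf_eq_right.mpr hPH, hP] at h
  have hW := finrank_eq_add_one_of_surjective hπ hP
  unfold IsHyperplane at hH ⊢
  omega

theorem interCard_cone_of_ker_le [Fintype F] (hπ : Function.Surjective π)
    (hP : finrank F (LinearMap.ker π) = 1) {S : Finset (Submodule F V)} (hS : IsPointSet S)
    {H : Submodule F W} (hPH : LinearMap.ker π ≤ H) :
    interCard (cone π S) H = 1 + Fintype.card F * interCard S (H.map π) := by
  rw [interCard, filter_cone_le_of_ker_le hPH,
    card_cone hπ hP fun Qb hQb => hS Qb (mem_filter.mp hQb).1, interCard]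

theorem interCard_cone_of_not_ker_le (hπ : Function.Surjective π)
    (hP : finrank F (LinearMap.ker π) = 1) {S : Finset (Submodule F V)} (hS : IsPointSet S)
    {H : Submodule F W} (hH : IsHyperplane H) (hPH : ¬ LinearMap.ker π ≤ H) :
    interCard (cone π S) H = #S := by
  have hdisj : LinearMap.ker π ⊓ H = ⊥ := Submodule.inf_eq_bot_of_finrank_eq_one_of_not_le hP hPH
  have hmapH : H.map π = ⊤ := by
    have h := Submodule.finrank_map_add_finrank_inf_ker π H
    rw [inf_comm, hdisj, finrank_bot, add_zero] at h
    have hW := finrank_eq_add_one_of_surjective hπ hP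
    have : FiniteDimensional F V := Module.Finite.of_surjective π hπ
    unfold IsHyperplane at hH
    exact Submodule.eq_top_of_finrank_eq (by omega)
  have hsection : ∀ Qb : Submodule F V, (H ⊓ Qb.comap π).map π = Qb := fun Qb => by
    rw [← Submodule.map_inf_eq_map_inf_comap, hmapH, top_inf_eq]
  have hpoint : ∀ Qb ∈ S, finrank F ↥(H ⊓ Qb.comap π) = 1 := fun Qb hQb => by
    have h := Submodule.finrank_map_add_finrank_inf_ker π (H ⊓ Qb.comap π)
    rwa [hsection, hS Qb hQb, inf_comm, ← inf_assoc, hdisj, bot_inf_eq, finrank_bot,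
      add_zero, eq_comm] at h
  -- Each line `Qb.comap π` through the apex meets `H` in exactly one point.
  symm
  apply card_nbij' (fun Qb => H ⊓ Qb.comap π) (Submodule.map π)
  · intro Qb hQb
    simp only [cone, mem_coe, mem_insert, mem_filter, mem_univ, true_and]
    exact ⟨Or.inr ⟨hpoint Qb hQb, (hsection Qb).symm ▸ hQb⟩, inf_le_left⟩
  · intro Q hQ
    simp only [cone, mem_coe, mem_insert, mem_filter, mem_univ, true_and] at hQ
    obtain ⟨rfl | ⟨-, hQS⟩, hQH⟩ := hQ
    · exact absurd hQH hPH
    · exact hQS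
  · intro Qb _
    exact hsection Qb
  · intro Q hQ
    simp only [cone, mem_coe, mem_insert, mem_filter, mem_univ, true_and] at hQ
    change H ⊓ (Q.map π).comap π = Q
    rw [Submodule.comap_map_eq, inf_comm, sup_inf_assoc_of_le _ hQ.2, hdisj,
      sup_bot_eq]

theorem divisibleSet_cone_iff [Fintype F] (hπ : Function.Surjective π)
    (hP : finrank F (LinearMap.ker π) = 1) {S : Finset (Submodule F V)} (hS : IsPointSet S)
    {Δ : ℕ} (hdiv : DivisibleSet Δ S) :
    DivisibleSet (Fintype.card F * Δ) (cone π S) ↔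
      #S ≡ 1 + Fintype.card F * #S [MOD Fintype.card F * Δ] := by
  rw [DivisibleSet, card_cone hπ hP hS]
  constructor
  · intro h
    obtain ⟨H, hH, hPH⟩ := exists_isHyperplane_not_le hP
    simpa only [interCard_cone_of_not_ker_le hπ hP hS hH hPH] using h H hH
  · intro h H hH
    by_cases hPH : LinearMap.ker π ≤ H
    · rw [interCard_cone_of_ker_le hπ hP hS hPH]
      exact ((hdiv _ (isHyperplane_map_of_ker_le hπ hP hH hPH)).mul_left' _).add_left 1
    · rw [interCard_cone_of_not_ker_le hπ hP hS hH hPH]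
      exact h

theorem cone_eq_filter (hP : finrank F (LinearMap.ker π) = 1) {S : Finset (Submodule F V)}
    (hS : IsPointSet S) (hne : S.Nonempty) :
    cone π S =
      ({Q : Submodule F W | finrank F Q = 1 ∧ ∃ Qb ∈ S, Q ≤ Qb.comap π} : Finset _) := by
  ext Q
  simp only [cone, mem_insert, mem_filter, mem_univ, true_and]
  constructor
  · rintro (rfl | ⟨hQ, hQS⟩)
    · obtain ⟨Qb, hQb⟩ := hne
      exact ⟨hP, Qb, hQb, LinearMap.ker_le_comap π⟩
    · exact ⟨hQ, _, hQS, Submodule.le_comap_map π Q⟩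
  · rintro ⟨hQ, Qb, hQb, hle⟩
    by_cases hQP : Q = LinearMap.ker π
    · exact Or.inl hQP
    · have : FiniteDimensional F Qb := Module.finite_of_finrank_eq_succ (hS Qb hQb)
      refine Or.inr ⟨hQ, ?_⟩
      rwa [Submodule.eq_of_le_of_finrank_eq (Submodule.map_le_iff_le_comap.mpr hle)
        ((Submodule.finrank_map_eq_one hQ hP hQP).trans (hS Qb hQb).symm)]

end Cone

section Product

variable {F : Type} [Field F] {V : Type} [AddCommGroup V] [Module F V]

theorem ker_fst_eq_span_zero_one :
    LinearMap.ker (LinearMap.fst F V F) = Submodule.span F {((0 : V), (1 : F))} := by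
  ext ⟨x, c⟩
  simp [Submodule.mem_span_singleton, Prod.ext_iff, eq_comm]

theorem finrank_ker_fst : finrank F (LinearMap.ker (LinearMap.fst F V F)) = 1 := by
  rw [ker_fst_eq_span_zero_one]
  exact finrank_span_singleton (by simp)

theorem map_inl_sup_span_zero_one (Qb : Submodule F V) :
    Qb.map (LinearMap.inl F V F) ⊔ Submodule.span F {((0 : V), (1 : F))} =
      Qb.comap (LinearMap.fst F V F) := by
  rw [← ker_fst_eq_span_zero_one, ← LinearMap.range_inr, LinearMap.range_eq_map,
    Submodule.map_inl, Submodule.map_inr, Submodule.prod_sup_prod, Submodule.comap_fst,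
    sup_bot_eq, bot_sup_eq]

end Product

theorem Nat.modEq_one_add_mul_self_iff (m q n : ℕ) :
    n ≡ 1 + q * n [MOD m] ↔ ((q : ℤ) - 1) * n ≡ -1 [ZMOD m] := by
  rw [← Int.natCast_modEq_iff, Int.modEq_iff_dvd, Int.modEq_iff_dvd]
  push_cast
  rw [show (-1 : ℤ) - (q - 1) * n = -(1 + q * n - n) by ring, dvd_neg]

theorem cone_construction_general (F : Type) [Field F] [Fintype F] (q r vb nb : ℕ)
    (hq : Fintype.card F = q)
    (Cb : Finset (Submodule F (Fin vb → F))) (hpts : IsPointSet Cb) (hne : Cb.Nonempty)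
    (hdiv : DivisibleSet (q ^ r) Cb) (hn : Cb.card = nb)
    (C : Finset (Submodule F ((Fin vb → F) × F)))
    (hC : C = Finset.univ.filter (fun Q : Submodule F ((Fin vb → F) × F) =>
        Module.finrank F ↥Q = 1 ∧ ∃ Qb ∈ Cb,
          Q ≤ Submodule.map (LinearMap.inl F (Fin vb → F) F) Qb ⊔
              Submodule.span F {((0 : Fin vb → F), (1 : F))})) :
    C.card = 1 + q * nb ∧
    (DivisibleSet (q ^ (r + 1)) C ↔
      ((q : ℤ) - 1) * (nb : ℤ) ≡ -1 [ZMOD (q : ℤ) ^ (r + 1)]) := by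
  subst hq hn
  have hπ : Function.Surjective (LinearMap.fst F (Fin vb → F) F) := LinearMap.fst_surjective
  have hP : finrank F (LinearMap.ker (LinearMap.fst F (Fin vb → F) F)) = 1 := finrank_ker_fst
  have hC_cone : C = cone (LinearMap.fst F (Fin vb → F) F) Cb := by
    rw [hC, cone_eq_filter hP hpts hne]
    exact filter_congr fun Q _ => by simp only [map_inl_sup_span_zero_one]
  have hdivC := divisibleSet_cone_iff hπ hP hpts hdiv
  rw [← pow_succ'] at hdivC
  rw [hC_cone, card_cone hπ hP hpts, hdivC, Nat.modEq_one_add_mul_self_iff]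
  exact ⟨rfl, by push_cast; rfl⟩

/-- Example 4.4 (cone construction): `C` is the set of points on the lines joining the
point `P = ⟨(0,1)⟩` of `F^(v̄+1) = F^v̄ × F` to the embedded points of a nonempty
`q^r`-divisible set `C̄` with `|C̄| = n̄`.  Then `|C| = 1 + q·n̄`, and `C` is
`q^(r+1)`-divisible iff `(q-1)·n̄ ≡ -1 (mod q^(r+1))`. -/
theorem cone_construction (F : Type) [Field F] [Fintype F] (q r vb nb : ℕ)
    (hq : Fintype.card F = q) (hr : 1 ≤ r) (hv : 2 ≤ vb)
    (Cb : Finset (Submodule F (Fin vb → F))) (hpts : IsPointSet Cb) (hne : Cb.Nonempty)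
    (hdiv : DivisibleSet (q ^ r) Cb) (hn : Cb.card = nb)
    (C : Finset (Submodule F ((Fin vb → F) × F)))
    (hC : C = Finset.univ.filter (fun Q : Submodule F ((Fin vb → F) × F) =>
        Module.finrank F ↥Q = 1 ∧ ∃ Qb ∈ Cb,
          Q ≤ Submodule.map (LinearMap.inl F (Fin vb → F) F) Qb ⊔
              Submodule.span F {((0 : Fin vb → F), (1 : F))})) :
    C.card = 1 + q * nb ∧
    (DivisibleSet (q ^ (r + 1)) C ↔
      ((q : ℤ) - 1) * (nb : ℤ) ≡ -1 [ZMOD (q : ℤ) ^ (r + 1)]) :=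
  cone_construction_general F q r vb nb hq Cb hpts hne hdiv hn C hC
end

section
/- Let F be a finite field with q elements. Then there exist an integer v ≥ 2 and a q²-divisible set C of points of PG(v−1, q) with |C| = 3q³ − q² − q − 1 such that the dimension k of the F-linear span of the union of the points of C satisfies max{8, q+5} ≤ k ≤ max{8, 2q+3}. -/
open scoped Classical

/-!
Take `q` cosets `y + D` of a 2-dimensional subspace `D`. A hyperplane `H` either contains `D`,
and then contains or misses each coset, or meets every coset in exactly `q` vectors; either way
`q²` divides the number of the `q³` vectors of the cosets that lie in `H`. Three such families
whose `3q³` vectors are pairwise non-proportional give a `q²`-divisible set of `3q³` points. It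
contains the `q² + q + 1` points of a plane, which are `q²`-divisible as well, so removing them
leaves a `q²`-divisible set of `3q³ - q² - q - 1` points. Anchoring the first family at `q`
independent vectors makes the span `(q + 6)`-dimensional.
-/

open Finset Module Submodule

section LeadingOne

variable {F : Type} [Field F]

def IsLeadingOne {n : ℕ} (f : Fin n → F) : Prop :=
  ∃ i, (∀ j < i, f j = 0) ∧ f i = 1

theorem IsLeadingOne.ne_zero {n : ℕ} {f : Fin n → F} (hf : IsLeadingOne f) : f ≠ 0 := by
  rintro rfl
  obtain ⟨i, -, hi⟩ := hf
  exact zero_ne_one hi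

theorem IsLeadingOne.eq_one_of_smul {n : ℕ} {f : Fin n → F} {c : F} (hf : IsLeadingOne f)
    (hcf : IsLeadingOne (c • f)) : c = 1 := by
  obtain ⟨i, hi0, hi1⟩ := hf
  obtain ⟨j, hj0, hj1⟩ := hcf
  simp only [Pi.smul_apply, smul_eq_mul] at hj0 hj1
  rcases lt_trichotomy i j with hij | rfl | hji
  · have hc : c = 0 := by simpa [hi1] using hj0 i hij
    simp [hc] at hj1
  · simpa [hi1] using hj1
  · simp [hi0 j hji] at hj1

theorem injOn_span_singleton_of_isLeadingOne {M : Type} [AddCommGroup M] [Module F M] {n : ℕ}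
    (Ψ : M →ₗ[F] Fin n → F) : Set.InjOn (fun u => F ∙ u) {u | IsLeadingOne (Ψ u)} := by
  intro u hu u' hu' h
  obtain ⟨c, rfl⟩ := span_singleton_eq_span_singleton.mp h
  have hc : (c : F) = 1 := hu.eq_one_of_smul (by simpa [Units.smul_def] using hu')
  simp [Units.smul_def, hc]

end LeadingOne

section Cosets

variable {F : Type} [Field F] {M : Type} [AddCommGroup M] [Module F M]
  {W : Type} [AddCommGroup W] [Module F W] [Fintype W]

theorem IsHyperplane.finrank_quotient_le_one [FiniteDimensional F M] {H : Submodule F M}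
    (hH : IsHyperplane H) : finrank F (M ⧸ H) ≤ 1 := by
  have := H.finrank_quotient_add_finrank
  unfold IsHyperplane at hH
  omega

theorem LinearMap.card_filter_apply_eq {Q : Type} [AddCommGroup Q] [Module F Q] (g : W →ₗ[F] Q)
    (w₀ : W) : #{w | g w = g w₀} = #{w | g w = 0} :=
  card_nbij' (· - w₀) (· + w₀) (fun w hw => by simp_all) (fun w hw => by simp_all)
    (fun w _ => by simp) (fun w _ => by simp)

theorem LinearMap.card_eq_card_mul_card_filter_eq_zero [Fintype F] {Q : Type} [AddCommGroup Q]
    [Module F Q] (g : W →ₗ[F] Q) (hg : Function.Surjective g) (hQ : finrank F Q = 1) :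
    Fintype.card W = Fintype.card F * #{w | g w = 0} := by
  have hker : Nat.card (LinearMap.ker g) = #{w | g w = 0} := by
    simp [Nat.card_eq_fintype_card, Fintype.card_subtype]
  have : Module.Finite F Q := Module.finite_of_finrank_eq_succ (R := F) hQ
  rw [← Nat.card_eq_fintype_card, (LinearMap.ker g).card_eq_card_quotient_mul_card,
    Nat.card_congr (g.quotKerEquivOfSurjective hg).toEquiv, hker,
    natCard_eq_pow_finrank (K := F), hQ, pow_one, Nat.card_eq_fintype_card, mul_comm]

theorem card_dvd_card_filter_add_mem [Fintype F] [FiniteDimensional F M] {H : Submodule F M}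
    (hH : IsHyperplane H) {ι : Type} [Fintype ι] (hι : Fintype.card F ∣ Fintype.card ι)
    (y : ι → M) (L : W →ₗ[F] M) :
    Fintype.card W ∣ #{p : ι × W | y p.1 + L p.2 ∈ H} := by
  set g := H.mkQ ∘ₗ L
  have hmem : ∀ s w, y s + L w ∈ H ↔ g w = -H.mkQ (y s) := fun s w => by
    rw [eq_neg_iff_add_eq_zero, add_comm, ← Submodule.Quotient.mk_eq_zero H]
    simp [g]
  have hsum : #{p : ι × W | y p.1 + L p.2 ∈ H} = ∑ s, #{w | g w = -H.mkQ (y s)} := by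
    simp only [card_filter, Fintype.sum_prod_type, hmem]
  rw [hsum]
  by_cases hg : g = 0
  · refine dvd_sum fun s _ => ?_
    by_cases hs : y s ∈ H <;> simp [hg, hs, eq_comm (a := (0 : M ⧸ H))]
  have hrange : 1 ≤ finrank F (LinearMap.range g) :=
    one_le_finrank_iff.mpr (LinearMap.range_eq_bot.not.mpr hg)
  have hQ : finrank F (M ⧸ H) = 1 :=
    le_antisymm hH.finrank_quotient_le_one (hrange.trans (finrank_le _))
  have hsurj : Function.Surjective g := LinearMap.range_eq_top.mp <|
    eq_top_of_finrank_eq (le_antisymm (finrank_le _) (hQ ▸ hrange))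
  have hfiber : ∀ c, #{w | g w = c} = #{w | g w = 0} := fun c => by
    obtain ⟨w₀, rfl⟩ := hsurj c
    exact g.card_filter_apply_eq w₀
  simp only [hfiber, sum_const, card_univ, smul_eq_mul,
    g.card_eq_card_mul_card_filter_eq_zero hsurj hQ]
  exact mul_dvd_mul_right hι _

end Cosets

section PointSets

variable {F : Type} [Field F] {M : Type} [AddCommGroup M] [Module F M]

theorem DivisibleSet.sdiff {Δ : ℕ} {C D : Finset (Submodule F M)} (hC : DivisibleSet Δ C)
    (hD : DivisibleSet Δ D) (hDC : D ⊆ C) : DivisibleSet Δ (C \ D) := by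
  intro H hH
  have hinter : interCard (C \ D) H + interCard D H = interCard C H := by
    have : (C \ D).filter (· ≤ H) = C.filter (· ≤ H) \ D.filter (· ≤ H) := by
      ext P
      simp only [mem_filter, mem_sdiff]
      tauto
    rw [interCard, interCard, interCard, this,
      card_sdiff_add_card_eq_card (filter_subset_filter _ hDC)]
  refine Nat.ModEq.add_right_cancel (hD H hH) ?_
  rw [hinter, card_sdiff_add_card_eq_card hDC]
  exact hC H hH

theorem span_singleton_eq_of_finrank_eq_one [FiniteDimensional F M] {P : Submodule F M}
    (hP : finrank F P = 1) {v : M} (hv : v ∈ P) (hv0 : v ≠ 0) : F ∙ v = P :=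
  eq_of_le_of_finrank_eq ((span_singleton_le_iff_mem _ _).mpr hv)
    (by rw [finrank_span_singleton hv0, hP])

variable {ι : Type} [Fintype ι] {v : ι → M}

theorem interCard_image_span_singleton (hv : Function.Injective fun i => F ∙ v i)
    (S : Submodule F M) : interCard (univ.image fun i => F ∙ v i) S = #{i | v i ∈ S} := by
  rw [interCard, filter_image, card_image_of_injective _ hv]
  simp only [span_singleton_le_iff_mem]

theorem isPointSet_image_span_singleton (hv : ∀ i, v i ≠ 0) :
    IsPointSet (univ.image fun i => F ∙ v i) := by
  intro P hP
  obtain ⟨i, -, rfl⟩ := mem_image.mp hP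
  exact finrank_span_singleton (hv i)

end PointSets

section Points

variable {F : Type} [Field F] {M : Type} [AddCommGroup M] [Module F M] [Finite M]

noncomputable def pointsIn (U : Submodule F M) : Finset (Submodule F M) :=
  {P | finrank F P = 1 ∧ P ≤ U}

theorem interCard_pointsIn (U S : Submodule F M) :
    interCard (pointsIn U) S = #(pointsIn (U ⊓ S)) := by
  simp only [interCard, pointsIn, filter_filter, le_inf_iff, and_assoc]

theorem card_pointsIn (U : Submodule F M) : #(pointsIn U) = Nat.card (Projectivization F U) := by
  let e : Projectivization F U ≃ {P : Submodule F M // finrank F P = 1 ∧ P ≤ U} :=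
    (Projectivization.equivSubmodule F U).trans <|
      ((MapSubtype.orderIso U).toEquiv.subtypeEquiv fun P => by
        show _ ↔ finrank F (map U.subtype P) = 1
        rw [finrank_map_subtype_eq]).trans <|
      (Equiv.subtypeSubtypeEquivSubtypeInter (· ≤ U) (finrank F · = 1)).trans <|
      Equiv.subtypeEquivRight fun _ => and_comm
  rw [Nat.card_congr e, Nat.card_eq_fintype_card, Fintype.card_subtype, pointsIn]

variable [Fintype F]

theorem card_pointsIn_mul (U : Submodule F M) :
    #(pointsIn U) * (Fintype.card F - 1) = Fintype.card F ^ finrank F U - 1 := by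
  rw [card_pointsIn, ← Nat.card_eq_fintype_card, ← Projectivization.card,
    natCard_eq_pow_finrank (K := F)]

theorem divisibleSet_pointsIn (U : Submodule F M) :
    DivisibleSet (Fintype.card F ^ (finrank F U - 1)) (pointsIn U) := by
  intro H hH
  rw [interCard_pointsIn]
  have hdim := finrank_sup_add_finrank_inf_eq U H
  have hsup := (U ⊔ H).finrank_le
  have hinf := finrank_mono (inf_le_left : U ⊓ H ≤ U)
  unfold IsHyperplane at hH
  obtain h | h : finrank F ↥(U ⊓ H) = finrank F U ∨ finrank F ↥(U ⊓ H) + 1 = finrank F U := by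
    omega
  · rw [eq_of_le_of_finrank_eq inf_le_left h]
  have hU := card_pointsIn_mul U
  have hUH := card_pointsIn_mul (U ⊓ H)
  rw [← h] at hU ⊢
  rw [Nat.add_sub_cancel]
  set q := Fintype.card F
  have hq : 1 < q := Fintype.one_lt_card
  have hpow : 1 ≤ q ^ finrank F ↥(U ⊓ H) := Nat.one_le_pow _ _ (by omega)
  have hcard : #(pointsIn U) = #(pointsIn (U ⊓ H)) + q ^ finrank F ↥(U ⊓ H) := by
    refine Nat.eq_of_mul_eq_mul_right (show 0 < q - 1 by omega) ?_
    rw [hU, add_mul, hUH]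
    zify [hpow, hq.le, Nat.one_le_pow _ q (by omega : 0 < q)]
    ring
  rw [hcard]
  exact (Nat.add_mod_right _ _).symm

end Points

/- With `p = b (inr 0)` and `x₁, x₂, d₂, d₃, w₁, w₂ = b (inl 0), …, b (inl 5)`, the three
families are the cosets of `⟨w₁, w₂⟩` through the `b (inr s)`, of `⟨p, d₂⟩` through `x₁ + s x₂`
and of `⟨p, d₃⟩` through `x₂ + s d₂`; the base plane is `⟨p, x₁, x₂⟩`. -/
namespace CosetConstruction

variable {F : Type} [Field F] {V : Type} [AddCommGroup V] [Module F V]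
  (b : Basis (Fin 6 ⊕ F) F V)

noncomputable def anchor : Fin 3 → F → V :=
  ![fun s => b (.inr s), fun s => b (.inl 0) + s • b (.inl 1),
    fun s => b (.inl 1) + s • b (.inl 2)]

noncomputable def directions : Fin 3 → Fin 2 → V :=
  ![![b (.inl 4), b (.inl 5)], ![b (.inr 0), b (.inl 2)], ![b (.inr 0), b (.inl 3)]]

noncomputable def vector (i : Fin 3 × F × (Fin 2 → F)) : V :=
  anchor b i.1 i.2.1 + Fintype.linearCombination F (directions b i.1) i.2.2

@[simp]
theorem vector_zero (s : F) (c : Fin 2 → F) :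
    vector b (0, s, c) = b (.inr s) + c 0 • b (.inl 4) + c 1 • b (.inl 5) := by
  simp [vector, anchor, directions, Fintype.linearCombination_apply, add_assoc]

@[simp]
theorem vector_one (s : F) (c : Fin 2 → F) :
    vector b (1, s, c) = b (.inl 0) + s • b (.inl 1) + c 0 • b (.inr 0) + c 1 • b (.inl 2) := by
  simp [vector, anchor, directions, Fintype.linearCombination_apply, add_assoc]

@[simp]
theorem vector_two (s : F) (c : Fin 2 → F) :
    vector b (2, s, c) = b (.inl 1) + s • b (.inl 2) + c 0 • b (.inr 0) + c 1 • b (.inl 3) := by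
  simp [vector, anchor, directions, Fintype.linearCombination_apply, add_assoc]

theorem vector_injective : Function.Injective (vector b) := by
  rintro ⟨g, s, c⟩ ⟨g', s', c'⟩ h
  have hk : ∀ k ∈ [.inl 0, .inl 1, .inl 2, .inl 3, .inl 4, .inl 5, .inr s, .inr 0],
      b.coord k (vector b (g, s, c)) = b.coord k (vector b (g', s', c')) := fun k _ => by rw [h]
  clear h
  fin_cases g <;> fin_cases g' <;> simp_all [Finsupp.single_apply, funext_iff, Fin.forall_fin_two]

def planeIndex : Fin 3 → Fin 6 ⊕ F := ![.inr 0, .inl 0, .inl 1]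

theorem planeIndex_ne_inl {n : Fin 6} (hn : 2 ≤ n) (j : Fin 3) :
    planeIndex (F := F) j ≠ .inl n := by
  fin_cases j <;> simp [planeIndex, Fin.ext_iff] <;> omega

theorem planeIndex_ne_inr {s : F} (hs : s ≠ 0) (j : Fin 3) : planeIndex j ≠ .inr s := by
  fin_cases j <;> simp [planeIndex, Ne.symm hs]

noncomputable def basePlane : Submodule F V := span F (Set.range (b ∘ planeIndex))

theorem finrank_basePlane : finrank F (basePlane b) = 3 := by
  refine (finrank_span_eq_card (b.linearIndependent.comp _ fun i j h => ?_)).trans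
    (Fintype.card_fin 3)
  fin_cases i <;> fin_cases j <;> simp_all [planeIndex]

theorem coord_eq_zero_of_mem_basePlane {k : Fin 6 ⊕ F} (hk : ∀ j, planeIndex j ≠ k) {v : V}
    (hv : v ∈ basePlane b) : b.coord k v = 0 := by
  refine (span_le (p := LinearMap.ker (b.coord k))).mpr ?_ hv
  rintro _ ⟨j, rfl⟩
  simp [hk j]

theorem exists_vector_eq_smul_of_mem_basePlane {v : V} (hv : v ∈ basePlane b) (hv0 : v ≠ 0) :
    ∃ i, ∃ κ : F, vector b i = κ • v := by
  obtain ⟨a, rfl⟩ := (mem_span_range_iff_exists_fun F).mp hv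
  simp only [Fin.sum_univ_three, Function.comp_apply, planeIndex, Matrix.cons_val_zero,
    Matrix.cons_val_one, Matrix.cons_val] at hv0 ⊢
  by_cases h1 : a 1 = 0
  · by_cases h2 : a 2 = 0
    · have h0 : a 0 ≠ 0 := fun h0 => hv0 (by simp [h0, h1, h2])
      exact ⟨(0, 0, 0), (a 0)⁻¹, by simp [h1, h2, smul_smul, inv_mul_cancel₀ h0]⟩
    · refine ⟨(2, 0, ![a 0 / a 2, 0]), (a 2)⁻¹, ?_⟩
      simp only [vector_two, Matrix.cons_val_zero, Matrix.cons_val_one, h1, zero_smul, add_zero]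
      match_scalars <;> field_simp
  · refine ⟨(1, a 2 / a 1, ![a 0 / a 1, 0]), (a 1)⁻¹, ?_⟩
    simp only [vector_one, Matrix.cons_val_zero, Matrix.cons_val_one]
    match_scalars <;> field_simp

variable [Fintype F]

-- Every `vector b i` has leading coordinate `1` here, so distinct vectors span distinct points.
noncomputable def leadingCoords : V →ₗ[F] Fin 3 → F :=
  LinearMap.pi ![b.coord (.inl 0), b.coord (.inl 1), ∑ s, b.coord (.inr s)]

theorem isLeadingOne_leadingCoords_vector (i : Fin 3 × F × (Fin 2 → F)) :
    IsLeadingOne (leadingCoords b (vector b i)) := by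
  obtain ⟨g, s, c⟩ := i
  fin_cases g
  · refine ⟨2, fun j hj => ?_, by simp [leadingCoords, Finsupp.single_apply]⟩
    fin_cases j <;> simp_all [leadingCoords]
  · exact ⟨0, fun j hj => absurd hj (Fin.not_lt_zero j), by simp [leadingCoords]⟩
  · refine ⟨1, fun j hj => ?_, by simp [leadingCoords]⟩
    fin_cases j <;> simp_all [leadingCoords]

theorem vector_ne_zero (i : Fin 3 × F × (Fin 2 → F)) : vector b i ≠ 0 := fun h =>
  (isLeadingOne_leadingCoords_vector b i).ne_zero (by rw [h, map_zero])

theorem injective_span_vector : Function.Injective fun i => F ∙ vector b i :=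
  fun i j h => vector_injective b <| injOn_span_singleton_of_isLeadingOne (leadingCoords b)
    (isLeadingOne_leadingCoords_vector b i) (isLeadingOne_leadingCoords_vector b j) h

noncomputable def cosetPoints : Finset (Submodule F V) :=
  univ.image fun i => F ∙ vector b i

theorem card_cosetPoints : #(cosetPoints b) = 3 * Fintype.card F ^ 3 := by
  rw [cosetPoints, card_image_of_injective _ (injective_span_vector b), card_univ,
    Fintype.card_prod, Fintype.card_prod, Fintype.card_fun, Fintype.card_fin, Fintype.card_fin]
  ring

variable [Finite V]

theorem divisibleSet_cosetPoints : DivisibleSet (Fintype.card F ^ 2) (cosetPoints b) := by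
  intro H hH
  have hinter : Fintype.card F ^ 2 ∣ interCard (cosetPoints b) H := by
    rw [cosetPoints, interCard_image_span_singleton (injective_span_vector b), card_filter,
      Fintype.sum_prod_type]
    refine dvd_sum fun g _ => ?_
    rw [← card_filter]
    have := card_dvd_card_filter_add_mem hH dvd_rfl (anchor b g)
      (Fintype.linearCombination F (directions b g))
    rwa [Fintype.card_fun, Fintype.card_fin] at this
  refine (Nat.modEq_zero_iff_dvd.mpr hinter).trans (Nat.modEq_zero_iff_dvd.mpr ?_).symm
  rw [card_cosetPoints]
  exact ⟨3 * Fintype.card F, by ring⟩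

theorem pointsIn_basePlane_subset : pointsIn (basePlane b) ⊆ cosetPoints b := by
  intro P hP
  obtain ⟨hP1, hPle⟩ := (mem_filter.mp hP).2
  obtain ⟨v, hvP, hv0⟩ := P.exists_mem_ne_zero_of_ne_bot fun h => by
    rw [h, finrank_bot] at hP1
    exact zero_ne_one hP1
  obtain ⟨i, κ, hi⟩ := exists_vector_eq_smul_of_mem_basePlane b (hPle hvP) hv0
  exact mem_image.mpr ⟨i, mem_univ _,
    span_singleton_eq_of_finrank_eq_one hP1 (hi ▸ P.smul_mem κ hvP) (vector_ne_zero b i)⟩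

noncomputable def specialSet : Finset (Submodule F V) := cosetPoints b \ pointsIn (basePlane b)

theorem isPointSet_specialSet : IsPointSet (specialSet b) := fun P hP =>
  isPointSet_image_span_singleton (vector_ne_zero b) P (mem_sdiff.mp hP).1

theorem divisibleSet_specialSet : DivisibleSet (Fintype.card F ^ 2) (specialSet b) := by
  have hplane := divisibleSet_pointsIn (basePlane b)
  rw [finrank_basePlane] at hplane
  exact (divisibleSet_cosetPoints b).sdiff hplane (pointsIn_basePlane_subset b)

theorem card_specialSet :
    #(specialSet b) = 3 * Fintype.card F ^ 3 - Fintype.card F ^ 2 - Fintype.card F - 1 := by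
  have hq : 1 < Fintype.card F := Fintype.one_lt_card
  have hplane : #(pointsIn (basePlane b)) = Fintype.card F ^ 2 + Fintype.card F + 1 := by
    have h := card_pointsIn_mul (basePlane b)
    rw [finrank_basePlane] at h
    refine Nat.eq_of_mul_eq_mul_right (show 0 < Fintype.card F - 1 by omega) (h.trans ?_)
    zify [hq.le, Nat.one_le_pow 3 _ (by omega : 0 < Fintype.card F)]
    ring
  rw [specialSet, card_sdiff_of_subset (pointsIn_basePlane_subset b), card_cosetPoints, hplane]
  omega

theorem vector_mem_sup_specialSet {i : Fin 3 × F × (Fin 2 → F)} {k : Fin 6 ⊕ F}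
    (hk : ∀ j, planeIndex j ≠ k) (hi : b.coord k (vector b i) ≠ 0) :
    vector b i ∈ (specialSet b).sup id := by
  have hmem : F ∙ vector b i ∈ specialSet b := mem_sdiff.mpr
    ⟨mem_image_of_mem (fun i => F ∙ vector b i) (mem_univ i), fun h => hi <|
      coord_eq_zero_of_mem_basePlane b hk ((mem_filter.mp h).2.2 (mem_span_singleton_self _))⟩
  exact le_sup (f := id) hmem (mem_span_singleton_self _)

theorem sup_specialSet : (specialSet b).sup id = ⊤ := by
  set S := (specialSet b).sup id
  have hmem (i : Fin 3 × F × (Fin 2 → F)) (n : Fin 6) (hn : 2 ≤ n) :=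
    vector_mem_sup_specialSet b (i := i) (planeIndex_ne_inl hn)
  have hpw₁ := hmem (0, 0, ![1, 0]) 4 (by decide) (by simp)
  have hpw₂ := hmem (0, 0, ![0, 1]) 5 (by decide) (by simp)
  have hpw₁₂ := hmem (0, 0, ![1, 1]) 4 (by decide) (by simp)
  have hx₁d₂ := hmem (1, 0, ![0, 1]) 2 (by decide) (by simp)
  have hx₂d₂ := hmem (2, 1, 0) 2 (by decide) (by simp)
  have hx₂d₃ := hmem (2, 0, ![0, 1]) 3 (by decide) (by simp)
  have hx₂d₂₃ := hmem (2, 1, ![0, 1]) 2 (by decide) (by simp)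
  simp only [vector_zero, vector_one, vector_two, Matrix.cons_val_zero, Matrix.cons_val_one,
    Matrix.cons_val_fin_one, Pi.zero_apply, one_smul, zero_smul, add_zero]
    at hpw₁ hpw₂ hpw₁₂ hx₁d₂ hx₂d₂ hx₂d₃ hx₂d₂₃
  have hx₂ : b (.inl 1) ∈ S := by
    convert S.sub_mem (S.add_mem hx₂d₂ hx₂d₃) hx₂d₂₃ using 1
    abel
  have hx₁ : b (.inl 0) ∈ S := by
    convert S.sub_mem hx₁d₂ (S.sub_mem hx₂d₂ hx₂) using 1
    abel
  have hp : b (.inr 0) ∈ S := by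
    convert S.sub_mem (S.add_mem hpw₁ hpw₂) hpw₁₂ using 1
    abel
  rw [eq_top_iff, ← b.span_eq, span_le]
  rintro _ ⟨n | s, rfl⟩
  · fin_cases n
    · exact hx₁
    · exact hx₂
    · simpa using S.sub_mem hx₂d₂ hx₂
    · simpa using S.sub_mem hx₂d₃ hx₂
    · simpa using S.sub_mem hpw₁ hp
    · simpa using S.sub_mem hpw₂ hp
  · by_cases hs : s = 0
    · exact hs ▸ hp
    simpa using vector_mem_sup_specialSet b (i := (0, s, 0)) (planeIndex_ne_inr hs) (by simp)

end CosetConstruction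

/-- Corollary 4.10: there exists a `q²`-divisible set of points of cardinality
`3q³ - q² - q - 1` whose span has dimension `k` with `max 8 (q+5) ≤ k ≤ max 8 (2q+3)`. -/
theorem exists_q2_divisible_special (F : Type) [Field F] [Fintype F] (q : ℕ)
    (hq : Fintype.card F = q) :
    ∃ v : ℕ, 2 ≤ v ∧ ∃ C : Finset (Submodule F (Fin v → F)),
      IsPointSet C ∧ DivisibleSet (q ^ 2) C ∧
      C.card = 3 * q ^ 3 - q ^ 2 - q - 1 ∧
      max 8 (q + 5) ≤ Module.finrank F ↥(C.sup id) ∧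
      Module.finrank F ↥(C.sup id) ≤ max 8 (2 * q + 3) := by
  subst hq
  have hq : 2 ≤ Fintype.card F := Fintype.one_lt_card
  let b : Basis (Fin 6 ⊕ F) F (Fin (Fintype.card F + 6) → F) :=
    (Pi.basisFun F _).reindex (Fintype.equivFinOfCardEq (by simp [add_comm])).symm
  have hrank : finrank F ↥((CosetConstruction.specialSet b).sup id) = Fintype.card F + 6 := by
    rw [CosetConstruction.sup_specialSet, finrank_top, finrank_fin_fun]
  refine ⟨Fintype.card F + 6, by omega, CosetConstruction.specialSet b,
    CosetConstruction.isPointSet_specialSet b, CosetConstruction.divisibleSet_specialSet b,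
    CosetConstruction.card_specialSet b, ?_, ?_⟩ <;> rw [hrank] <;> omega
end

section
/- Let F be a finite field with q elements, let v ≥ 2, let Δ ≥ 1, let u be an integer and m ≥ 0 an integer, and let C be a Δ-divisible set of points of PG(v−1, q) with |C| = u + m·Δ. For each hyperplane H of F^v let h_H denote the integer (|C ∩ H| − u)/Δ (which is an integer since |C ∩ H| ≡ |C| ≡ u (mod Δ)). Then, as rational numbers, (q − 1)·∑_H h_H = (u + mΔ − u·q)·q^{v−1}/Δ − m, where the sum ranges over all hyperplanes H of F^v. -/
open scoped Classical

section Aux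
open Module Finset

variable {F V : Type} [Field F] [Fintype F] [AddCommGroup V] [Module F V] [Fintype V]
  [FiniteDimensional F V]

noncomputable instance dualFintypeAux : Fintype (Module.Dual F V) := by
  have : Finite (Module.Dual F V) :=
    Finite.of_injective (fun φ => (φ : V → F)) fun a b h => LinearMap.ext (congrFun h)
  exact Fintype.ofFinite _

lemma dual_count (U : Submodule F V) :
    (Finset.univ.filter
        (fun φ : Module.Dual F V => φ ∈ U.dualAnnihilator ∧ φ ≠ 0)).card
      = Fintype.card F ^ (finrank F V - finrank F ↥U) - 1 := by
  have h0 : (0 : Module.Dual F V) ∈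
      Finset.univ.filter (fun φ : Module.Dual F V => φ ∈ U.dualAnnihilator) := by simp
  have he : Finset.univ.filter
        (fun φ : Module.Dual F V => φ ∈ U.dualAnnihilator ∧ φ ≠ 0)
      = (Finset.univ.filter (fun φ : Module.Dual F V => φ ∈ U.dualAnnihilator)).erase 0 := by
    ext φ
    simp [Finset.mem_erase, and_comm]
  rw [he, Finset.card_erase_of_mem h0]
  have hc : (Finset.univ.filter
        (fun φ : Module.Dual F V => φ ∈ U.dualAnnihilator)).card
      = Fintype.card ↥U.dualAnnihilator := (Fintype.card_subtype _).symm
  rw [hc, card_eq_pow_finrank (K := F)]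
  have h1 : finrank F (V ⧸ U) = finrank F ↥U.dualAnnihilator :=
    LinearEquiv.finrank_eq (Subspace.quotEquivAnnihilator (K := F) (V := V) U)
  have h2 := Submodule.finrank_quotient_add_finrank U
  congr 2
  omega

end Aux

section Aux2
open Module Finset

variable {F V : Type} [Field F] [Fintype F] [AddCommGroup V] [Module F V] [Fintype V]
  [FiniteDimensional F V]

lemma card_hyp_through (W : Submodule F V) (hn : 1 ≤ finrank F V) :
    (Finset.univ.filter (fun H : Submodule F V => IsHyperplane H ∧ W ≤ H)).card
        * (Fintype.card F - 1)
      = Fintype.card F ^ (finrank F V - finrank F ↥W) - 1 := by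
  classical
  set T := Finset.univ.filter (fun H : Submodule F V => IsHyperplane H ∧ W ≤ H) with hT
  set D := Finset.univ.filter
    (fun φ : Module.Dual F V => φ ∈ W.dualAnnihilator ∧ φ ≠ 0) with hD
  have hmap : ∀ φ ∈ D, LinearMap.ker φ ∈ T := by
    intro φ hφ
    rw [hD, Finset.mem_filter] at hφ
    obtain ⟨-, hann, hne⟩ := hφ
    rw [hT, Finset.mem_filter]
    refine ⟨Finset.mem_univ _, ?_, ?_⟩
    · have := Module.Dual.finrank_ker_add_one_of_ne_zero (f := φ) hne
      unfold IsHyperplane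
      omega
    · intro x hx
      simpa [LinearMap.mem_ker] using (Submodule.mem_dualAnnihilator φ).mp hann x hx
  have hfib : ∀ H ∈ T, (D.filter (fun φ => LinearMap.ker φ = H)).card
      = Fintype.card F - 1 := by
    intro H hH
    rw [hT, Finset.mem_filter] at hH
    obtain ⟨-, hHhyp, hWH⟩ := hH
    have hHfr : finrank F ↥H = finrank F V - 1 := hHhyp
    have heq : D.filter (fun φ => LinearMap.ker φ = H)
        = Finset.univ.filter
            (fun φ : Module.Dual F V => φ ∈ H.dualAnnihilator ∧ φ ≠ 0) := by
      ext φ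
      simp only [hD, Finset.filter_filter, Finset.mem_filter, Finset.mem_univ, true_and]
      constructor
      · rintro ⟨⟨hann, hne⟩, hker⟩
        refine ⟨(Submodule.mem_dualAnnihilator φ).mpr (fun x hx => ?_), hne⟩
        rw [← hker] at hx
        exact hx
      · rintro ⟨hann, hne⟩
        have hle : H ≤ LinearMap.ker φ := fun x hx => by
          simpa [LinearMap.mem_ker] using (Submodule.mem_dualAnnihilator φ).mp hann x hx
        have hk := Module.Dual.finrank_ker_add_one_of_ne_zero (f := φ) hne
        have hker : LinearMap.ker φ = H :=
          (Submodule.eq_of_le_of_finrank_le hle (by omega)).symm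
        refine ⟨⟨(Submodule.mem_dualAnnihilator φ).mpr (fun x hx => ?_), hne⟩, hker⟩
        have : x ∈ LinearMap.ker φ := hker ▸ (hWH hx)
        simpa [LinearMap.mem_ker] using this
    rw [heq, dual_count]
    have h1 : finrank F V - finrank F ↥H = 1 := by omega
    rw [h1, pow_one]
  have h1 := Finset.card_eq_sum_card_fiberwise hmap
  rw [Finset.sum_congr rfl hfib, Finset.sum_const, smul_eq_mul] at h1
  rw [hD] at h1
  rw [dual_count W] at h1
  omega

end Aux2


/-- Lemma 5.4: for a `Δ`-divisible set `C` with `|C| = u + m·Δ`, setting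
`h_H = (|C ∩ H| - u)/Δ`, one has
`(q-1)·∑_H h_H = (u + mΔ - uq)·q^(v-1)/Δ - m` as rational numbers. -/
theorem first_moment_identity (F : Type) [Field F] [Fintype F] (q v : ℕ)
    (hq : Fintype.card F = q) (hv : 2 ≤ v)
    (Δ : ℕ) (hΔ : 1 ≤ Δ) (u : ℤ) (m : ℕ)
    (C : Finset (Submodule F (Fin v → F))) (hpts : IsPointSet C)
    (hdiv : DivisibleSet Δ C)
    (hcard : (C.card : ℤ) = u + (m : ℤ) * (Δ : ℤ)) :
    ((q : ℚ) - 1) *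
        (∑ H ∈ Finset.univ.filter
            (fun H : Submodule F (Fin v → F) => IsHyperplane H),
          (((interCard C H : ℚ) - (u : ℚ)) / (Δ : ℚ)))
      = (((u : ℚ) + (m : ℚ) * (Δ : ℚ) - (u : ℚ) * (q : ℚ)) * (q : ℚ) ^ (v - 1)) / (Δ : ℚ)
          - (m : ℚ) := by
  classical
  have hq1 : 1 ≤ q := hq ▸ Fintype.card_pos
  have hfr : Module.finrank F (Fin v → F) = v := Module.finrank_fin_fun F
  set T := Finset.univ.filter (fun H : Submodule F (Fin v → F) => IsHyperplane H) with hT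
  -- total number of hyperplanes
  have hTtot : T.card * (q - 1) = q ^ v - 1 := by
    have h := card_hyp_through (F := F) (V := Fin v → F) ⊥ (by rw [hfr]; omega)
    rw [hq, hfr, finrank_bot, Nat.sub_zero] at h
    rw [← h, hT]
    congr 2
    apply Finset.filter_congr
    intro H _
    simp [bot_le]
  -- number of hyperplanes through a point
  have hpt : ∀ P ∈ C, ((T.filter (fun H => P ≤ H)).card) * (q - 1) = q ^ (v - 1) - 1 := by
    intro P hP
    have h := card_hyp_through (F := F) (V := Fin v → F) P (by rw [hfr]; omega)
    rw [hq, hfr, hpts P hP] at h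
    rw [← h, hT, Finset.filter_filter]
  -- double counting
  have hswap : (∑ H ∈ T, interCard C H) = ∑ P ∈ C, (T.filter (fun H => P ≤ H)).card := by
    unfold interCard
    simp_rw [Finset.card_filter]
    rw [Finset.sum_comm]
  have hsum : (∑ H ∈ T, interCard C H) * (q - 1) = C.card * (q ^ (v - 1) - 1) := by
    rw [hswap, Finset.sum_mul, Finset.sum_congr rfl (fun P hP => hpt P hP),
      Finset.sum_const, smul_eq_mul]
  -- cast to ℚ
  have hΔ0 : (Δ : ℚ) ≠ 0 := by
    have h0 : 0 < Δ := hΔ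
    exact_mod_cast h0.ne'
  have hqc : ((q - 1 : ℕ) : ℚ) = (q : ℚ) - 1 := by
    rw [Nat.cast_sub hq1]; norm_num
  have hv0 : ((q ^ v - 1 : ℕ) : ℚ) = (q : ℚ) ^ v - 1 := by
    rw [Nat.cast_sub (Nat.one_le_pow _ _ hq1)]; push_cast; ring
  have hv1 : ((q ^ (v - 1) - 1 : ℕ) : ℚ) = (q : ℚ) ^ (v - 1) - 1 := by
    rw [Nat.cast_sub (Nat.one_le_pow _ _ hq1)]; push_cast; ring
  have key1 : ((q : ℚ) - 1) * (T.card : ℚ) = (q : ℚ) ^ v - 1 := by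
    have h := congrArg (Nat.cast : ℕ → ℚ) hTtot
    rw [Nat.cast_mul, hqc, hv0] at h
    linarith
  have key2 : ((q : ℚ) - 1) * ((∑ H ∈ T, interCard C H : ℕ) : ℚ)
      = (C.card : ℚ) * ((q : ℚ) ^ (v - 1) - 1) := by
    have h := congrArg (Nat.cast : ℕ → ℚ) hsum
    rw [Nat.cast_mul, Nat.cast_mul, hqc, hv1] at h
    linarith
  have hC : (C.card : ℚ) = (u : ℚ) + (m : ℚ) * (Δ : ℚ) := by exact_mod_cast hcard
  have hvpow : (q : ℚ) ^ v = (q : ℚ) * (q : ℚ) ^ (v - 1) := by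
    conv_lhs => rw [show v = (v - 1) + 1 by omega]
    rw [pow_succ]; ring
  have hsplit : (∑ H ∈ T, (((interCard C H : ℚ) - (u : ℚ)) / (Δ : ℚ)))
      = (((∑ H ∈ T, interCard C H : ℕ) : ℚ) - (T.card : ℚ) * (u : ℚ)) / (Δ : ℚ) := by
    rw [Nat.cast_sum, ← Finset.sum_div, Finset.sum_sub_distrib, Finset.sum_const,
      nsmul_eq_mul]
  rw [hsplit]
  have expand : ((q : ℚ) - 1) *
      ((((∑ H ∈ T, interCard C H : ℕ) : ℚ) - (T.card : ℚ) * (u : ℚ)) / (Δ : ℚ))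
      = (((q : ℚ) - 1) * ((∑ H ∈ T, interCard C H : ℕ) : ℚ)
          - (((q : ℚ) - 1) * (T.card : ℚ)) * (u : ℚ)) / (Δ : ℚ) := by
    ring
  rw [expand, key1, key2, hC, hvpow]
  field_simp
  ring
end

section
/- Let F be a finite field with q elements, let v ≥ 2, let u, m ≥ 0 be integers, let Δ ≥ 1, and let C be a set of points of PG(v−1, q) with |C| = u + m·Δ such that for every hyperplane H of F^v there exists an integer h with 0 ≤ h ≤ m and |C ∩ H| = u + h·Δ. Then u·(q − 1) < m·Δ, or u = 0 and m = 0. -/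
open scoped Classical

section Aux

variable {F : Type} [Field F] {v : ℕ}

/-- The linear functional `x ↦ ∑ i, a i * x i`. -/
noncomputable def dotL (a : Fin v → F) : (Fin v → F) →ₗ[F] F where
  toFun x := ∑ i, a i * x i
  map_add' x y := by simp [mul_add, Finset.sum_add_distrib]
  map_smul' c x := by
    simp only [Pi.smul_apply, smul_eq_mul, RingHom.id_apply, Finset.mul_sum]
    exact Finset.sum_congr rfl fun i _ => by ring

theorem dotL_apply (a x : Fin v → F) : dotL a x = ∑ i, a i * x i := rfl

theorem dotL_comm (a x : Fin v → F) : dotL a x = dotL x a := by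
  simp [dotL_apply, mul_comm]

theorem dotL_ne_zero {a : Fin v → F} (ha : a ≠ 0) : dotL a ≠ 0 := by
  intro h
  apply ha
  funext i
  have := congrArg (fun f => f (Pi.single i (1 : F))) h
  simpa [dotL_apply, Pi.single_apply, mul_ite] using this

theorem finrank_ker_dotL {a : Fin v → F} (ha : a ≠ 0) :
    Module.finrank F ↥(LinearMap.ker (dotL a)) = v - 1 := by
  have h := Module.Dual.finrank_ker_add_one_of_ne_zero (dotL_ne_zero ha)
  rw [Module.finrank_fin_fun] at h
  omega

end Aux

/-- Corollary 5.5: if `|C| = u + m·Δ` and every hyperplane meets `C` in `u + h·Δ` points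
for some `0 ≤ h ≤ m`, then `u·(q-1) < m·Δ`, or `u = 0` and `m = 0`. -/
theorem arithmetic_progression_bound (F : Type) [Field F] [Fintype F] (q v : ℕ)
    (hq : Fintype.card F = q) (hv : 2 ≤ v)
    (u m Δ : ℕ) (hΔ : 1 ≤ Δ)
    (C : Finset (Submodule F (Fin v → F))) (hpts : IsPointSet C)
    (hcard : C.card = u + m * Δ)
    (hH : ∀ H : Submodule F (Fin v → F), IsHyperplane H →
      ∃ h : ℕ, h ≤ m ∧ interCard C H = u + h * Δ) :
    u * (q - 1) < m * Δ ∨ (u = 0 ∧ m = 0) := by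
  classical
  have hq2 : 2 ≤ q := by
    have h := Fintype.one_lt_card (α := F)
    omega
  rcases Nat.eq_zero_or_pos u with hu | hu
  · rcases Nat.eq_zero_or_pos m with hm | hm
    · exact Or.inr ⟨hu, hm⟩
    · left
      rw [hu, zero_mul]
      exact Nat.mul_pos hm hΔ
  left
  set A : Finset (Fin v → F) := Finset.univ.filter (fun a => a ≠ 0) with hA
  have hcardF : Fintype.card (Fin v → F) = q ^ v := by
    simp [Fintype.card_fun, hq]
  have hAcard : A.card = q ^ v - 1 := by
    have : A = (Finset.univ : Finset (Fin v → F)).erase 0 := by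
      ext a; simp [hA]
    rw [this, Finset.card_erase_of_mem (Finset.mem_univ _), Finset.card_univ, hcardF]
  -- every kernel of dotL a (a ≠ 0) is a hyperplane
  have hker : ∀ a ∈ A, IsHyperplane (LinearMap.ker (dotL a)) := by
    intro a haA
    have ha : a ≠ 0 := by simpa [hA] using haA
    unfold IsHyperplane
    rw [finrank_ker_dotL ha, Module.finrank_fin_fun]
  have hlow : ∀ a ∈ A, u ≤ interCard C (LinearMap.ker (dotL a)) := by
    intro a haA
    obtain ⟨h, _, hh⟩ := hH _ (hker a haA)
    omega
  -- double counting
  have hsum : ∑ a ∈ A, interCard C (LinearMap.ker (dotL a)) =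
      C.card * (q ^ (v - 1) - 1) := by
    have hrw : ∀ a ∈ A, interCard C (LinearMap.ker (dotL a)) =
        ∑ P ∈ C, if P ≤ LinearMap.ker (dotL a) then 1 else 0 := by
      intro a _
      simp only [interCard]
      rw [Finset.card_filter]
    rw [Finset.sum_congr rfl hrw, Finset.sum_comm]
    have hinner : ∀ P ∈ C,
        (∑ a ∈ A, if P ≤ LinearMap.ker (dotL a) then 1 else 0) = q ^ (v - 1) - 1 := by
      intro P hP
      -- pick a nonzero vector spanning P
      have hP1 : Module.finrank F ↥P = 1 := hpts P hP
      have hPbot : P ≠ ⊥ := by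
        intro h
        rw [h] at hP1
        simp [finrank_bot] at hP1
      obtain ⟨x₀, hx₀P, hx₀⟩ := Submodule.exists_mem_ne_zero_of_ne_bot hPbot
      have hspan : (Submodule.span F {x₀}) = P := by
        apply Submodule.eq_of_le_of_finrank_le
        · rwa [Submodule.span_singleton_le_iff_mem]
        · rw [hP1, finrank_span_singleton hx₀]
      have hiff : ∀ a : Fin v → F, (P ≤ LinearMap.ker (dotL a)) ↔
          a ∈ LinearMap.ker (dotL x₀) := by
        intro a
        rw [← hspan, Submodule.span_singleton_le_iff_mem, LinearMap.mem_ker,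
          LinearMap.mem_ker, dotL_comm]
      have hfilt : (A.filter fun a => P ≤ LinearMap.ker (dotL a)) =
          (Finset.univ.filter fun a => a ∈ LinearMap.ker (dotL x₀)).erase 0 := by
        ext a
        simp [hA, Finset.mem_erase, hiff a, and_comm]
      have hkercard :
          (Finset.univ.filter fun a => a ∈ LinearMap.ker (dotL x₀)).card = q ^ (v - 1) := by
        rw [← Fintype.card_subtype]
        rw [Module.card_eq_pow_finrank (K := F) (V := ↥(LinearMap.ker (dotL x₀))), hq,
          finrank_ker_dotL hx₀]
      calc (∑ a ∈ A, if P ≤ LinearMap.ker (dotL a) then 1 else 0)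
          = (A.filter fun a => P ≤ LinearMap.ker (dotL a)).card := by
            rw [Finset.card_filter]
        _ = q ^ (v - 1) - 1 := by
            rw [hfilt, Finset.card_erase_of_mem (by simp), hkercard]
    rw [Finset.sum_congr rfl hinner, Finset.sum_const, smul_eq_mul]
  -- the key inequality
  have hineq : u * (q ^ v - 1) ≤ (u + m * Δ) * (q ^ (v - 1) - 1) := by
    calc u * (q ^ v - 1) = ∑ _a ∈ A, u := by rw [Finset.sum_const, smul_eq_mul, hAcard, mul_comm]
      _ ≤ ∑ a ∈ A, interCard C (LinearMap.ker (dotL a)) := Finset.sum_le_sum hlow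
      _ = (u + m * Δ) * (q ^ (v - 1) - 1) := by rw [hsum, hcard]
  -- arithmetic conclusion
  have hQ2 : 2 ≤ q ^ (v - 1) := le_trans hq2 (Nat.le_self_pow (by omega) q)
  have hqv : q ^ v = q * q ^ (v - 1) := by
    conv_lhs => rw [show v = 1 + (v - 1) by omega, pow_add, pow_one]
  rw [hqv] at hineq
  have hm : 1 ≤ m := by
    by_contra hm
    have hm0 : m = 0 := by omega
    rw [hm0] at hineq
    simp only [zero_mul, add_zero] at hineq
    have h1 := Nat.le_of_mul_le_mul_left hineq (by omega : 0 < u)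
    have h2 : 2 * q ^ (v - 1) ≤ q * q ^ (v - 1) := Nat.mul_le_mul_right _ hq2
    omega
  -- pass to integers
  zify [show 1 ≤ q by omega, show 1 ≤ q * q ^ (v - 1) by nlinarith,
    show 1 ≤ q ^ (v - 1) by omega] at hineq ⊢
  by_contra hcon
  push_neg at hcon
  have hmul : (m : ℤ) * Δ * (q ^ (v - 1)) ≤ u * ((q : ℤ) - 1) * (q ^ (v - 1)) := by
    apply mul_le_mul_of_nonneg_right hcon
    positivity
  have hu' : (1 : ℤ) ≤ u := by exact_mod_cast hu
  have hm' : (1 : ℤ) ≤ (m : ℤ) * Δ := by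
    have : (1 : ℤ) ≤ m := by exact_mod_cast hm
    have : (1 : ℤ) ≤ Δ := by exact_mod_cast hΔ
    nlinarith [show (1:ℤ) ≤ m from by exact_mod_cast hm]
  nlinarith [hineq, hmul, hm']
end

section
/- Let F be a finite field with q elements, let v ≥ 2, let r ≥ 1, and let C be a nonempty q^r-divisible set of points of PG(v−1, q) with |C| = a·q^{r+1} + b for nonnegative integers a and b. Then there exists a hyperplane H of F^v such that |C ∩ H| ≤ (a − 1)·q^r + b (as an inequality of integers). -/
open scoped Classical

lemma ker_finrank_of_ne_zero' {F W : Type} [Field F] [AddCommGroup W] [Module F W]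
    [FiniteDimensional F W] (g : W →ₗ[F] F) (hg : g ≠ 0) :
    Module.finrank F (LinearMap.ker g) = Module.finrank F W - 1 := by
  have hrange : LinearMap.range g = ⊤ := by
    obtain ⟨x, hx⟩ : ∃ x, g x ≠ 0 := by
      by_contra h; push_neg at h; exact hg (LinearMap.ext fun x => h x)
    rw [LinearMap.range_eq_top]
    intro c
    exact ⟨(c / g x) • x, by simp [div_mul_cancel₀ _ hx]⟩
  have h1 : Module.finrank F (LinearMap.range g) = 1 := by
    rw [hrange, finrank_top, Module.finrank_self]
  have h2 := LinearMap.finrank_range_add_finrank_ker g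
  omega


lemma avg_arith (q r : ℕ) {a b mZ nZ : ℤ} (hq2 : (2 : ℤ) ≤ (q : ℤ))
    (hb : 0 ≤ b) (hm : 0 ≤ mZ)
    (hn : nZ = a * (q : ℤ) ^ (r + 1) + b)
    (hqm : (q : ℤ) * mZ < nZ)
    (hdvd : ((q : ℤ) ^ r) ∣ (b - mZ)) :
    mZ ≤ (a - 1) * (q : ℤ) ^ r + b := by
  obtain ⟨k, hk⟩ := hdvd
  have hpr : (1 : ℤ) ≤ (q : ℤ) ^ r := one_le_pow₀ (by linarith)
  have hprr : (q : ℤ) ^ (r + 1) = (q : ℤ) ^ r * q := by rw [pow_succ]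
  have hak : 1 ≤ a + k := by
    by_contra h
    push_neg at h
    have hk' : k ≤ -a := by linarith
    have hmval : mZ = b - (q : ℤ) ^ r * k := by linarith
    rw [hn, hprr] at hqm
    have h6 : (q : ℤ) * (q : ℤ) ^ r * a ≤ (q : ℤ) * (q : ℤ) ^ r * (-k) :=
      mul_le_mul_of_nonneg_left (by linarith) (by positivity)
    have h7 : b ≤ (q : ℤ) * b := le_mul_of_one_le_left hb (by linarith)
    have h8 : (q : ℤ) * mZ = (q : ℤ) * b - (q : ℤ) * ((q : ℤ) ^ r * k) := by
      rw [hmval]; ring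
    linarith [h6, h7, h8, hqm]
  have hmval : mZ = b - (q : ℤ) ^ r * k := by linarith
  rw [hmval]
  have h9 : (0 : ℤ) ≤ (a + k - 1) * (q : ℤ) ^ r := mul_nonneg (by linarith) (by linarith)
  linarith [h9]

lemma avg_arith2 (q v : ℕ) {mZ nZ : ℤ} (hq2 : (2 : ℤ) ≤ (q : ℤ)) (hv : 1 ≤ v)
    (hm : 0 ≤ mZ) (hn1 : 1 ≤ nZ)
    (hZ : ((q : ℤ) ^ v - 1) * mZ ≤ nZ * ((q : ℤ) ^ (v - 1) - 1)) :
    (q : ℤ) * mZ < nZ := by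
  have hpowid : (q : ℤ) ^ (v - 1) * q = (q : ℤ) ^ v := by
    rw [← pow_succ]; congr 1; omega
  by_contra h
  push_neg at h
  have hpv : (0 : ℤ) < (q : ℤ) ^ v - 1 := by
    have h2 : (2 : ℤ) ≤ (q : ℤ) ^ v := by
      calc (2 : ℤ) ≤ (q : ℤ) := hq2
        _ = (q : ℤ) ^ 1 := (pow_one _).symm
        _ ≤ (q : ℤ) ^ v := pow_le_pow_right₀ (by linarith) (by omega)
    linarith
  nlinarith [mul_le_mul_of_nonneg_left hZ (show (0 : ℤ) ≤ (q : ℤ) by linarith),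
    mul_le_mul_of_nonneg_right h (le_of_lt hpv)]

/-- Lemma 5.6 (averaging): if `C` is a nonempty `q^r`-divisible set with
`|C| = a·q^(r+1) + b`, then some hyperplane `H` satisfies
`|C ∩ H| ≤ (a-1)·q^r + b` (as integers). -/
theorem average_hyperplane (F : Type) [Field F] [Fintype F] (q v r : ℕ)
    (hq : Fintype.card F = q) (hv : 2 ≤ v) (hr : 1 ≤ r) (a b : ℕ)
    (C : Finset (Submodule F (Fin v → F))) (hpts : IsPointSet C) (hne : C.Nonempty)
    (hdiv : DivisibleSet (q ^ r) C)
    (hcard : C.card = a * q ^ (r + 1) + b) :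
    ∃ H : Submodule F (Fin v → F), IsHyperplane H ∧
      (interCard C H : ℤ) ≤ ((a : ℤ) - 1) * (q : ℤ) ^ r + (b : ℤ) := by
  classical
  have hq2 : 2 ≤ q := by rw [← hq]; exact Fintype.one_lt_card
  have hfr : Module.finrank F (Fin v → F) = v := Module.finrank_fin_fun F
  haveI : Fintype (Module.Dual F (Fin v → F)) := by
    have : Finite (Module.Dual F (Fin v → F)) :=
      Finite.of_injective (fun f => (f : (Fin v → F) → F)) DFunLike.coe_injective
    exact Fintype.ofFinite _
  set D : Finset (Module.Dual F (Fin v → F)) := Finset.univ.filter (fun f => f ≠ 0) with hD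
  -- every kernel of a nonzero functional is a hyperplane
  have hker : ∀ f : Module.Dual F (Fin v → F), f ≠ 0 → IsHyperplane (LinearMap.ker f) := by
    intro f hf
    unfold IsHyperplane
    rw [ker_finrank_of_ne_zero' f hf]
  -- each point is below q^(v-1) - 1 of the kernels
  have hpoint : ∀ P ∈ C, (D.filter (fun f => P ≤ LinearMap.ker f)).card = q ^ (v - 1) - 1 := by
    intro P hP
    have hP1 : Module.finrank F ↥P = 1 := hpts P hP
    obtain ⟨x, hxP, hx0⟩ : ∃ x, x ∈ P ∧ x ≠ 0 := by
      by_contra h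
      push_neg at h
      have : P = ⊥ := by
        rw [Submodule.eq_bot_iff]; exact h
      rw [this] at hP1
      simp at hP1
    have hPspan : P = Submodule.span F {x} := by
      refine (Submodule.eq_of_le_of_finrank_le ?_ ?_).symm
      · rw [Submodule.span_le, Set.singleton_subset_iff]; exact hxP
      · rw [hP1, finrank_span_singleton hx0]
    have hiff : ∀ f : Module.Dual F (Fin v → F), (P ≤ LinearMap.ker f ↔ f x = 0) := by
      intro f
      rw [hPspan, Submodule.span_le, Set.singleton_subset_iff, SetLike.mem_coe,
        LinearMap.mem_ker]
    have hev : Module.Dual.eval F (Fin v → F) x ≠ 0 := by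
      obtain ⟨i, hi⟩ := Function.ne_iff.mp hx0
      intro h
      apply hi
      have := congrArg (fun g => g (LinearMap.proj (R := F) (φ := fun _ : Fin v => F) i)) h
      simpa [LinearMap.proj_apply] using this
    have hcardker :
        Fintype.card (LinearMap.ker (Module.Dual.eval F (Fin v → F) x)) = q ^ (v - 1) := by
      rw [Module.card_eq_pow_finrank (K := F), hq, ker_finrank_of_ne_zero' _ hev,
        Subspace.dual_finrank_eq, hfr]
    have hfilter : D.filter (fun f => P ≤ LinearMap.ker f)
        = (Finset.univ.filter (fun f : Module.Dual F (Fin v → F) => f x = 0)).erase 0 := by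
      ext f
      simp only [hD, Finset.mem_filter, Finset.filter_filter, Finset.mem_erase,
        Finset.mem_univ, true_and, hiff f]
    rw [hfilter, Finset.card_erase_of_mem (by simp), ← hcardker]
    congr 1
    rw [← Fintype.card_subtype]
    exact Fintype.card_congr (Equiv.subtypeEquivRight (by intro f; simp [LinearMap.mem_ker]))
  -- double counting
  have hsum : ∑ f ∈ D, interCard C (LinearMap.ker f) = C.card * (q ^ (v - 1) - 1) := by
    calc ∑ f ∈ D, interCard C (LinearMap.ker f)
        = ∑ f ∈ D, ∑ P ∈ C, if P ≤ LinearMap.ker f then 1 else 0 :=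
          Finset.sum_congr rfl fun f _ => Finset.card_filter _ _
      _ = ∑ P ∈ C, ∑ f ∈ D, if P ≤ LinearMap.ker f then 1 else 0 := Finset.sum_comm
      _ = ∑ P ∈ C, (D.filter (fun f => P ≤ LinearMap.ker f)).card :=
          Finset.sum_congr rfl fun P _ => (Finset.card_filter _ _).symm
      _ = ∑ P ∈ C, (q ^ (v - 1) - 1) := Finset.sum_congr rfl hpoint
      _ = C.card * (q ^ (v - 1) - 1) := by rw [Finset.sum_const, smul_eq_mul]
  -- D is nonempty
  have hDne : D.Nonempty := by
    refine ⟨LinearMap.proj (R := F) (φ := fun _ : Fin v => F) (⟨0, by omega⟩ : Fin v), ?_⟩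
    simp only [hD, Finset.mem_filter, Finset.mem_univ, true_and]
    intro h
    have := congrArg (fun g => g (Pi.single (⟨0, by omega⟩ : Fin v) (1 : F))) h
    simp [LinearMap.proj_apply, Pi.single_eq_same] at this
  -- card of D
  have hDcard : D.card = q ^ v - 1 := by
    have h1 : D = (Finset.univ : Finset (Module.Dual F (Fin v → F))).erase 0 := by
      ext f; simp [hD, Finset.mem_erase]
    rw [h1, Finset.card_erase_of_mem (Finset.mem_univ _), Finset.card_univ,
      Module.card_eq_pow_finrank (K := F), hq, Subspace.dual_finrank_eq, hfr]
  -- pick the minimizing functional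
  obtain ⟨f, hfD, hfmin⟩ :=
    Finset.exists_min_image D (fun f => interCard C (LinearMap.ker f)) hDne
  have hf0 : f ≠ 0 := by
    have := hfD; rw [hD, Finset.mem_filter] at this; exact this.2
  refine ⟨LinearMap.ker f, hker f hf0, ?_⟩
  set m := interCard C (LinearMap.ker f) with hm
  have hle : D.card * m ≤ C.card * (q ^ (v - 1) - 1) := by
    rw [← hsum]
    simpa using Finset.card_nsmul_le_sum D (fun g => interCard C (LinearMap.ker g)) m hfmin
  rw [hDcard] at hle
  -- cast to integers
  have e1 : (1 : ℕ) ≤ q ^ v := Nat.one_le_pow _ _ (by omega)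
  have e2 : (1 : ℕ) ≤ q ^ (v - 1) := Nat.one_le_pow _ _ (by omega)
  have hn1 : (1 : ℤ) ≤ (C.card : ℤ) := by exact_mod_cast hne.card_pos
  have hqZ : (2 : ℤ) ≤ (q : ℤ) := by exact_mod_cast hq2
  have hZ : ((q : ℤ) ^ v - 1) * (m : ℤ) ≤ (C.card : ℤ) * ((q : ℤ) ^ (v - 1) - 1) := by
    have := hle
    zify [e1, e2] at this
    linarith
  have hqm : (q : ℤ) * (m : ℤ) < (C.card : ℤ) :=
    avg_arith2 q v hqZ (by omega) (Int.natCast_nonneg m) hn1 hZ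
  have hmod := hdiv (LinearMap.ker f) (hker f hf0)
  have hdvd : ((q : ℤ) ^ r) ∣ ((C.card : ℤ) - m) := by
    have h3 : ((q ^ r : ℕ) : ℤ) ∣ (C.card : ℤ) - (m : ℤ) := Nat.ModEq.dvd hmod
    simpa using h3
  have hC : (C.card : ℤ) = (a : ℤ) * (q : ℤ) ^ (r + 1) + b := by exact_mod_cast hcard
  have hdvd2 : ((q : ℤ) ^ r) ∣ ((b : ℤ) - m) := by
    have h2 : ((q : ℤ) ^ r) ∣ ((a : ℤ) * (q : ℤ) ^ (r + 1)) :=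
      ⟨(a : ℤ) * q, by ring⟩
    have h4 := hdvd
    rw [hC] at h4
    have h5 := Int.dvd_sub h4 h2
    convert h5 using 1
    ring
  exact avg_arith q r hqZ (Int.natCast_nonneg b) (Int.natCast_nonneg m) hC hqm hdvd2
end

section
/- Let F be a finite field with q elements, let v ≥ 2, let Δ ≥ 1, let u be an integer and m ≥ 0 an integer, and let C be a Δ-divisible set of points of PG(v−1, q) with |C| = u + m·Δ. For each hyperplane H of F^v let h_H denote the integer (|C ∩ H| − u)/Δ. Then, as rational numbers, (q − 1)·∑_H h_H·(h_H − 1) = τ_q(u, Δ, m)·q^{v−2}/Δ² − m·(m − 1), where the sum ranges over all hyperplanes H of F^v and τ_q(u, Δ, m) = m(m − q)Δ² + (q²u − 2mqu + mq + 2mu − qu − m)Δ + (q − 1)²u² + (q − 1)u. -/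
open scoped Classical

/-!
A subspace of dimension `k` of an `n`-dimensional space over `𝔽_q` lies in
`(q ^ (n - k) - 1) / (q - 1)` hyperplanes: dually, these are the lines of its annihilator.
Double counting incidences between hyperplanes and the points, resp. the ordered pairs of
distinct points, of `C` gives the standard equations for `∑ 1`, `∑ |C ∩ H|` and
`∑ |C ∩ H| (|C ∩ H| - 1)`. Since `Δ² h (h - 1)` is a polynomial of degree two in `|C ∩ H|`,
the claimed identity is a linear combination of these three equations.
-/

open Module Finset

section Counting

variable {F M : Type} [Field F] [AddCommGroup M] [Module F M]

lemma Submodule.finrank_sup_eq_two [FiniteDimensional F M] {P P' : Submodule F M}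
    (hP : finrank F P = 1) (hP' : finrank F P' = 1) (hne : P ≠ P') :
    finrank F ↥(P ⊔ P') = 2 := by
  have hlt : P ⊓ P' < P := inf_le_left.lt_of_ne fun h =>
    hne (Submodule.eq_of_le_of_finrank_eq (h ▸ inf_le_right) (hP.trans hP'.symm))
  have := Submodule.finrank_lt_finrank_of_lt hlt
  have := Submodule.finrank_sup_add_finrank_inf_eq P P'
  omega

def Submodule.linesEquivLinesLE (S : Submodule F M) :
    {L : Submodule F S // finrank F L = 1} ≃ {L : Submodule F M // L ≤ S ∧ finrank F L = 1} :=
  ((Submodule.MapSubtype.orderIso S).toEquiv.subtypeEquiv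
      (q := fun L => finrank F L.1 = 1) fun L =>
        (congrArg (· = 1) (S.finrank_map_subtype_eq L)).to_iff.symm).trans
    (Equiv.subtypeSubtypeEquivSubtypeInter (· ≤ S) fun L => finrank F L = 1)

lemma Submodule.natCard_lines_le [Finite F] (S : Submodule F M) :
    Nat.card {L : Submodule F M // L ≤ S ∧ finrank F L = 1} =
      ∑ i ∈ range (finrank F S), Nat.card F ^ i := by
  rw [← Nat.card_congr S.linesEquivLinesLE, ← Nat.card_congr (Projectivization.equivSubmodule F S),
    Projectivization.card_of_finrank F S rfl]

variable (F M) in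
noncomputable def hyperplanes [Finite M] : Finset (Submodule F M) :=
  univ.filter fun H => IsHyperplane H

-- `IsHyperplane` uses truncated subtraction, so in the zero space `⊥` would count as a hyperplane.
def Subspace.hyperplanesEquivLines [FiniteDimensional F M] (hM : 0 < finrank F M)
    (W : Submodule F M) :
    {H : Submodule F M // W ≤ H ∧ IsHyperplane H} ≃
      {L : Submodule F (Dual F M) // L ≤ W.dualAnnihilator ∧ finrank F L = 1} :=
  ((Subspace.orderIsoFiniteDimensional (K := F) (V := M)).toEquiv.trans
      OrderDual.ofDual).subtypeEquiv
    fun H => and_congr Subspace.dualAnnihilator_le_dualAnnihilator_iff.symm <| by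
      have := Subspace.finrank_add_finrank_dualAnnihilator_eq H
      change finrank F H = finrank F M - 1 ↔ finrank F H.dualAnnihilator = 1
      omega

variable [Fintype F] [Finite M]

lemma card_hyperplanes_filter_le (hM : 0 < finrank F M) (W : Submodule F M) :
    #((hyperplanes F M).filter (W ≤ ·)) =
      ∑ i ∈ range (finrank F M - finrank F W), Fintype.card F ^ i := by
  have := Subspace.finrank_add_finrank_dualAnnihilator_eq W
  rw [hyperplanes, filter_filter, ← Fintype.card_subtype, ← Nat.card_eq_fintype_card,
    ← Nat.card_eq_fintype_card]
  simp_rw [and_comm (a := IsHyperplane _)]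
  rw [Nat.card_congr (Subspace.hyperplanesEquivLines hM W), Submodule.natCard_lines_le]
  congr 2
  omega

lemma card_hyperplanes (hM : 0 < finrank F M) :
    #(hyperplanes F M) = ∑ i ∈ range (finrank F M), Fintype.card F ^ i := by
  simpa using card_hyperplanes_filter_le hM ⊥

variable {C : Finset (Submodule F M)}

lemma sum_interCard_hyperplanes (hM : 0 < finrank F M) (hC : IsPointSet C) :
    ∑ H ∈ hyperplanes F M, interCard C H =
      #C * ∑ i ∈ range (finrank F M - 1), Fintype.card F ^ i := by
  calc ∑ H ∈ hyperplanes F M, interCard C H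
      = ∑ P ∈ C, #((hyperplanes F M).bipartiteAbove (· ≤ ·) P) :=
        (sum_card_bipartiteAbove_eq_sum_card_bipartiteBelow _).symm
    _ = ∑ _P ∈ C, ∑ i ∈ range (finrank F M - 1), Fintype.card F ^ i :=
        sum_congr rfl fun P hP => by
          rw [bipartiteAbove, card_hyperplanes_filter_le hM, hC P hP]
    _ = _ := by rw [sum_const, smul_eq_mul]

lemma sum_card_offDiag_filter_le_hyperplanes (hM : 0 < finrank F M) (hC : IsPointSet C) :
    ∑ H ∈ hyperplanes F M, #(C.filter (· ≤ H)).offDiag =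
      #C.offDiag * ∑ i ∈ range (finrank F M - 2), Fintype.card F ^ i := by
  calc ∑ H ∈ hyperplanes F M, #(C.filter (· ≤ H)).offDiag
      = ∑ H ∈ hyperplanes F M, #(C.offDiag.bipartiteBelow (fun p H => p.1 ⊔ p.2 ≤ H) H) :=
        sum_congr rfl fun H _ => by
          congr 1
          ext p
          simp only [mem_offDiag, mem_filter, mem_bipartiteBelow, sup_le_iff]
          tauto
    _ = ∑ p ∈ C.offDiag, #((hyperplanes F M).bipartiteAbove (fun p H => p.1 ⊔ p.2 ≤ H) p) :=
        (sum_card_bipartiteAbove_eq_sum_card_bipartiteBelow _).symm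
    _ = ∑ _p ∈ C.offDiag, ∑ i ∈ range (finrank F M - 2), Fintype.card F ^ i :=
        sum_congr rfl fun p hp => by
          obtain ⟨hp₁, hp₂, hne⟩ := mem_offDiag.1 hp
          rw [bipartiteAbove, card_hyperplanes_filter_le hM,
            Submodule.finrank_sup_eq_two (hC _ hp₁) (hC _ hp₂) hne]
    _ = _ := by rw [sum_const, smul_eq_mul]

end Counting

lemma Finset.cast_card_offDiag {α R : Type*} [DecidableEq α] [Ring R] (s : Finset α) :
    (#s.offDiag : R) = #s * (#s - 1) := by
  rw [offDiag_card, Nat.cast_sub (Nat.le_mul_self _), Nat.cast_mul, mul_sub_one]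

lemma cast_geom_sum_mul {R : Type*} [CommRing R] (q k : ℕ) :
    ((∑ i ∈ range k, q ^ i : ℕ) : R) * (q - 1) = q ^ k - 1 := by
  push_cast
  exact geom_sum_mul _ _

lemma mul_sum_mul_sub_one_of_standard_equations {K ι : Type*} [Field K] (s : Finset ι)
    (x : ι → K) {q u Δ m : K} {w : ℕ} (hΔ : Δ ≠ 0)
    (e₀ : (#s : K) * (q - 1) = q ^ (w + 2) - 1)
    (e₁ : (∑ i ∈ s, x i) * (q - 1) = (u + m * Δ) * (q ^ (w + 1) - 1))
    (e₂ : (∑ i ∈ s, x i * (x i - 1)) * (q - 1) = (u + m * Δ) * (u + m * Δ - 1) * (q ^ w - 1)) :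
    (q - 1) * ∑ i ∈ s, (x i - u) / Δ * ((x i - u) / Δ - 1) =
      (m * (m - q) * Δ ^ 2 + (q ^ 2 * u - 2 * m * q * u + m * q + 2 * m * u - q * u - m) * Δ
          + (q - 1) ^ 2 * u ^ 2 + (q - 1) * u) * q ^ w / Δ ^ 2 - m * (m - 1) := by
  have hterm : ∀ y : K, (y - u) / Δ * ((y - u) / Δ - 1) * Δ ^ 2 =
      y * (y - 1) - (2 * u + Δ - 1) * y + u * (u + Δ) := fun y => by
    field_simp
    ring
  have hsum : (∑ i ∈ s, (x i - u) / Δ * ((x i - u) / Δ - 1)) * Δ ^ 2 =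
      ∑ i ∈ s, x i * (x i - 1) - (2 * u + Δ - 1) * ∑ i ∈ s, x i + u * (u + Δ) * #s := by
    rw [sum_mul, sum_congr rfl fun i _ => hterm (x i), sum_add_distrib, sum_sub_distrib,
      ← mul_sum, sum_const, nsmul_eq_mul, mul_comm (#s : K)]
  rw [eq_sub_iff_add_eq, eq_div_iff (pow_ne_zero 2 hΔ)]
  linear_combination (q - 1) * hsum + e₂ - (2 * u + Δ - 1) * e₁ + u * (u + Δ) * e₀

theorem second_moment_identity_general (F : Type) [Field F] [Fintype F] (q v : ℕ)
    (hq : Fintype.card F = q) (hv : 2 ≤ v)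
    (Δ : ℕ) (hΔ : 1 ≤ Δ) (u : ℤ) (m : ℕ)
    (C : Finset (Submodule F (Fin v → F))) (hpts : IsPointSet C)
    (hcard : (C.card : ℤ) = u + (m : ℤ) * (Δ : ℤ)) :
    ((q : ℚ) - 1) *
        (∑ H ∈ Finset.univ.filter
            (fun H : Submodule F (Fin v → F) => IsHyperplane H),
          ((((interCard C H : ℚ) - (u : ℚ)) / (Δ : ℚ)) *
            ((((interCard C H : ℚ) - (u : ℚ)) / (Δ : ℚ)) - 1)))
      = (((m : ℚ) * ((m : ℚ) - (q : ℚ)) * (Δ : ℚ) ^ 2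
            + ((q : ℚ) ^ 2 * (u : ℚ) - 2 * (m : ℚ) * (q : ℚ) * (u : ℚ)
                + (m : ℚ) * (q : ℚ) + 2 * (m : ℚ) * (u : ℚ)
                - (q : ℚ) * (u : ℚ) - (m : ℚ)) * (Δ : ℚ)
            + ((q : ℚ) - 1) ^ 2 * (u : ℚ) ^ 2 + ((q : ℚ) - 1) * (u : ℚ))
          * (q : ℚ) ^ (v - 2)) / (Δ : ℚ) ^ 2
        - (m : ℚ) * ((m : ℚ) - 1) := by
  subst hq
  obtain ⟨w, rfl⟩ := Nat.exists_eq_add_of_le' hv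
  have hrank : finrank F (Fin (w + 2) → F) = w + 2 := finrank_fin_fun F
  have hpos : 0 < finrank F (Fin (w + 2) → F) := by omega
  rw [show (univ.filter fun H => IsHyperplane H) = hyperplanes F (Fin (w + 2) → F) from rfl,
    Nat.add_sub_cancel]
  have hn : (#C : ℚ) = u + m * Δ := by exact_mod_cast hcard
  refine mul_sum_mul_sub_one_of_standard_equations _ _ (by positivity) ?_ ?_ ?_
  · rw [card_hyperplanes hpos, hrank]
    exact cast_geom_sum_mul _ _
  · rw [← hn, ← Nat.cast_sum, sum_interCard_hyperplanes hpos hpts, hrank, Nat.cast_mul,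
      mul_assoc, cast_geom_sum_mul, show w + 2 - 1 = w + 1 from rfl]
  · simp_rw [interCard, ← cast_card_offDiag]
    rw [← hn, ← Nat.cast_sum, sum_card_offDiag_filter_le_hyperplanes hpos hpts, hrank,
      Nat.add_sub_cancel, Nat.cast_mul, mul_assoc, cast_geom_sum_mul, cast_card_offDiag]

/-- Lemma 5.7: for a `Δ`-divisible set `C` with `|C| = u + m·Δ`, setting
`h_H = (|C ∩ H| - u)/Δ`, one has
`(q-1)·∑_H h_H·(h_H - 1) = τ_q(u,Δ,m)·q^(v-2)/Δ² - m·(m-1)` as rational numbers, where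
`τ_q(u,Δ,m) = m(m-q)Δ² + (q²u - 2mqu + mq + 2mu - qu - m)Δ + (q-1)²u² + (q-1)u`. -/
theorem second_moment_identity (F : Type) [Field F] [Fintype F] (q v : ℕ)
    (hq : Fintype.card F = q) (hv : 2 ≤ v)
    (Δ : ℕ) (hΔ : 1 ≤ Δ) (u : ℤ) (m : ℕ)
    (C : Finset (Submodule F (Fin v → F))) (hpts : IsPointSet C)
    (hdiv : DivisibleSet Δ C)
    (hcard : (C.card : ℤ) = u + (m : ℤ) * (Δ : ℤ)) :
    ((q : ℚ) - 1) *
        (∑ H ∈ Finset.univ.filter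
            (fun H : Submodule F (Fin v → F) => IsHyperplane H),
          ((((interCard C H : ℚ) - (u : ℚ)) / (Δ : ℚ)) *
            ((((interCard C H : ℚ) - (u : ℚ)) / (Δ : ℚ)) - 1)))
      = (((m : ℚ) * ((m : ℚ) - (q : ℚ)) * (Δ : ℚ) ^ 2
            + ((q : ℚ) ^ 2 * (u : ℚ) - 2 * (m : ℚ) * (q : ℚ) * (u : ℚ)
                + (m : ℚ) * (q : ℚ) + 2 * (m : ℚ) * (u : ℚ)
                - (q : ℚ) * (u : ℚ) - (m : ℚ)) * (Δ : ℚ)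
            + ((q : ℚ) - 1) ^ 2 * (u : ℚ) ^ 2 + ((q : ℚ) - 1) * (u : ℚ))
          * (q : ℚ) ^ (v - 2)) / (Δ : ℚ) ^ 2
        - (m : ℚ) * ((m : ℚ) - 1) :=
  second_moment_identity_general F q v hq hv Δ hΔ u m C hpts hcard
end

section
/- There do not exist an integer v ≥ 2 and an 8-divisible set C of points of PG(v−1, 2) (i.e., of 1-dimensional subspaces of 𝔽₂^v) with |C| = 52. -/
open scoped Classical

/-!
For a linear functional `φ` on `𝔽₂^v` let `a_φ = |C ∩ ker φ|`; for `φ = 0` this is `|C| = 52`.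
Counting the `k`-subsets of `C` lying in kernels gives `2^k ∑_φ C(a_φ, k) = C(52, k) 2^v` for
`k ≤ 2` (two distinct points span a plane) and `≥` for `k = 3`. Divisibility puts every `a_φ` in
`{4, 12, …, 52}`, where `(52 - a)(a - 20)(a - 28) ≥ 0`; yet by these moment relations the sum of
this cubic over all `φ` is at most `-26 · 2^v`.
-/

open Module Finset

section

variable {K V : Type} [Field K] [AddCommGroup V] [Module K V] [FiniteDimensional K V]

theorem finrank_finset_sup_le_sum (T : Finset (Submodule K V)) :
    finrank K ↥(T.sup id) ≤ ∑ P ∈ T, finrank K ↥P := by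
  induction T using Finset.induction_on with
  | empty => simp
  | insert P T hP ih =>
    rw [sup_insert, sum_insert hP]
    exact (Submodule.finrank_add_le_finrank_add_finrank _ _).trans (by simpa using ih)

theorem finrank_sup_eq_two {P Q : Submodule K V} (hP : finrank K P = 1) (hQ : finrank K Q = 1)
    (hPQ : P ≠ Q) : finrank K ↥(P ⊔ Q) = 2 := by
  have hinf : finrank K ↥(P ⊓ Q) = 0 := by
    by_contra h
    have hle : finrank K ↥(P ⊓ Q) ≤ 1 := hP ▸ Submodule.finrank_mono inf_le_left
    have hP' := Submodule.eq_of_le_of_finrank_eq (inf_le_left : P ⊓ Q ≤ P) (by omega)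
    have hQ' := Submodule.eq_of_le_of_finrank_eq (inf_le_right : P ⊓ Q ≤ Q) (by omega)
    exact hPQ (hP'.symm.trans hQ')
  have := Submodule.finrank_sup_add_finrank_inf_eq P Q
  omega

theorem IsPointSet.finrank_sup_le_card {T : Finset (Submodule K V)} (hT : IsPointSet T) :
    finrank K ↥(T.sup id) ≤ #T :=
  (finrank_finset_sup_le_sum T).trans_eq (by simp [sum_congr rfl hT])

theorem IsPointSet.finrank_sup_eq_card {T : Finset (Submodule K V)} (hT : IsPointSet T)
    (h2 : #T ≤ 2) : finrank K ↥(T.sup id) = #T := by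
  interval_cases hc : #T
  · simp [card_eq_zero.mp hc]
  · obtain ⟨P, rfl⟩ := card_eq_one.mp hc
    rw [sup_singleton]
    exact hT P (mem_singleton_self P)
  · obtain ⟨P, Q, hPQ, rfl⟩ := card_eq_two.mp hc
    rw [sup_insert, sup_singleton]
    exact finrank_sup_eq_two (hT P (by simp)) (hT Q (by simp)) hPQ

theorem DivisibleSet.interCard_ker_modEq {Δ : ℕ} {C : Finset (Submodule K V)}
    (hC : DivisibleSet Δ C) (φ : Dual K V) : interCard C (LinearMap.ker φ) ≡ #C [MOD Δ] := by
  by_cases hφ : φ = 0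
  · simpa [hφ, interCard] using Nat.ModEq.refl #C
  · refine hC _ ?_
    have := φ.finrank_ker_add_one_of_ne_zero hφ
    unfold IsHyperplane
    omega

variable [Finite K]

noncomputable instance : Fintype (Dual K V) :=
  have : Finite (Dual K V) := Module.finite_of_finite K
  Fintype.ofFinite _

theorem card_filter_le_ker_mul_pow (W : Submodule K V) :
    #{φ : Dual K V | W ≤ LinearMap.ker φ} * Nat.card K ^ finrank K W
      = Fintype.card (Dual K V) := by
  have hann : #{φ : Dual K V | W ≤ LinearMap.ker φ} = Nat.card W.dualAnnihilator := by
    rw [Nat.card_eq_fintype_card, ← Fintype.card_subtype]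
    exact Fintype.card_congr (Equiv.subtypeEquivRight fun φ => by
      simp [Submodule.mem_dualAnnihilator, SetLike.le_def])
  rw [hann, Fintype.card_eq_nat_card, Module.natCard_eq_pow_finrank (K := K),
    Module.natCard_eq_pow_finrank (K := K) (V := Dual K V), ← pow_add, add_comm,
    Subspace.finrank_add_finrank_dualAnnihilator_eq, Subspace.dual_finrank_eq]

theorem sum_choose_interCard_ker (C : Finset (Submodule K V)) (k : ℕ) :
    ∑ φ : Dual K V, (interCard C (LinearMap.ker φ)).choose k
      = ∑ T ∈ C.powersetCard k, #{φ : Dual K V | T.sup id ≤ LinearMap.ker φ} := by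
  have h : ∀ φ : Dual K V, (interCard C (LinearMap.ker φ)).choose k
      = #((C.powersetCard k).bipartiteAbove (fun φ T => T.sup id ≤ LinearMap.ker φ) φ) := by
    intro φ
    rw [interCard, ← card_powersetCard]
    congr 1
    ext T
    simp only [mem_powersetCard, mem_bipartiteAbove, subset_iff, mem_filter, Finset.sup_le_iff,
      id, imp_and, forall_and]
    tauto
  rw [sum_congr rfl fun φ _ => h φ, sum_card_bipartiteAbove_eq_sum_card_bipartiteBelow]
  rfl

theorem IsPointSet.choose_card_mul_le {C : Finset (Submodule K V)} (hC : IsPointSet C) (k : ℕ) :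
    (#C).choose k * Fintype.card (Dual K V)
      ≤ Nat.card K ^ k * ∑ φ : Dual K V, (interCard C (LinearMap.ker φ)).choose k := by
  rw [sum_choose_interCard_ker, mul_sum, ← card_powersetCard, ← smul_eq_mul, ← sum_const]
  refine sum_le_sum fun T hT => ?_
  obtain ⟨hTC, rfl⟩ := mem_powersetCard.mp hT
  have hT : IsPointSet T := fun P hP => hC P (hTC hP)
  rw [← card_filter_le_ker_mul_pow (T.sup id), mul_comm]
  exact Nat.mul_le_mul_right _
    (Nat.pow_le_pow_right (Nat.card_pos (α := K)) hT.finrank_sup_le_card)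

theorem IsPointSet.pow_mul_sum_choose_eq {C : Finset (Submodule K V)} (hC : IsPointSet C)
    {k : ℕ} (hk : k ≤ 2) :
    Nat.card K ^ k * ∑ φ : Dual K V, (interCard C (LinearMap.ker φ)).choose k
      = (#C).choose k * Fintype.card (Dual K V) := by
  rw [sum_choose_interCard_ker, mul_sum, ← card_powersetCard, ← smul_eq_mul, ← sum_const]
  refine sum_congr rfl fun T hT => ?_
  obtain ⟨hTC, rfl⟩ := mem_powersetCard.mp hT
  have hT : IsPointSet T := fun P hP => hC P (hTC hP)
  rw [← card_filter_le_ker_mul_pow (T.sup id), mul_comm, hT.finrank_sup_eq_card hk]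

end

/-- `(52 - a)(a - 20)(a - 28) ≥ 0`, written in the basis `a`, `C(a, 2)`, `C(a, 3)`. -/
theorem choose_three_le_of_modEq {a : ℕ} (ha : a ≤ 52) (h8 : a ≡ 52 [MOD 8]) :
    2957 * a + 6 * a.choose 3 ≤ 194 * a.choose 2 + 29120 := by
  interval_cases a <;> simp_all [Nat.ModEq, Nat.choose]

theorem DivisibleSet.card_ne_fiftyTwo {V : Type} [AddCommGroup V] [Module (ZMod 2) V]
    [FiniteDimensional (ZMod 2) V] {C : Finset (Submodule (ZMod 2) V)} (hC : IsPointSet C)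
    (hdiv : DivisibleSet 8 C) : #C ≠ 52 := by
  intro hcard
  have h1 := hC.pow_mul_sum_choose_eq (k := 1) (by norm_num)
  have h2 := hC.pow_mul_sum_choose_eq (k := 2) (by norm_num)
  have h3 := hC.choose_card_mul_le 3
  have hpt : ∑ φ : Dual (ZMod 2) V,
      (2957 * interCard C (LinearMap.ker φ) + 6 * (interCard C (LinearMap.ker φ)).choose 3)
      ≤ ∑ φ : Dual (ZMod 2) V, (194 * (interCard C (LinearMap.ker φ)).choose 2 + 29120) :=
    sum_le_sum fun φ _ => choose_three_le_of_modEq (hcard ▸ card_filter_le _ _)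
      (hcard ▸ hdiv.interCard_ker_modEq φ)
  have hN : 0 < Fintype.card (Dual (ZMod 2) V) := Fintype.card_pos
  simp only [sum_add_distrib, ← mul_sum, sum_const, card_univ, smul_eq_mul, Nat.choose_one_right,
    hcard, Nat.card_zmod] at h1 h2 h3 hpt
  norm_num [Nat.choose] at h2 h3
  omega

/-- Lemma 5.10: there is no `8`-divisible set of points of `PG(v-1, 2)` of
cardinality `52`. -/
theorem no_8_divisible_52 :
    ¬ ∃ v : ℕ, 2 ≤ v ∧ ∃ C : Finset (Submodule (ZMod 2) (Fin v → ZMod 2)),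
      IsPointSet C ∧ DivisibleSet 8 C ∧ C.card = 52 := by
  rintro ⟨v, -, C, hC, hdiv, hcard⟩
  exact hdiv.card_ne_fiftyTwo hC hcard
end

section
/- (a) If v ≥ 2 and C is a nonempty 4-divisible set of points of PG(v−1, 2) (i.e., of 1-dimensional subspaces of 𝔽₂^v), then |C| ∈ {7, 8} or |C| ≥ 14. (b) Conversely, for every integer n with n ∈ {7, 8} or n ≥ 14, there exist an integer v ≥ 2 and a 4-divisible set C of points of PG(v−1, 2) with |C| = n. -/
open scoped Classical

/-!
A set of `n` points of `PG(v - 1, 2)` is a set `X` of nonzero vectors of `𝔽₂ᵛ`, i.e. the columns of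
a generator matrix of a projective binary code. Hyperplanes are the kernels of `x ↦ a ⬝ᵥ x` for
`a ≠ 0`, so `4`-divisibility says that every codeword weight `w(a) = #{x ∈ X | a ⬝ᵥ x ≠ 0}` is
divisible by `4`. Expanding powers of the character sums `∑ x ∈ X, (-1) ^ (a ⬝ᵥ x) = n - 2 w(a)`
gives the first three power moments
`∑ w = 2ᵛ n / 2`, `∑ w² = 2ᵛ n (n + 1) / 4` and `∑ w³ ≤ 2ᵛ n² (n + 3) / 8`.
As `w (w - 4)`, `(w - 4) (w - 8)` and `w (w - 4) (w - 8)` are nonnegative on multiples of `4`,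
summing them yields `n ≥ 7`, `n² - 23 n + 128 ≥ 0` and `(n - 8) (n - 13) ≥ 0`, leaving exactly
`n ∈ {7, 8}` or `n ≥ 14`.

Conversely, the juxtaposition of two divisible codes on complementary coordinates is divisible;
the Fano plane (`7`), the affine space `AG(3, 2)` (`8`) and four explicit sets of sizes `17`–`20`
generate every other admissible size by adding copies of the Fano plane.
-/

open Finset Matrix

namespace DivisibleCode

/-- The weight of the codeword `(a ⬝ᵥ x)ₓ` of the code whose generator matrix has columns `X`. -/
def codewordWeight {ι K : Type*} [Fintype ι] [Semiring K] [DecidableEq K]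
    (X : Finset (ι → K)) (a : ι → K) : ℕ :=
  #{x ∈ X | a ⬝ᵥ x ≠ 0}

/-- A projective code (no zero or repeated columns) all of whose weights are divisible by `Δ`. -/
def IsDivisibleCode {ι K : Type*} [Fintype ι] [Semiring K] [DecidableEq K]
    (Δ : ℕ) (X : Finset (ι → K)) : Prop :=
  0 ∉ X ∧ ∀ a, Δ ∣ codewordWeight X a

lemma _root_.AddChar.map_sum_eq_prod {A M κ : Type*} [AddCommMonoid A] [CommMonoid M]
    (ψ : AddChar A M) (s : Finset κ) (f : κ → A) : ψ (∑ i ∈ s, f i) = ∏ i ∈ s, ψ (f i) := by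
  classical
  induction s using Finset.induction_on with
  | empty => simp
  | insert i s hi ih => rw [sum_insert hi, prod_insert hi, AddChar.map_add_eq_mul, ih]

def signChar : AddChar (ZMod 2) ℤ where
  toFun c := if c = 0 then 1 else -1
  map_zero_eq_one' := rfl
  map_add_eq_mul' := by decide

section PowerMoments

variable {ι : Type*} [Fintype ι]

lemma sum_signChar_dotProduct (y : ι → ZMod 2) :
    ∑ a, signChar (a ⬝ᵥ y) = if y = 0 then 2 ^ Fintype.card ι else 0 := by
  let ψ := signChar.compAddMonoidHom (AddMonoidHom.mk' (· ⬝ᵥ y) fun a b => add_dotProduct a b y)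
  have hψ : ψ = 0 ↔ y = 0 := by
    have h : ∀ c : ZMod 2, signChar c = 1 ↔ c = 0 := by decide
    simp_rw [AddChar.eq_zero_iff, ψ, AddChar.compAddMonoidHom_apply, AddMonoidHom.mk'_apply, h,
      dotProduct_comm _ y, dotProduct_eq_zero_iff]
  have h := ψ.sum_eq_ite
  simp only [hψ] at h
  simpa [ψ, Fintype.card_fun] using h

def signSum (X : Finset (ι → ZMod 2)) (a : ι → ZMod 2) : ℤ := ∑ x ∈ X, signChar (a ⬝ᵥ x)

theorem sum_signSum_pow (X : Finset (ι → ZMod 2)) (k : ℕ) :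
    ∑ a, signSum X a ^ k =
      2 ^ Fintype.card ι * #{p ∈ Fintype.piFinset fun _ : Fin k => X | ∑ i, p i = 0} := by
  simp_rw [signSum, sum_pow', ← AddChar.map_sum_eq_prod, ← dotProduct_sum]
  rw [sum_comm]
  simp_rw [sum_signChar_dotProduct, sum_ite, sum_const_zero, add_zero, sum_const, nsmul_eq_mul,
    mul_comm]

variable {X : Finset (ι → ZMod 2)}

lemma sum_signSum_eq_zero (hX : 0 ∉ X) : ∑ a, signSum X a = 0 := by
  have h := sum_signSum_pow X 1
  simp only [pow_one, Fin.sum_univ_one] at h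
  rw [h, card_eq_zero.mpr (filter_eq_empty_iff.mpr fun p hp (h0 : p 0 = 0) =>
    hX (h0 ▸ Fintype.mem_piFinset.mp hp 0)), Nat.cast_zero, mul_zero]

lemma sum_signSum_sq (X : Finset (ι → ZMod 2)) :
    ∑ a, signSum X a ^ 2 = 2 ^ Fintype.card ι * #X := by
  rw [sum_signSum_pow]
  congr 2
  refine card_nbij' (· 0) (fun x => ![x, x]) ?_ ?_ ?_ ?_
  · intro p hp
    simp only [coe_filter, Set.mem_ofPred_eq, Fintype.mem_piFinset] at hp
    exact hp.1 0
  · intro x hx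
    simpa [Fintype.mem_piFinset, Fin.forall_fin_two, ZModModule.add_self] using hx
  · intro p hp
    simp only [coe_filter, Set.mem_ofPred_eq, Fin.sum_univ_two] at hp
    have h := hp.2
    rw [add_eq_zero_iff_neg_eq, ZModModule.neg_eq_self] at h
    ext i; fin_cases i <;> simp [h]
  · intro x _; rfl

lemma signSum_eq_card_sub (X : Finset (ι → ZMod 2)) (a : ι → ZMod 2) :
    signSum X a = #X - 2 * codewordWeight X a := by
  have h : ∀ c : ZMod 2, signChar c = 1 - 2 * if c ≠ 0 then 1 else 0 := by decide
  simp only [signSum, h, sum_sub_distrib, sum_const, nsmul_eq_mul, mul_one, ← mul_sum, sum_boole,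
    codewordWeight]

theorem two_mul_sum_codewordWeight (hX : 0 ∉ X) :
    2 * ∑ a, codewordWeight X a = 2 ^ Fintype.card ι * #X := by
  have e : ∀ a, (2 * codewordWeight X a : ℤ) = #X - signSum X a :=
    fun a => by rw [signSum_eq_card_sub]; ring
  zify
  rw [mul_sum]
  simp only [e, sum_sub_distrib, sum_signSum_eq_zero hX, sum_const, card_univ, Fintype.card_fun,
    ZMod.card, nsmul_eq_mul]
  push_cast; ring

theorem four_mul_sum_codewordWeight_sq (hX : 0 ∉ X) :
    4 * ∑ a, codewordWeight X a ^ 2 = 2 ^ Fintype.card ι * #X * (#X + 1) := by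
  have e : ∀ a, (4 * codewordWeight X a ^ 2 : ℤ) =
      #X ^ 2 - 2 * #X * signSum X a + signSum X a ^ 2 :=
    fun a => by rw [signSum_eq_card_sub]; ring
  zify
  rw [mul_sum]
  simp only [e, sum_add_distrib, sum_sub_distrib, ← mul_sum, sum_signSum_eq_zero hX,
    sum_signSum_sq, sum_const, card_univ, Fintype.card_fun, ZMod.card, nsmul_eq_mul]
  push_cast; ring

theorem eight_mul_sum_codewordWeight_cube_le (hX : 0 ∉ X) :
    8 * ∑ a, codewordWeight X a ^ 3 ≤ 2 ^ Fintype.card ι * #X ^ 2 * (#X + 3) := by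
  have e : ∀ a, (8 * codewordWeight X a ^ 3 : ℤ) =
      #X ^ 3 - 3 * #X ^ 2 * signSum X a + 3 * #X * signSum X a ^ 2 - signSum X a ^ 3 :=
    fun a => by rw [signSum_eq_card_sub]; ring
  have h₃ : 0 ≤ ∑ a, signSum X a ^ 3 := by rw [sum_signSum_pow]; positivity
  zify
  rw [mul_sum]
  simp only [e, sum_add_distrib, sum_sub_distrib, ← mul_sum, sum_signSum_eq_zero hX,
    sum_signSum_sq, sum_const, card_univ, Fintype.card_fun, ZMod.card, nsmul_eq_mul]
  push_cast
  linarith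

end PowerMoments

lemma sub_mul_sub_nonneg_of_dvd {m t : ℤ} (j : ℤ) (h : m ∣ t) :
    0 ≤ (t - m * j) * (t - m * (j + 1)) := by
  obtain ⟨q, rfl⟩ := h
  have hq : 0 ≤ (q - j) * (q - j - 1) := by
    rcases le_or_gt (q - j) 0 with h | h <;> nlinarith
  calc (0 : ℤ) ≤ m ^ 2 * ((q - j) * (q - j - 1)) := mul_nonneg (sq_nonneg m) hq
    _ = (m * q - m * j) * (m * q - m * (j + 1)) := by ring

theorem eq_seven_or_eight_or_fourteen_le_of_moments {ι : Type*} [Fintype ι] [Nonempty ι]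
    {w : ι → ℕ} {n : ℕ} (hn : 0 < n) (hw : ∀ i, 4 ∣ w i)
    (h₁ : 2 * ∑ i, w i = Fintype.card ι * n)
    (h₂ : 4 * ∑ i, w i ^ 2 = Fintype.card ι * n * (n + 1))
    (h₃ : 8 * ∑ i, w i ^ 3 ≤ Fintype.card ι * n ^ 2 * (n + 3)) :
    n = 7 ∨ n = 8 ∨ 14 ≤ n := by
  have hw' : ∀ i, (4 : ℤ) ∣ w i := fun i => Int.natCast_dvd_natCast.mpr (hw i)
  have p₁ : 0 ≤ ∑ i, ((w i : ℤ) ^ 2 - 4 * w i) := sum_nonneg fun i _ => by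
    nlinarith [sub_mul_sub_nonneg_of_dvd 0 (hw' i)]
  have p₂ : 0 ≤ ∑ i, ((w i : ℤ) ^ 2 - 12 * w i + 32) := sum_nonneg fun i _ => by
    nlinarith [sub_mul_sub_nonneg_of_dvd 1 (hw' i)]
  have p₃ : 0 ≤ ∑ i, ((w i : ℤ) ^ 3 - 12 * w i ^ 2 + 32 * w i) := sum_nonneg fun i _ => by
    nlinarith [mul_nonneg (Nat.cast_nonneg (w i)) (sub_mul_sub_nonneg_of_dvd 1 (hw' i))]
  simp only [sum_add_distrib, sum_sub_distrib, ← mul_sum, sum_const, card_univ, nsmul_eq_mul]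
    at p₁ p₂ p₃
  have hE : (0 : ℤ) < Fintype.card ι := by exact_mod_cast Fintype.card_pos
  zify at hn h₁ h₂ h₃
  have q₁ : 0 ≤ (n : ℤ) - 7 :=
    (mul_nonneg_iff_of_pos_left hn).mp <| (mul_nonneg_iff_of_pos_left hE).mp (by linarith)
  have q₂ : 0 ≤ (n : ℤ) ^ 2 - 23 * n + 128 := (mul_nonneg_iff_of_pos_left hE).mp (by linarith)
  have q₃ : 0 ≤ (n : ℤ) ^ 2 - 21 * n + 104 :=
    (mul_nonneg_iff_of_pos_left hn).mp <| (mul_nonneg_iff_of_pos_left hE).mp (by linarith)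
  by_contra! h
  have : n ≤ 13 := by omega
  interval_cases n <;> omega

theorem IsDivisibleCode.card_eq_seven_or_eight_or_fourteen_le {ι : Type*} [Fintype ι]
    {X : Finset (ι → ZMod 2)} (hX : IsDivisibleCode 4 X) (hne : X.Nonempty) :
    #X = 7 ∨ #X = 8 ∨ 14 ≤ #X :=
  eq_seven_or_eight_or_fourteen_le_of_moments hne.card_pos hX.2
    (by simpa using two_mul_sum_codewordWeight hX.1)
    (by simpa using four_mul_sum_codewordWeight_sq hX.1)
    (by simpa using eight_mul_sum_codewordWeight_cube_le hX.1)

section Hyperplanes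

variable {K ι : Type} [Field K] [Fintype ι] [DecidableEq ι]

lemma isHyperplane_ker_dotProductEquiv {a : ι → K} (ha : a ≠ 0) :
    IsHyperplane (dotProductEquiv K ι a).ker := by
  rw [IsHyperplane, ← (dotProductEquiv K ι a).finrank_ker_add_one_of_ne_zero (by simpa using ha),
    Nat.add_sub_cancel]

lemma exists_eq_ker_dotProductEquiv [Nonempty ι] {H : Submodule K (ι → K)}
    (hH : IsHyperplane H) : ∃ a ≠ 0, H = (dotProductEquiv K ι a).ker := by
  have hlt : H < ⊤ := by
    refine lt_top_iff_ne_top.mpr fun h => ?_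
    rw [IsHyperplane, h, finrank_top, Module.finrank_fintype_fun_eq_card] at hH
    have := Fintype.card_pos (α := ι)
    omega
  obtain ⟨f, hf, hle⟩ := H.exists_le_ker_of_lt_top hlt
  refine ⟨(dotProductEquiv K ι).symm f, by simpa using hf, ?_⟩
  rw [LinearEquiv.apply_symm_apply]
  refine Submodule.eq_of_le_of_finrank_eq hle ?_
  have := Module.Dual.finrank_ker_add_one_of_ne_zero hf
  rw [hH]
  omega

end Hyperplanes

section Points

variable {M : Type} [AddCommGroup M]

lemma isPointSet_image_span {K : Type} [Field K] [Module K M] {X : Finset M} (hX : 0 ∉ X) :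
    IsPointSet (X.image (K ∙ ·)) := by
  simp only [IsPointSet, mem_image, forall_exists_index, and_imp]
  rintro _ x hx rfl
  exact finrank_span_singleton (ne_of_mem_of_not_mem hx hX)

lemma exists_image_span_eq {K : Type} [Field K] [Module K M] [Fintype M]
    {C : Finset (Submodule K M)} (hC : IsPointSet C) :
    ∃ X : Finset M, 0 ∉ X ∧ X.image (K ∙ ·) = C := by
  refine ⟨({x | x ≠ 0 ∧ (K ∙ x) ∈ C} : Finset M), by simp, ?_⟩
  ext P
  simp only [mem_image, mem_filter, mem_univ, true_and]
  constructor
  · rintro ⟨x, ⟨-, hx⟩, rfl⟩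
    exact hx
  · intro hP
    obtain ⟨x, hxP, hx⟩ := (Submodule.ne_bot_iff P).mp fun h => by
      subst h; simpa using hC _ hP
    have hPx := eq_span_singleton_of_mem_of_finrank_eq_one (hC P hP) hxP hx
    exact ⟨x, ⟨hx, hPx ▸ hP⟩, hPx.symm⟩

variable [Module (ZMod 2) M]

lemma span_singleton_injective : Function.Injective fun x : M => (ZMod 2 ∙ x) := fun x y h => by
  obtain ⟨z, rfl⟩ := Submodule.span_singleton_eq_span_singleton.mp h
  rw [Subsingleton.elim z 1, one_smul]

lemma card_image_span (X : Finset M) : #(X.image (ZMod 2 ∙ ·)) = #X :=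
  card_image_of_injective X span_singleton_injective

lemma interCard_image_span (X : Finset M) (S : Submodule (ZMod 2) M) :
    interCard (X.image (ZMod 2 ∙ ·)) S = #{x ∈ X | x ∈ S} := by
  rw [interCard, filter_image, card_image_of_injective _ span_singleton_injective]
  simp only [Submodule.span_singleton_le_iff_mem]

end Points

theorem divisibleSet_image_span_iff {ι : Type} [Fintype ι] [DecidableEq ι] [Nonempty ι]
    {X : Finset (ι → ZMod 2)} (Δ : ℕ) :
    DivisibleSet Δ (X.image (ZMod 2 ∙ ·)) ↔ ∀ a, Δ ∣ codewordWeight X a := by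
  have key : ∀ a, interCard (X.image (ZMod 2 ∙ ·)) (dotProductEquiv (ZMod 2) ι a).ker
      ≡ #(X.image (ZMod 2 ∙ ·)) [MOD Δ] ↔ Δ ∣ codewordWeight X a := by
    intro a
    rw [interCard_image_span, card_image_span, ← card_filter_add_card_filter_not (s := X)
      (· ∈ (dotProductEquiv (ZMod 2) ι a).ker), Nat.modEq_iff_dvd' (Nat.le_add_right _ _),
      Nat.add_sub_cancel_left]
    simp only [LinearMap.mem_ker, dotProductEquiv_apply_apply, codewordWeight]
  constructor
  · intro h a
    rcases eq_or_ne a 0 with rfl | ha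
    · simp [codewordWeight]
    · exact (key a).mp (h _ (isHyperplane_ker_dotProductEquiv ha))
  · intro h H hH
    obtain ⟨a, -, rfl⟩ := exists_eq_ker_dotProductEquiv hH
    exact (key a).mpr (h a)

section DirectSum

lemma _root_.Fin.append_eq_append_iff {α : Type*} {m n : ℕ} {x x' : Fin m → α}
    {y y' : Fin n → α} : Fin.append x y = Fin.append x' y' ↔ x = x' ∧ y = y' :=
  (Fin.appendEquiv m n).injective.eq_iff.trans Prod.mk_inj

variable {K : Type*} [Semiring K] {m n : ℕ}

lemma dotProduct_append (a : Fin (m + n) → K) (x : Fin m → K) (y : Fin n → K) :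
    a ⬝ᵥ Fin.append x y = (a ∘ Fin.castAdd n) ⬝ᵥ x + (a ∘ Fin.natAdd m) ⬝ᵥ y := by
  simp [dotProduct, Fin.sum_univ_add]

variable [DecidableEq K] {X₁ : Finset (Fin m → K)} {X₂ : Finset (Fin n → K)}

/-- The columns of the block-diagonal generator matrix `diag(X₁, X₂)`. -/
def directSum (X₁ : Finset (Fin m → K)) (X₂ : Finset (Fin n → K)) : Finset (Fin (m + n) → K) :=
  X₁.image (Fin.append · 0) ∪ X₂.image (Fin.append 0)

lemma disjoint_image_append (hX₁ : 0 ∉ X₁) :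
    Disjoint (X₁.image (Fin.append · (0 : Fin n → K))) (X₂.image (Fin.append 0)) := by
  simp only [disjoint_left, mem_image, not_exists, not_and, forall_exists_index, and_imp]
  rintro _ x hx rfl y - h
  exact hX₁ ((Fin.append_eq_append_iff.mp h.symm).1 ▸ hx)

lemma card_directSum (hX₁ : 0 ∉ X₁) : #(directSum X₁ X₂) = #X₁ + #X₂ := by
  rw [directSum, card_union_of_disjoint (disjoint_image_append hX₁),
    card_image_of_injective _ fun _ _ h => (Fin.append_eq_append_iff.mp h).1,
    card_image_of_injective _ fun _ _ h => (Fin.append_eq_append_iff.mp h).2]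

lemma codewordWeight_directSum (hX₁ : 0 ∉ X₁) (a : Fin (m + n) → K) :
    codewordWeight (directSum X₁ X₂) a =
      codewordWeight X₁ (a ∘ Fin.castAdd n) + codewordWeight X₂ (a ∘ Fin.natAdd m) := by
  rw [codewordWeight, directSum, filter_union,
    card_union_of_disjoint (disjoint_filter_filter (disjoint_image_append hX₁)), filter_image,
    filter_image, card_image_of_injective _ fun _ _ h => (Fin.append_eq_append_iff.mp h).1,
    card_image_of_injective _ fun _ _ h => (Fin.append_eq_append_iff.mp h).2]
  simp [dotProduct_append, codewordWeight]

theorem IsDivisibleCode.directSum {Δ : ℕ} (h₁ : IsDivisibleCode Δ X₁)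
    (h₂ : IsDivisibleCode Δ X₂) : IsDivisibleCode Δ (directSum X₁ X₂) := by
  refine ⟨?_, fun a => ?_⟩
  · simp only [DivisibleCode.directSum, mem_union, mem_image, not_or, not_exists, not_and]
    have h0 : (0 : Fin (m + n) → K) = Fin.append 0 0 := (Fin.append_castAdd_natAdd (f := 0)).symm
    refine ⟨fun x hx h => ?_, fun y hy h => ?_⟩
    · exact h₁.1 ((Fin.append_eq_append_iff.mp (h.trans h0)).1 ▸ hx)
    · exact h₂.1 ((Fin.append_eq_append_iff.mp (h.trans h0)).2 ▸ hy)
  · rw [codewordWeight_directSum h₁.1]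
    exact dvd_add (h₁.2 _) (h₂.2 _)

end DirectSum

def IsDivisibleCodeLength (Δ n : ℕ) : Prop :=
  ∃ v, ∃ X : Finset (Fin v → ZMod 2), IsDivisibleCode Δ X ∧ #X = n

lemma IsDivisibleCodeLength.add {Δ m n : ℕ} (hm : IsDivisibleCodeLength Δ m)
    (hn : IsDivisibleCodeLength Δ n) : IsDivisibleCodeLength Δ (m + n) := by
  obtain ⟨v, X, hX, rfl⟩ := hm
  obtain ⟨w, Y, hY, rfl⟩ := hn
  exact ⟨v + w, directSum X Y, hX.directSum hY, card_directSum hX.1⟩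

def fanoPlane : Finset (Fin 3 → ZMod 2) := {x | x ≠ 0}

def affineSpace : Finset (Fin 4 → ZMod 2) := {x | x 3 = 1}

def code17 : Finset (Fin 6 → ZMod 2) :=
  {![1,0,0,0,0,0], ![0,1,0,0,0,0], ![1,1,0,0,0,0], ![0,0,1,0,0,0], ![0,1,1,0,0,0],
   ![0,0,0,1,0,0], ![1,1,1,1,0,0], ![0,0,0,0,1,0], ![1,0,1,0,1,0], ![0,0,0,0,0,1],
   ![1,1,1,0,0,1], ![0,1,0,1,0,1], ![1,1,0,1,0,1], ![1,0,1,1,0,1], ![0,1,1,1,0,1],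
   ![1,0,0,1,1,1], ![0,0,1,1,1,1]}

def code18 : Finset (Fin 7 → ZMod 2) :=
  {![1,0,0,0,0,0,0], ![0,1,0,0,0,0,0], ![0,0,1,0,0,0,0], ![0,0,0,1,0,0,0], ![0,0,0,0,1,0,0],
   ![1,1,1,0,1,0,0], ![0,0,0,0,0,1,0], ![1,0,1,1,0,1,0], ![1,1,0,0,1,1,0], ![0,1,1,0,1,1,0],
   ![0,0,0,0,0,0,1], ![1,0,1,0,0,0,1], ![1,1,1,0,1,0,1], ![0,1,0,1,1,0,1], ![0,1,0,0,0,1,1],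
   ![1,0,1,0,0,1,1], ![0,0,0,0,1,1,1], ![1,1,1,1,1,1,1]}

def code19 : Finset (Fin 7 → ZMod 2) :=
  {![1,0,0,0,0,0,0], ![0,1,0,0,0,0,0], ![0,0,1,0,0,0,0], ![0,0,0,1,0,0,0], ![1,0,0,1,0,0,0],
   ![0,0,0,0,1,0,0], ![1,1,1,0,1,0,0], ![0,0,0,0,0,1,0], ![1,0,1,0,0,1,0], ![0,1,0,1,0,1,0],
   ![0,1,1,1,0,1,0], ![0,0,0,0,0,0,1], ![0,1,1,0,0,0,1], ![0,1,0,1,1,0,1], ![1,0,1,1,1,0,1],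
   ![1,0,1,0,0,1,1], ![0,1,1,0,0,1,1], ![1,0,0,1,0,1,1], ![1,1,0,1,0,1,1]}

def code20 : Finset (Fin 7 → ZMod 2) :=
  {![1,0,0,0,0,0,0], ![0,1,0,0,0,0,0], ![0,0,1,0,0,0,0], ![0,0,0,1,0,0,0], ![0,0,0,0,1,0,0],
   ![0,0,0,1,1,0,0], ![0,0,1,1,1,0,0], ![0,1,1,1,1,0,0], ![0,0,0,0,0,1,0], ![1,0,0,0,0,1,0],
   ![0,1,0,0,1,1,0], ![0,1,1,0,1,1,0], ![0,0,0,0,0,0,1], ![1,1,1,0,0,0,1], ![0,0,0,1,0,0,1],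
   ![0,1,0,1,0,0,1], ![1,1,1,0,0,1,1], ![0,0,1,1,0,1,1], ![0,1,0,0,1,1,1], ![0,0,1,1,1,1,1]}

lemma isDivisibleCodeLength_seven : IsDivisibleCodeLength 4 7 :=
  ⟨3, fanoPlane, by unfold IsDivisibleCode; decide, by decide⟩

lemma isDivisibleCodeLength_eight : IsDivisibleCodeLength 4 8 :=
  ⟨4, affineSpace, by unfold IsDivisibleCode; decide, by decide⟩

set_option maxRecDepth 10000 in
lemma isDivisibleCodeLength_seventeen : IsDivisibleCodeLength 4 17 :=
  ⟨6, code17, by unfold IsDivisibleCode; decide, rfl⟩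

set_option maxRecDepth 10000 in
lemma isDivisibleCodeLength_eighteen : IsDivisibleCodeLength 4 18 :=
  ⟨7, code18, by unfold IsDivisibleCode; decide, rfl⟩

set_option maxRecDepth 10000 in
lemma isDivisibleCodeLength_nineteen : IsDivisibleCodeLength 4 19 :=
  ⟨7, code19, by unfold IsDivisibleCode; decide, rfl⟩

set_option maxRecDepth 10000 in
lemma isDivisibleCodeLength_twenty : IsDivisibleCodeLength 4 20 :=
  ⟨7, code20, by unfold IsDivisibleCode; decide, rfl⟩

theorem isDivisibleCodeLength_four {n : ℕ} (hn : n = 7 ∨ n = 8 ∨ 14 ≤ n) :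
    IsDivisibleCodeLength 4 n := by
  induction n using Nat.strong_induction_on with
  | _ n ih =>
    have h7 := isDivisibleCodeLength_seven
    have h8 := isDivisibleCodeLength_eight
    obtain rfl | rfl | rfl | rfl | rfl | rfl | rfl | rfl | rfl | hn : n = 7 ∨ n = 8 ∨ n = 14 ∨
        n = 15 ∨ n = 16 ∨ n = 17 ∨ n = 18 ∨ n = 19 ∨ n = 20 ∨ 21 ≤ n := by omega
    · exact h7
    · exact h8
    · exact h7.add h7
    · exact h7.add h8
    · exact h8.add h8
    · exact isDivisibleCodeLength_seventeen
    · exact isDivisibleCodeLength_eighteen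
    · exact isDivisibleCodeLength_nineteen
    · exact isDivisibleCodeLength_twenty
    · simpa [Nat.sub_add_cancel (by omega : 7 ≤ n)] using (ih (n - 7) (by omega) (by omega)).add h7

end DivisibleCode

open DivisibleCode

/-- Lemma 6.2: (a) a nonempty `4`-divisible set of points of `PG(v-1,2)` has cardinality
`7`, `8`, or at least `14`; (b) all these cardinalities are realized. -/
theorem four_divisible_binary_classification :
    (∀ v : ℕ, 2 ≤ v → ∀ C : Finset (Submodule (ZMod 2) (Fin v → ZMod 2)),
      IsPointSet C → C.Nonempty → DivisibleSet 4 C →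
        C.card = 7 ∨ C.card = 8 ∨ 14 ≤ C.card) ∧
    (∀ n : ℕ, (n = 7 ∨ n = 8 ∨ 14 ≤ n) →
      ∃ v : ℕ, 2 ≤ v ∧ ∃ C : Finset (Submodule (ZMod 2) (Fin v → ZMod 2)),
        IsPointSet C ∧ DivisibleSet 4 C ∧ C.card = n) := by
  refine ⟨fun v hv C hC hne hdiv => ?_, fun n hn => ?_⟩
  · obtain ⟨X, hX, rfl⟩ := exists_image_span_eq hC
    have : NeZero v := ⟨by omega⟩
    rw [card_image_span]
    exact IsDivisibleCode.card_eq_seven_or_eight_or_fourteen_le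
      ⟨hX, (divisibleSet_image_span_iff 4).mp hdiv⟩ (image_nonempty.mp hne)
  · obtain ⟨v, X, hX, rfl⟩ := isDivisibleCodeLength_four hn
    have hcard : #X ≤ 2 ^ v := (card_le_univ X).trans_eq (by simp)
    have hv : 2 ≤ v := by
      by_contra!
      interval_cases v <;> omega
    have : NeZero v := ⟨by omega⟩
    exact ⟨v, hv, X.image (ZMod 2 ∙ ·), isPointSet_image_span hX.1,
      (divisibleSet_image_span_iff 4).mpr hX.2, card_image_span X⟩
end
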